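/- arXiv:1406.0781 — 10 statements merged into one kernel-verified Lean document; each statement's English description precedes it below -/
import Mathlib

section
/- (Rényi's theorem, Theorem 1 / ψ_{K^d}(m) ≥ m.) Let d ≥ 2 and n ∈ ℕ. If F and F' are finite subsets of ℝ^d with |F| ≤ n and |F'| ≤ n that have equal X-rays in each of n+1 pairwise linearly independent directions s_1, …, s_{n+1} ∈ ℝ^d \ {0}, then F = F'. In particular, any n-point set in ℝ^d (or ℤ^d) is uniquely determined by its X-rays from n+1 pairwise linearly independent directions. -/
/-- The line through `p` in direction `s` in `ℝ^d`. -/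
def lineThrough {d : ℕ} (p s : Fin d → ℝ) : Set (Fin d → ℝ) :=
  {x | ∃ t : ℝ, x = p + t • s}

/-- Two sets in `ℝ^d` have equal X-rays in direction `s` if every line parallel
to `s` contains equally many points of each set. -/
def EqualXraysR {d : ℕ} (F F' : Set (Fin d → ℝ)) (s : Fin d → ℝ) : Prop :=
  ∀ p : Fin d → ℝ, (F ∩ lineThrough p s).ncard = (F' ∩ lineThrough p s).ncard

lemma renyi_aux (d n : ℕ) (F F' : Set (Fin d → ℝ))
    (hF : F.Finite) (hF' : F'.Finite) (hF'n : F'.ncard ≤ n)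
    (s : Fin (n + 1) → (Fin d → ℝ))
    (hind : ∀ i j, i ≠ j → ∀ c : ℝ, s i ≠ c • s j)
    (hxray : ∀ i, EqualXraysR F F' (s i))
    (p : Fin d → ℝ) (hp : p ∈ F) (hp' : p ∉ F') : False := by
  have hne : ∀ i, (F' ∩ lineThrough p (s i)).Nonempty := by
    intro i
    apply Set.nonempty_of_ncard_ne_zero
    rw [← hxray i p]
    have h1 : (F ∩ lineThrough p (s i)).Nonempty := ⟨p, hp, 0, by simp⟩
    have h2 : (F ∩ lineThrough p (s i)).Finite := hF.subset Set.inter_subset_left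
    exact ((Set.ncard_pos h2).mpr h1).ne'
  choose q hqF hqL using hne
  have hinj : Function.Injective q := by
    intro i j hij
    by_contra hne2
    obtain ⟨t, ht⟩ := hqL i
    obtain ⟨u, hu⟩ := hqL j
    have htu : t • s i = u • s j := by
      have := ht.symm.trans (hij ▸ hu)
      have h3 := congrArg (fun x => x - p) this
      simpa [add_sub_cancel_left] using h3
    have ht0 : t ≠ 0 := by
      intro h0
      apply hp'
      have : q i = p := by rw [ht, h0]; simp
      exact this ▸ hqF i
    have : s i = (u / t) • s j := by
      have := congrArg (fun x => t⁻¹ • x) htu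
      simp only [smul_smul, inv_mul_cancel₀ ht0, one_smul] at this
      rw [this, div_eq_inv_mul, mul_smul]
    exact hind i j hne2 (u / t) this
  have hcard : n + 1 ≤ F'.ncard := by
    have : (Finset.univ : Finset (Fin (n+1))).card ≤ hF'.toFinset.card := by
      apply Finset.card_le_card_of_injOn q
      · intro i _
        simpa using hqF i
      · exact hinj.injOn
    rw [Set.ncard_eq_toFinset_card F' hF']; simpa using this
  omega

/-- **Rényi's theorem.** Any set of at most `n` points in `ℝ^d` is determined by its
X-rays in `n + 1` pairwise linearly independent directions. -/
theorem renyi (d n : ℕ) (hd : 2 ≤ d) (F F' : Set (Fin d → ℝ))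
    (hF : F.Finite) (hF' : F'.Finite) (hFn : F.ncard ≤ n) (hF'n : F'.ncard ≤ n)
    (s : Fin (n + 1) → (Fin d → ℝ)) (hs0 : ∀ i, s i ≠ 0)
    (hind : ∀ i j, i ≠ j → ∀ c : ℝ, s i ≠ c • s j)
    (hxray : ∀ i, EqualXraysR F F' (s i)) : F = F' := by
  by_contra h
  rw [Set.ext_iff] at h
  push_neg at h
  obtain ⟨x, hx⟩ := h
  rcases hx with ⟨hx1, hx2⟩ | ⟨hx2, hx1⟩
  · exact renyi_aux d n F F' hF hF' hF'n s hind hxray x hx1 hx2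
  · exact renyi_aux d n F' F hF' hF hFn s hind
      (fun i q => (hxray i q).symm) x hx1 hx2
end

section
/- (Intermediate claim in the proof of Theorem 2.) Let F and F' be disjoint nonempty finite subsets of ℤ² with |F| = |F'| = n that have equal X-rays in each of m pairwise linearly independent nonzero directions s_1, …, s_m ∈ ℤ², where m ≥ n. Then n = m, and every point of F ∪ F' is an extreme point of the convex hull of F ∪ F' (so F ∪ F' is the vertex set of a non-degenerate convex 2m-gon). -/
/-- The real embedding of an integer vector. -/
def castVec {d : ℕ} (x : Fin d → ℤ) : Fin d → ℝ := fun i => (x i : ℝ)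

/-- Two sets in `ℤ^d` have equal X-rays in direction `s` if every line parallel
to `s` contains equally many points of each set. -/
def EqualXraysZ {d : ℕ} (F F' : Set (Fin d → ℤ)) (s : Fin d → ℤ) : Prop :=
  ∀ p : Fin d → ℝ,
    {x ∈ F | castVec x ∈ lineThrough p (castVec s)}.ncard =
      {x ∈ F' | castVec x ∈ lineThrough p (castVec s)}.ncard

/-- A family of integer vectors is pairwise linearly independent if no one of them
is a (real) scalar multiple of another. -/
def PairwiseLinIndepZ {d m : ℕ} (s : Fin m → (Fin d → ℤ)) : Prop :=
  ∀ i j, i ≠ j → ∀ c : ℝ, castVec (s i) ≠ c • castVec (s j)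

noncomputable section GonAux

/-- 2x2 determinant of a pair of plane vectors. -/
def det2 (z w : Fin 2 → ℝ) : ℝ := z 0 * w 1 - z 1 * w 0

lemma vec2_eq_zero {w : Fin 2 → ℝ} (h0 : w 0 = 0) (h1 : w 1 = 0) : w = 0 := by
  funext i; fin_cases i <;> simpa

lemma det2_sub_left (a b w : Fin 2 → ℝ) : det2 (a - b) w = det2 a w - det2 b w := by
  simp only [det2, Pi.sub_apply]; ring

lemma det2_combo (x y : ℝ) (x1 x2 w : Fin 2 → ℝ) :
    det2 (x • x1 + y • x2) w = x * det2 x1 w + y * det2 x2 w := by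
  simp only [det2, Pi.add_apply, Pi.smul_apply, smul_eq_mul]; ring

lemma det2_smul_smul (a b : ℝ) (x y : Fin 2 → ℝ) :
    det2 (a • x) (b • y) = a * b * det2 x y := by
  simp only [det2, Pi.smul_apply, smul_eq_mul]; ring

lemma det2_smul_right (z : Fin 2 → ℝ) (c : ℝ) (w : Fin 2 → ℝ) :
    det2 z (c • w) = c * det2 z w := by
  simp only [det2, Pi.smul_apply, smul_eq_mul]; ring

lemma eq_zero_of_det2 {z w1 w2 : Fin 2 → ℝ} (h1 : det2 z w1 = 0) (h2 : det2 z w2 = 0)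
    (h : det2 w1 w2 ≠ 0) : z = 0 := by
  simp only [det2] at h1 h2 h
  apply vec2_eq_zero
  · have : z 0 * (w1 0 * w2 1 - w1 1 * w2 0) = 0 := by linear_combination w1 0 * h2 - w2 0 * h1
    rcases mul_eq_zero.1 this with h' | h'
    · exact h'
    · exact absurd h' h
  · have : z 1 * (w1 0 * w2 1 - w1 1 * w2 0) = 0 := by linear_combination w1 1 * h2 - w2 1 * h1
    rcases mul_eq_zero.1 this with h' | h'
    · exact h'
    · exact absurd h' h

lemma exists_smul_of_det2 {z w : Fin 2 → ℝ} (hw : w ≠ 0) (h : det2 z w = 0) :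
    ∃ c : ℝ, z = c • w := by
  simp only [det2] at h
  rcases (by by_contra hc; push_neg at hc; exact hw (vec2_eq_zero hc.1 hc.2) :
      w 0 ≠ 0 ∨ w 1 ≠ 0) with h0 | h1
  · refine ⟨z 0 / w 0, ?_⟩
    funext i; fin_cases i <;> simp [Pi.smul_apply] <;> field_simp <;> linarith
  · refine ⟨z 1 / w 1, ?_⟩
    funext i; fin_cases i <;> simp [Pi.smul_apply] <;> field_simp <;> linarith

lemma castVec_injective {d : ℕ} : Function.Injective (castVec (d := d)) := by
  intro x y h
  funext i
  have := congrFun h i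
  simpa [castVec] using this

lemma castVec_ne_zero {d : ℕ} {x : Fin d → ℤ} (hx : x ≠ 0) : castVec x ≠ 0 := by
  intro h
  apply hx
  funext i
  have := congrFun h i
  simpa [castVec] using this

lemma three_dirs {d1 d2 d3 : Fin 2 → ℝ}
    (h12 : det2 d1 d2 ≠ 0) (h13 : det2 d1 d3 ≠ 0) (h23 : det2 d2 d3 ≠ 0)
    (H1 : det2 d2 d1 * det2 d3 d1 ≥ 0)
    (H2 : det2 d1 d2 * det2 d3 d2 ≥ 0)
    (H3 : det2 d1 d3 * det2 d2 d3 ≥ 0) : False := by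
  set a := det2 d1 d2 with ha
  set b := det2 d1 d3 with hb
  set c := det2 d2 d3 with hc
  have e1 : det2 d2 d1 = -a := by simp [det2, ha]; ring
  have e2 : det2 d3 d1 = -b := by simp [det2, hb]; ring
  have e3 : det2 d3 d2 = -c := by simp [det2, hc]; ring
  rw [e1, e2] at H1
  rw [e3] at H2
  have hab : a * b > 0 := lt_of_le_of_ne (by nlinarith) (by
    intro h; rcases mul_eq_zero.1 h.symm with h' | h' <;> [exact h12 h'; exact h13 h'])
  have hbc : b * c > 0 := lt_of_le_of_ne (by nlinarith) (by
    intro h; rcases mul_eq_zero.1 h.symm with h' | h' <;> [exact h13 h'; exact h23 h'])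
  have h2' : a * c ≤ 0 := by nlinarith
  have hpos : a * b * (b * c) > 0 := mul_pos hab hbc
  have hle : a * c * (b * b) ≤ 0 := mul_nonpos_of_nonpos_of_nonneg h2' (mul_self_nonneg b)
  have heq : a * b * (b * c) = a * c * (b * b) := by ring
  linarith

lemma endpoint_extreme {a b : Fin 2 → ℝ} (hab : a ≠ b) :
    a ∈ Set.extremePoints ℝ (convexHull ℝ ({a, b} : Set (Fin 2 → ℝ))) := by
  classical
  set d : Fin 2 → ℝ := b - a with hd
  have hdne : d ≠ 0 := sub_ne_zero.2 (Ne.symm hab)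
  set g : (Fin 2 → ℝ) → ℝ := fun x => x 0 * d 0 + x 1 * d 1 with hg
  set f : (Fin 2 → ℝ) → ℝ := fun x => x 0 * d 1 - x 1 * d 0 with hf
  have hglin : IsLinearMap ℝ g := by
    constructor
    · intro x y; simp only [hg, Pi.add_apply]; ring
    · intro r x; simp only [hg, Pi.smul_apply, smul_eq_mul]; ring
  have hflin : IsLinearMap ℝ f := by
    constructor
    · intro x y; simp only [hf, Pi.add_apply]; ring
    · intro r x; simp only [hf, Pi.smul_apply, smul_eq_mul]; ring
  have hdsq : 0 < d 0 * d 0 + d 1 * d 1 := by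
    rcases (by
      by_contra hcc; push_neg at hcc; exact hdne (vec2_eq_zero hcc.1 hcc.2) :
        d 0 ≠ 0 ∨ d 1 ≠ 0) with h' | h' <;>
      nlinarith [mul_self_pos.mpr h', mul_self_nonneg (d 0), mul_self_nonneg (d 1)]
  have hb0 : b 0 = a 0 + d 0 := by simp [hd, Pi.sub_apply]
  have hb1 : b 1 = a 1 + d 1 := by simp [hd, Pi.sub_apply]
  have hsub : convexHull ℝ ({a, b} : Set (Fin 2 → ℝ)) ⊆
      {x | g a ≤ g x} ∩ {x | f x = f a} := by
    apply convexHull_min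
    · intro x hx
      rcases hx with h | h
      · constructor
        · show g a ≤ g x; rw [h]
        · show f x = f a; rw [h]
      · simp only [Set.mem_singleton_iff] at h
        constructor
        · show g a ≤ g x
          rw [h]
          simp only [hg]
          rw [hb0, hb1]
          nlinarith [hdsq]
        · show f x = f a
          rw [h]
          simp only [hf, hb0, hb1]; ring
    · exact (convex_halfSpace_ge hglin (g a)).inter (convex_hyperplane hflin (f a))
  refine ⟨subset_convexHull ℝ _ (by simp), ?_⟩
  intro x1 hx1 x2 hx2 hseg
  obtain ⟨α, β, hα, hβ, hαβ, hsum⟩ := hseg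
  obtain ⟨hg1, hf1⟩ := hsub hx1
  obtain ⟨hg2, hf2⟩ := hsub hx2
  simp only [Set.mem_setOf_eq] at hg1 hf1 hg2 hf2
  have hga : g a = α * g x1 + β * g x2 := by
    rw [← hsum]; simp only [hg, Pi.add_apply, Pi.smul_apply, smul_eq_mul]; ring
  have hkey : α * g a + β * g a = g a := by rw [← add_mul, hαβ, one_mul]
  have hge1 : g x1 = g a := by
    by_contra hne
    have h1 : g a < g x1 := lt_of_le_of_ne hg1 (Ne.symm hne)
    have h2 := mul_lt_mul_of_pos_left h1 hα
    have h3 := mul_le_mul_of_nonneg_left hg2 hβ.le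
    linarith
  have hge2 : g x2 = g a := by
    by_contra hne
    have h1 : g a < g x2 := lt_of_le_of_ne hg2 (Ne.symm hne)
    have h2 := mul_lt_mul_of_pos_left h1 hβ
    have h3 := mul_le_mul_of_nonneg_left hg1 hα.le
    linarith
  have hfz : (x1 0 - x2 0) * d 1 - (x1 1 - x2 1) * d 0 = 0 := by
    have : f x1 - f x2 = 0 := by rw [hf1, hf2]; ring
    simp only [hf] at this; linarith [this]
  have hgz : (x1 0 - x2 0) * d 0 + (x1 1 - x2 1) * d 1 = 0 := by
    have : g x1 - g x2 = 0 := by rw [hge1, hge2]; ring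
    simp only [hg] at this; linarith [this]
  have hzz : x1 - x2 = 0 := by
    apply vec2_eq_zero
    · show x1 0 - x2 0 = 0
      have h0 : (x1 0 - x2 0) * (d 0 * d 0 + d 1 * d 1) = 0 := by
        linear_combination d 0 * hgz + d 1 * hfz
      rcases mul_eq_zero.1 h0 with h' | h'
      · exact h'
      · linarith
    · show x1 1 - x2 1 = 0
      have h1 : (x1 1 - x2 1) * (d 0 * d 0 + d 1 * d 1) = 0 := by
        linear_combination d 1 * hgz - d 0 * hfz
      rcases mul_eq_zero.1 h1 with h' | h'
      · exact h'
      · linarith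
  have hx12 : x1 = x2 := sub_eq_zero.1 hzz
  subst hx12
  have hax : x1 = a := by
    rw [← hsum, ← add_smul, hαβ, one_smul]
  exact hax

lemma isLinearMap_det2 (u : Fin 2 → ℝ) : IsLinearMap ℝ (fun y => det2 y u) := by
  constructor
  · intro x y; simp only [det2, Pi.add_apply]; ring
  · intro r x; simp only [det2, Pi.smul_apply, smul_eq_mul]; ring

/-- membership in a line in direction `s` kills the determinant against `s`. -/
lemma det2_of_mem_lineThrough' {p s x : Fin 2 → ℝ}
    (h : ∃ t : ℝ, x = p + t • s) : det2 (x - p) s = 0 := by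
  obtain ⟨t, rfl⟩ := h
  simp only [det2, Pi.add_apply, Pi.sub_apply, Pi.smul_apply, smul_eq_mul]
  ring

/-- If a point `v` extremizes the linear functional `det2 · u` over `G` and lies in the
open segment of `x1 x2 ∈ convexHull G`, then both endpoints have the same functional value. -/
lemma det2_eq_on_openSegment {G : Set (Fin 2 → ℝ)} {u v x1 x2 : Fin 2 → ℝ} {α β : ℝ}
    (hbound : (∀ w ∈ G, det2 w u ≤ det2 v u) ∨ (∀ w ∈ G, det2 v u ≤ det2 w u))
    (hx1 : x1 ∈ convexHull ℝ G) (hx2 : x2 ∈ convexHull ℝ G)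
    (hα : 0 < α) (hβ : 0 < β) (hαβ : α + β = 1) (hsum : α • x1 + β • x2 = v) :
    det2 x1 u = det2 v u ∧ det2 x2 u = det2 v u := by
  have hlin := isLinearMap_det2 u
  have hv : det2 v u = α * det2 x1 u + β * det2 x2 u := by
    rw [← hsum, det2_combo]
  have hkey : α * det2 v u + β * det2 v u = det2 v u := by rw [← add_mul, hαβ, one_mul]
  rcases hbound with hb | hb
  · have hsub : convexHull ℝ G ⊆ {y | det2 y u ≤ det2 v u} :=
      convexHull_min (fun w hw => hb w hw) (convex_halfSpace_le hlin _)
    have h1 : det2 x1 u ≤ det2 v u := hsub hx1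
    have h2 : det2 x2 u ≤ det2 v u := hsub hx2
    constructor
    · by_contra hne
      have hlt : det2 x1 u < det2 v u := lt_of_le_of_ne h1 hne
      have := mul_lt_mul_of_pos_left hlt hα
      have := mul_le_mul_of_nonneg_left h2 hβ.le
      linarith
    · by_contra hne
      have hlt : det2 x2 u < det2 v u := lt_of_le_of_ne h2 hne
      have := mul_lt_mul_of_pos_left hlt hβ
      have := mul_le_mul_of_nonneg_left h1 hα.le
      linarith
  · have hsub : convexHull ℝ G ⊆ {y | det2 v u ≤ det2 y u} :=
      convexHull_min (fun w hw => hb w hw) (convex_halfSpace_ge hlin _)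
    have h1 : det2 v u ≤ det2 x1 u := hsub hx1
    have h2 : det2 v u ≤ det2 x2 u := hsub hx2
    constructor
    · by_contra hne
      have hlt : det2 v u < det2 x1 u := lt_of_le_of_ne h1 (Ne.symm hne)
      have := mul_lt_mul_of_pos_left hlt hα
      have := mul_le_mul_of_nonneg_left h2 hβ.le
      linarith
    · by_contra hne
      have hlt : det2 v u < det2 x2 u := lt_of_le_of_ne h2 (Ne.symm hne)
      have := mul_lt_mul_of_pos_left hlt hβ
      have := mul_le_mul_of_nonneg_left h1 hα.le
      linarith

/-- support predicate: `v` maximizes (σ = true) or minimizes (σ = false)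
`det2 · u` over the finite set `Gf`. -/
def Supp2 (Gf : Finset (Fin 2 → ℝ)) (u : Fin 2 → ℝ) (v : Fin 2 → ℝ) (σ : Bool) : Prop :=
  if σ then ∀ w ∈ Gf, det2 w u ≤ det2 v u else ∀ w ∈ Gf, det2 v u ≤ det2 w u

lemma Supp2.bound {Gf : Finset (Fin 2 → ℝ)} {u v : Fin 2 → ℝ} {σ : Bool}
    (h : Supp2 Gf u v σ) :
    (∀ w ∈ Gf, det2 w u ≤ det2 v u) ∨ (∀ w ∈ Gf, det2 v u ≤ det2 w u) := by
  cases σ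
  · exact Or.inr (by simpa [Supp2] using h)
  · exact Or.inl (by simpa [Supp2] using h)


end GonAux

set_option maxHeartbeats 1000000 in
/-- **Intermediate claim in the proof of Theorem 2:** two disjoint nonempty `n`-point
sets in `ℤ²` with equal X-rays in `m ≥ n` pairwise linearly independent directions
satisfy `n = m`, and every point of their union is an extreme point of the convex
hull of the union. -/
theorem union_is_2m_gon (m n : ℕ) (hmn : n ≤ m) (F F' : Set (Fin 2 → ℤ))
    (hdisj : Disjoint F F') (hFne : F.Nonempty) (hF'ne : F'.Nonempty)
    (hF : F.Finite) (hF' : F'.Finite) (hFn : F.ncard = n) (hF'n : F'.ncard = n)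
    (s : Fin m → (Fin 2 → ℤ)) (hs0 : ∀ i, s i ≠ 0)
    (hind : PairwiseLinIndepZ s)
    (hxray : ∀ i, EqualXraysZ F F' (s i)) :
    n = m ∧ ∀ x ∈ F ∪ F',
      castVec x ∈ Set.extremePoints ℝ (convexHull ℝ (castVec '' (F ∪ F'))) := by
  classical
  have hnpos : 0 < n := hFn ▸ (Set.ncard_pos hF).2 hFne
  set u : Fin m → (Fin 2 → ℝ) := fun i => castVec (s i) with hu
  have hu0 : ∀ i, u i ≠ 0 := fun i => castVec_ne_zero (hs0 i)
  have huind : ∀ i j, i ≠ j → det2 (u i) (u j) ≠ 0 := by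
    intro i j hij hdet
    obtain ⟨c, hc⟩ := exists_smul_of_det2 (hu0 j) hdet
    exact hind i j hij c hc
  have hxFF' : ∀ x, x ∈ F → x ∉ F' := fun x hx => Set.disjoint_left.1 hdisj hx
  -- partner lemma
  have hpartner : ∀ x ∈ F ∪ F', ∀ i, ∃ y ∈ F ∪ F', y ≠ x ∧
      det2 (castVec y - castVec x) (u i) = 0 := by
    intro x hx i
    have hline : castVec x ∈ lineThrough (castVec x) (u i) := ⟨0, by simp⟩
    rcases hx with hxF | hxF'
    · have hcnt := hxray i (castVec x)
      have hAfin : {z ∈ F | castVec z ∈ lineThrough (castVec x) (castVec (s i))}.Finite :=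
        hF.subset (Set.sep_subset _ _)
      have hApos : 0 < {z ∈ F | castVec z ∈ lineThrough (castVec x) (castVec (s i))}.ncard :=
        (Set.ncard_pos hAfin).2 ⟨x, hxF, hline⟩
      rw [hcnt] at hApos
      obtain ⟨y, hyF', hyline⟩ := Set.nonempty_of_ncard_ne_zero hApos.ne'
      refine ⟨y, Or.inr hyF', fun h => hxFF' x hxF (h ▸ hyF'), ?_⟩
      exact det2_of_mem_lineThrough' hyline
    · have hcnt := (hxray i (castVec x)).symm
      have hAfin : {z ∈ F' | castVec z ∈ lineThrough (castVec x) (castVec (s i))}.Finite :=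
        hF'.subset (Set.sep_subset _ _)
      have hApos : 0 < {z ∈ F' | castVec z ∈ lineThrough (castVec x) (castVec (s i))}.ncard :=
        (Set.ncard_pos hAfin).2 ⟨x, hxF', hline⟩
      rw [hcnt] at hApos
      obtain ⟨y, hyF, hyline⟩ := Set.nonempty_of_ncard_ne_zero hApos.ne'
      refine ⟨y, Or.inl hyF, fun h => hxFF' y hyF (h.symm ▸ hxF'), ?_⟩
      exact det2_of_mem_lineThrough' hyline
  -- the finite point set in the plane
  have hGsfin : (castVec '' (F ∪ F')).Finite := (hF.union hF').image _
  set Gf : Finset (Fin 2 → ℝ) := hGsfin.toFinset with hGf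
  have hmemGf : ∀ v, v ∈ Gf ↔ v ∈ castVec '' (F ∪ F') := fun v => hGsfin.mem_toFinset
  have hGfcard : Gf.card = 2 * n := by
    rw [hGf, ← Set.ncard_eq_toFinset_card _ hGsfin]
    rw [Set.ncard_image_of_injective _ castVec_injective,
      Set.ncard_union_eq hdisj hF hF', hFn, hF'n]
    ring
  have hGfne : Gf.Nonempty := by
    obtain ⟨x, hx⟩ := hFne
    exact ⟨castVec x, (hmemGf _).2 ⟨x, Or.inl hx, rfl⟩⟩
  -- partner lemma, Finset version
  have hpartnerGf : ∀ v ∈ Gf, ∀ i, ∃ w ∈ Gf, w ≠ v ∧ det2 (w - v) (u i) = 0 := by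
    intro v hv i
    obtain ⟨x, hx, rfl⟩ := (hmemGf v).1 hv
    obtain ⟨y, hy, hyx, hdet⟩ := hpartner x hx i
    exact ⟨castVec y, (hmemGf _).2 ⟨y, hy, rfl⟩,
      fun h => hyx (castVec_injective h), hdet⟩
  -- non-collinearity in every direction, given a second direction
  have hnoncol : 2 ≤ m → ∀ i, ∃ g ∈ Gf, ∃ g' ∈ Gf, det2 g (u i) ≠ det2 g' (u i) := by
    intro hm i
    by_contra hcon
    push_neg at hcon
    obtain ⟨j, hji⟩ := Fintype.exists_ne_of_one_lt_card (by simpa using (show 1 < m by omega)) i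
    obtain ⟨x, hx⟩ := hFne
    have hvGf : castVec x ∈ Gf := (hmemGf _).2 ⟨x, Or.inl hx, rfl⟩
    obtain ⟨w, hw, hwne, hdetj⟩ := hpartnerGf (castVec x) hvGf j
    have hdeti : det2 (w - castVec x) (u i) = 0 := by
      rw [det2_sub_left]
      rw [hcon w hw (castVec x) hvGf]
      ring
    have := eq_zero_of_det2 hdeti hdetj (huind i j (Ne.symm hji))
    exact hwne (sub_eq_zero.1 this)
  -- distinct support pairs at one point have distinct directions
  have hdiff : 2 ≤ m → ∀ v ∈ Gf, ∀ p q : Fin m × Bool,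
      Supp2 Gf (u p.1) v p.2 → Supp2 Gf (u q.1) v q.2 → p ≠ q → p.1 ≠ q.1 := by
    intro hm v hv p q hp hq hpq h1
    obtain ⟨g, hg, g', hg', hgg'⟩ := hnoncol hm p.1
    have h2 : p.2 ≠ q.2 := fun h2 => hpq (Prod.ext h1 h2)
    rw [← h1] at hq
    have hconst : ∀ w ∈ Gf, det2 w (u p.1) = det2 v (u p.1) := by
      intro w hw
      cases hσp : p.2 <;> cases hσq : q.2
      · exact absurd (hσp.trans hσq.symm) h2
      · rw [hσp] at hp; rw [hσq] at hq
        have hpmin : ∀ w ∈ Gf, det2 v (u p.1) ≤ det2 w (u p.1) := by simpa [Supp2] using hp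
        have hqmax : ∀ w ∈ Gf, det2 w (u p.1) ≤ det2 v (u p.1) := by simpa [Supp2] using hq
        exact le_antisymm (hqmax w hw) (hpmin w hw)
      · rw [hσp] at hp; rw [hσq] at hq
        have hpmax : ∀ w ∈ Gf, det2 w (u p.1) ≤ det2 v (u p.1) := by simpa [Supp2] using hp
        have hqmin : ∀ w ∈ Gf, det2 v (u p.1) ≤ det2 w (u p.1) := by simpa [Supp2] using hq
        exact le_antisymm (hpmax w hw) (hqmin w hw)
      · exact absurd (hσp.trans hσq.symm) h2
    exact hgg' ((hconst g hg).trans (hconst g' hg').symm)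
  -- at most two support pairs per point (needs 2 ≤ m)
  have hclaim2 : 2 ≤ m → ∀ v ∈ Gf,
      ((Finset.univ : Finset (Fin m × Bool)).filter
        (fun p => Supp2 Gf (u p.1) v p.2)).card ≤ 2 := by
    intro hm v hv
    by_contra hcon
    push_neg at hcon
    obtain ⟨p1, p2, p3, hp1, hp2, hp3, h12, h13, h23⟩ := Finset.two_lt_card_iff.1 hcon
    rw [Finset.mem_filter] at hp1 hp2 hp3
    have hS1 := hp1.2; have hS2 := hp2.2; have hS3 := hp3.2
    have hi12 : p1.1 ≠ p2.1 := hdiff hm v hv p1 p2 hS1 hS2 h12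
    have hi13 : p1.1 ≠ p3.1 := hdiff hm v hv p1 p3 hS1 hS3 h13
    have hi23 : p2.1 ≠ p3.1 := hdiff hm v hv p2 p3 hS2 hS3 h23
    obtain ⟨w1, hw1, hw1ne, hd1⟩ := hpartnerGf v hv p1.1
    obtain ⟨w2, hw2, hw2ne, hd2⟩ := hpartnerGf v hv p2.1
    obtain ⟨w3, hw3, hw3ne, hd3⟩ := hpartnerGf v hv p3.1
    obtain ⟨c1, hc1⟩ := exists_smul_of_det2 (hu0 p1.1) hd1
    obtain ⟨c2, hc2⟩ := exists_smul_of_det2 (hu0 p2.1) hd2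
    obtain ⟨c3, hc3⟩ := exists_smul_of_det2 (hu0 p3.1) hd3
    have hc1ne : c1 ≠ 0 := fun h => (sub_ne_zero.2 hw1ne) (by rw [hc1, h, zero_smul])
    have hc2ne : c2 ≠ 0 := fun h => (sub_ne_zero.2 hw2ne) (by rw [hc2, h, zero_smul])
    have hc3ne : c3 ≠ 0 := fun h => (sub_ne_zero.2 hw3ne) (by rw [hc3, h, zero_smul])
    have hab : det2 (w1 - v) (w2 - v) ≠ 0 := by
      rw [hc1, hc2, det2_smul_smul]
      exact mul_ne_zero (mul_ne_zero hc1ne hc2ne) (huind _ _ hi12)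
    have hac : det2 (w1 - v) (w3 - v) ≠ 0 := by
      rw [hc1, hc3, det2_smul_smul]
      exact mul_ne_zero (mul_ne_zero hc1ne hc3ne) (huind _ _ hi13)
    have hbc : det2 (w2 - v) (w3 - v) ≠ 0 := by
      rw [hc2, hc3, det2_smul_smul]
      exact mul_ne_zero (mul_ne_zero hc2ne hc3ne) (huind _ _ hi23)
    have hH : ∀ (p : Fin m × Bool) (c : ℝ) (dk : Fin 2 → ℝ),
        Supp2 Gf (u p.1) v p.2 → dk = c • u p.1 →
        ∀ wa ∈ Gf, ∀ wb ∈ Gf,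
        det2 (wa - v) dk * det2 (wb - v) dk ≥ 0 := by
      intro p c dk hp hdk wa hwa wb hwb
      have hprod : det2 (wa - v) (u p.1) * det2 (wb - v) (u p.1) ≥ 0 := by
        rw [det2_sub_left, det2_sub_left]
        rcases hp.bound with hb | hb
        · have h1 := hb wa hwa
          have h2 := hb wb hwb
          nlinarith
        · have h1 := hb wa hwa
          have h2 := hb wb hwb
          nlinarith
      have e1 : det2 (wa - v) dk = c * det2 (wa - v) (u p.1) := by
        rw [hdk, det2_smul_right]
      have e2 : det2 (wb - v) dk = c * det2 (wb - v) (u p.1) := by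
        rw [hdk, det2_smul_right]
      rw [e1, e2]
      nlinarith [sq_nonneg c]
    exact three_dirs hab hac hbc
      (hH p1 c1 (w1 - v) hS1 hc1 w2 hw2 w3 hw3)
      (hH p2 c2 (w2 - v) hS2 hc2 w1 hw1 w3 hw3)
      (hH p3 c3 (w3 - v) hS3 hc3 w1 hw1 w2 hw2)
  -- each direction supports at least two points on each side
  have hclaim1 : ∀ p : Fin m × Bool,
      2 ≤ (Gf.filter (fun v => Supp2 Gf (u p.1) v p.2)).card := by
    intro p
    cases hσ : p.2
    · obtain ⟨v, hv, hvmin⟩ := Finset.exists_min_image Gf (fun w => det2 w (u p.1)) hGfne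
      obtain ⟨w, hw, hwne, hdet⟩ := hpartnerGf v hv p.1
      have heq : det2 w (u p.1) = det2 v (u p.1) := by
        have := det2_sub_left w v (u p.1)
        rw [hdet] at this
        linarith [this.symm]
      have hSv : Supp2 Gf (u p.1) v false := by
        simpa [Supp2] using hvmin
      have hSw : Supp2 Gf (u p.1) w false := by
        simp only [Supp2, if_neg Bool.false_ne_true]
        intro a ha
        rw [heq]
        exact hvmin a ha
      exact Finset.one_lt_card_iff.2
        ⟨v, w, Finset.mem_filter.2 ⟨hv, hSv⟩, Finset.mem_filter.2 ⟨hw, hSw⟩, (Ne.symm hwne)⟩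
    · obtain ⟨v, hv, hvmax⟩ := Finset.exists_max_image Gf (fun w => det2 w (u p.1)) hGfne
      obtain ⟨w, hw, hwne, hdet⟩ := hpartnerGf v hv p.1
      have heq : det2 w (u p.1) = det2 v (u p.1) := by
        have := det2_sub_left w v (u p.1)
        rw [hdet] at this
        linarith [this.symm]
      have hSv : Supp2 Gf (u p.1) v true := by
        simpa [Supp2] using hvmax
      have hSw : Supp2 Gf (u p.1) w true := by
        simp only [Supp2, if_pos rfl]
        intro a ha
        rw [heq]
        exact hvmax a ha
      exact Finset.one_lt_card_iff.2
        ⟨v, w, Finset.mem_filter.2 ⟨hv, hSv⟩, Finset.mem_filter.2 ⟨hw, hSw⟩, (Ne.symm hwne)⟩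
  -- case split on m
  rcases le_or_gt m 1 with hm1 | hm2
  · -- degenerate case : n = m = 1
    have hn1 : n = 1 := le_antisymm (hmn.trans hm1) hnpos
    have hmeq : m = 1 := le_antisymm hm1 (hn1 ▸ hmn)
    refine ⟨hn1.trans hmeq.symm, ?_⟩
    obtain ⟨x0, hx0⟩ := Set.ncard_eq_one.1 (hFn.trans hn1)
    obtain ⟨x1, hx1⟩ := Set.ncard_eq_one.1 (hF'n.trans hn1)
    have hne01 : x0 ≠ x1 := by
      intro h
      exact hxFF' x0 (by rw [hx0]; exact rfl) (by rw [hx1, h]; exact rfl)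
    have hcne : castVec x0 ≠ castVec x1 := fun h => hne01 (castVec_injective h)
    have himg : castVec '' (F ∪ F') = {castVec x0, castVec x1} := by
      rw [hx0, hx1, Set.singleton_union, Set.image_insert_eq, Set.image_singleton]
    rw [himg]
    intro y hy
    rw [hx0, hx1] at hy
    rcases hy with hy | hy
    · rw [Set.mem_singleton_iff] at hy
      rw [hy]
      exact endpoint_extreme hcne
    · rw [Set.mem_singleton_iff] at hy
      rw [hy, Set.pair_comm]
      exact endpoint_extreme (Ne.symm hcne)
  · -- main case : 2 ≤ m
    have hm : 2 ≤ m := hm2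
    -- double counting
    have hdc : ∑ p ∈ (Finset.univ : Finset (Fin m × Bool)),
          (Gf.filter (fun v => Supp2 Gf (u p.1) v p.2)).card
        = ∑ v ∈ Gf, ((Finset.univ : Finset (Fin m × Bool)).filter
          (fun p => Supp2 Gf (u p.1) v p.2)).card := by
      simp only [Finset.card_filter]
      rw [Finset.sum_comm]
    have hcardP : (Finset.univ : Finset (Fin m × Bool)).card = m * 2 := by simp
    have hlow : m * 2 * 2 ≤ ∑ p ∈ (Finset.univ : Finset (Fin m × Bool)),
        (Gf.filter (fun v => Supp2 Gf (u p.1) v p.2)).card := by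
      have := Finset.card_nsmul_le_sum (Finset.univ : Finset (Fin m × Bool))
        (fun p => (Gf.filter (fun v => Supp2 Gf (u p.1) v p.2)).card) 2
        (fun p _ => hclaim1 p)
      rwa [hcardP, smul_eq_mul] at this
    have hup : ∑ v ∈ Gf, ((Finset.univ : Finset (Fin m × Bool)).filter
        (fun p => Supp2 Gf (u p.1) v p.2)).card ≤ Gf.card * 2 := by
      have := Finset.sum_le_card_nsmul Gf
        (fun v => ((Finset.univ : Finset (Fin m × Bool)).filter
          (fun p => Supp2 Gf (u p.1) v p.2)).card) 2
        (fun v hv => hclaim2 hm v hv)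
      rwa [smul_eq_mul] at this
    rw [hdc] at hlow
    rw [hGfcard] at hup
    have hnm : n = m := le_antisymm hmn (by omega)
    have hSeq : ∑ v ∈ Gf, ((Finset.univ : Finset (Fin m × Bool)).filter
        (fun p => Supp2 Gf (u p.1) v p.2)).card = Gf.card * 2 := by
      rw [hGfcard]; omega
    have hMall : ∀ v ∈ Gf, ((Finset.univ : Finset (Fin m × Bool)).filter
        (fun p => Supp2 Gf (u p.1) v p.2)).card = 2 := by
      intro v hv
      by_contra hne
      have hlt : ((Finset.univ : Finset (Fin m × Bool)).filter
          (fun p => Supp2 Gf (u p.1) v p.2)).card < 2 :=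
        lt_of_le_of_ne (hclaim2 hm v hv) hne
      have hstrict := Finset.sum_lt_sum (f := fun v =>
          ((Finset.univ : Finset (Fin m × Bool)).filter
            (fun p => Supp2 Gf (u p.1) v p.2)).card)
        (g := fun _ => 2) (fun i hi => hclaim2 hm i hi) ⟨v, hv, hlt⟩
      rw [Finset.sum_const, smul_eq_mul, hSeq] at hstrict
      omega
    refine ⟨hnm, ?_⟩
    intro x hx
    have hvGf : castVec x ∈ Gf := (hmemGf _).2 ⟨x, hx, rfl⟩
    obtain ⟨p, q, hp, hq, hpq⟩ := Finset.one_lt_card_iff.1 (by rw [hMall _ hvGf]; norm_num)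
    rw [Finset.mem_filter] at hp hq
    have hipq : p.1 ≠ q.1 := hdiff hm _ hvGf p q hp.2 hq.2 hpq
    refine ⟨subset_convexHull ℝ _ ⟨x, hx, rfl⟩, ?_⟩
    intro x1 hx1 x2 hx2 hseg
    obtain ⟨α, β, hα, hβ, hαβ, hsum⟩ := hseg
    have hkey : ∀ pp : Fin m × Bool, Supp2 Gf (u pp.1) (castVec x) pp.2 →
        det2 (x1 - x2) (u pp.1) = 0 := by
      intro pp hpp
      have hbound' : (∀ w ∈ castVec '' (F ∪ F'),
            det2 w (u pp.1) ≤ det2 (castVec x) (u pp.1)) ∨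
          (∀ w ∈ castVec '' (F ∪ F'),
            det2 (castVec x) (u pp.1) ≤ det2 w (u pp.1)) := by
        rcases hpp.bound with hb | hb
        · exact Or.inl (fun w hw => hb w ((hmemGf w).2 hw))
        · exact Or.inr (fun w hw => hb w ((hmemGf w).2 hw))
      obtain ⟨h1, h2⟩ := det2_eq_on_openSegment hbound' hx1 hx2 hα hβ hαβ hsum
      rw [det2_sub_left, h1, h2]
      ring
    have hz := eq_zero_of_det2 (hkey p hp.2) (hkey q hq.2) (huind _ _ hipq)
    have hx12 : x1 = x2 := sub_eq_zero.1 hz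
    subst hx12
    have hfinal : x1 = castVec x := by
      rw [← hsum, ← add_smul, hαβ, one_smul]
    exact hfinal
end

section
/- (Lemma 1.) Let d ≥ 2, n ∈ ℕ, and let s = (σ_1, …, σ_d) ∈ ℕ_0^d \ {0} be a d-tuple of nonnegative integers, not all zero, with gcd(σ_1, …, σ_d) = 1. Then the number of distinct lines parallel to s that intersect G_n^d = {1, …, n}^d is at most d · n^{d−1} · max{σ_1, …, σ_d}. -/
def grid (d n : ℕ) : Set (Fin d → ℤ) := {x | ∀ i, 1 ≤ x i ∧ x i ≤ (n : ℤ)}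

def linesMeeting {d : ℕ} (s : Fin d → ℤ) (G : Set (Fin d → ℤ)) :
    Set (Set (Fin d → ℝ)) :=
  {ℓ | (∃ p : Fin d → ℝ, ℓ = lineThrough p (castVec s)) ∧ ∃ x ∈ G, castVec x ∈ ℓ}

lemma lineThrough_eq_of_mem {d : ℕ} {p s q : Fin d → ℝ} (t : ℝ) (h : q = p + t • s) :
    lineThrough q s = lineThrough p s := by
  ext x
  simp only [lineThrough, Set.mem_setOf_eq]
  constructor
  · rintro ⟨u, rfl⟩
    exact ⟨t + u, by rw [h]; module⟩
  · rintro ⟨u, rfl⟩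
    exact ⟨u - t, by rw [h]; module⟩

lemma castVec_add_smul {d : ℕ} (x sZ : Fin d → ℤ) (k : ℤ) :
    castVec (x + k • sZ) = castVec x + (k : ℝ) • castVec sZ := by
  funext i
  simp only [castVec, Pi.add_apply, Pi.smul_apply, smul_eq_mul]
  push_cast
  ring

/-- **Lemma 1:** for a relatively prime nonzero tuple `s = (σ₁, …, σ_d)` of
nonnegative integers, at most `d · n^{d-1} · max σᵢ` lines parallel to `s`
intersect the grid `G_n^d`. -/
theorem count_lines_le (d n : ℕ) (hd : 2 ≤ d) (s : Fin d → ℕ) (hs : s ≠ 0)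
    (hgcd : Finset.univ.gcd s = 1) :
    (linesMeeting (fun i => (s i : ℤ)) (grid d n)).ncard ≤
      d * n ^ (d - 1) * Finset.univ.sup s := by
  classical
  set sZ : Fin d → ℤ := fun i => (s i : ℤ) with hsZ
  set B : Finset (Fin d → ℤ) := Fintype.piFinset (fun _ : Fin d => Finset.Icc (1:ℤ) n) with hB
  set T : Finset (Fin d → ℤ) := B.filter (fun x => ∃ i, x i ≤ sZ i) with hT
  set g : (Fin d → ℤ) → Set (Fin d → ℝ) := fun x => lineThrough (castVec x) (castVec sZ) with hg
  have hsnn : ∀ i, (0 : ℤ) ≤ sZ i := fun i => Int.ofNat_nonneg _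
  -- Step 1: every line is the image of a point of T
  have hsub : linesMeeting sZ (grid d n) ⊆ g '' ↑T := by
    rintro ℓ ⟨⟨p, rfl⟩, x0, hx0, t, hxt⟩
    obtain ⟨i0, hi0⟩ : ∃ i, s i ≠ 0 := by
      by_contra h
      push_neg at h
      exact hs (funext h)
    have hsi0 : (1 : ℤ) ≤ sZ i0 := by
      simp only [hsZ]
      exact_mod_cast Nat.one_le_iff_ne_zero.mpr hi0
    have hbdd : ∃ b : ℤ, ∀ k : ℤ, (x0 + k • sZ) ∈ grid d n → b ≤ k := by
      refine ⟨min 0 (1 - x0 i0), fun k hk => ?_⟩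
      have h1 : 1 ≤ x0 i0 + k * sZ i0 := by
        have := (hk i0).1
        simpa using this
      rcases le_or_gt 0 k with hk0 | hk0
      · exact le_trans (min_le_left _ _) hk0
      · have hks : k * sZ i0 ≤ k := by nlinarith
        have : 1 - x0 i0 ≤ k := by linarith
        exact le_trans (min_le_right _ _) this
    have hinh : ∃ k : ℤ, (x0 + k • sZ) ∈ grid d n := ⟨0, by simpa using hx0⟩
    obtain ⟨lb, hlb, hlbmin⟩ := Int.exists_least_of_bdd hbdd hinh
    set x : Fin d → ℤ := x0 + lb • sZ with hx
    have hxg : x ∈ grid d n := hlb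
    have hxsub : x - sZ ∉ grid d n := by
      intro hmem
      have : x0 + (lb - 1) • sZ ∈ grid d n := by
        have : x - sZ = x0 + (lb - 1) • sZ := by
          simp only [hx]; module
        rwa [this] at hmem
      have := hlbmin _ this
      omega
    -- x ∈ T
    have hxT : x ∈ T := by
      rw [hT, Finset.mem_filter]
      constructor
      · rw [hB, Fintype.mem_piFinset]
        intro j
        rcases hxg j with ⟨h1, h2⟩
        exact Finset.mem_Icc.mpr ⟨h1, h2⟩
      · by_contra hcon
        push_neg at hcon
        apply hxsub
        intro j
        simp only [Pi.sub_apply]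
        refine ⟨by have := hcon j; omega, ?_⟩
        have := (hxg j).2
        have := hsnn j
        omega
    -- ℓ = g x
    refine ⟨x, hxT, ?_⟩
    have h1 : lineThrough (castVec x0) (castVec sZ) = lineThrough p (castVec sZ) :=
      lineThrough_eq_of_mem t hxt
    have h2 : lineThrough (castVec x) (castVec sZ) = lineThrough (castVec x0) (castVec sZ) := by
      apply lineThrough_eq_of_mem (lb : ℝ)
      rw [hx, castVec_add_smul]
    simp only [hg]
    rw [h2, h1]
  -- Step 2: ncard bound via image
  have hfin : (g '' ↑T).Finite := T.finite_toSet.image g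
  have hn1 : (linesMeeting sZ (grid d n)).ncard ≤ (g '' (↑T : Set (Fin d → ℤ))).ncard :=
    Set.ncard_le_ncard hsub hfin
  have hn2 : (g '' (↑T : Set (Fin d → ℤ))).ncard ≤ T.card := by
    calc (g '' ↑T).ncard ≤ (↑T : Set (Fin d → ℤ)).ncard := Set.ncard_image_le T.finite_toSet
    _ = T.card := Set.ncard_coe_finset T
  -- Step 3: count T
  have hTcard : T.card ≤ d * n ^ (d - 1) * Finset.univ.sup s := by
    have hsub2 : T ⊆ Finset.univ.biUnion (fun i => B.filter (fun x => x i ≤ sZ i)) := by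
      intro x hx
      rw [hT, Finset.mem_filter] at hx
      obtain ⟨hxB, i, hi⟩ := hx
      exact Finset.mem_biUnion.mpr ⟨i, Finset.mem_univ i, Finset.mem_filter.mpr ⟨hxB, hi⟩⟩
    have hbi := Finset.card_le_card hsub2
    have hsum := Finset.card_biUnion_le (s := (Finset.univ : Finset (Fin d)))
      (t := fun i => B.filter (fun x => x i ≤ sZ i))
    have hper : ∀ i : Fin d, (B.filter (fun x => x i ≤ sZ i)).card ≤ n ^ (d - 1) * Finset.univ.sup s := by
      intro i
      set C : Finset (Fin d → ℤ) := Fintype.piFinset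
        (fun j => if j = i then Finset.Icc (1:ℤ) (sZ i ⊓ n) else Finset.Icc (1:ℤ) n) with hC
      have hsubC : B.filter (fun x => x i ≤ sZ i) ⊆ C := by
        intro x hx
        rw [Finset.mem_filter, hB, Fintype.mem_piFinset] at hx
        rw [hC, Fintype.mem_piFinset]
        intro j
        by_cases hj : j = i
        · subst hj
          have := Finset.mem_Icc.mp (hx.1 j)
          rw [if_pos rfl, Finset.mem_Icc]
          exact ⟨this.1, le_min hx.2 this.2⟩
        · simp only [if_neg hj]
          exact hx.1 j
      have hCcard : C.card = (Finset.Icc (1:ℤ) (sZ i ⊓ n)).card * n ^ (d - 1) := by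
        rw [hC, Fintype.card_piFinset]
        rw [← Finset.mul_prod_erase Finset.univ _ (Finset.mem_univ i)]
        simp only [if_pos rfl]
        congr 1
        have : ∀ j ∈ Finset.univ.erase i,
            (if j = i then Finset.Icc (1:ℤ) (sZ i ⊓ n) else Finset.Icc (1:ℤ) n).card = n := by
          intro j hj
          rw [if_neg (Finset.ne_of_mem_erase hj)]
          rw [Int.card_Icc]
          simp
        rw [Finset.prod_congr rfl this, Finset.prod_const]
        congr 1
        rw [Finset.card_erase_of_mem (Finset.mem_univ i)]
        simp
      have hIcc : (Finset.Icc (1:ℤ) (sZ i ⊓ n)).card ≤ Finset.univ.sup s := by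
        rw [Int.card_Icc]
        have h1 : sZ i ⊓ n + 1 - 1 ≤ sZ i := by
          simpa using min_le_left (sZ i) (n : ℤ)
        have h2 : (sZ i).toNat = s i := by simp [hsZ]
        have h3 : s i ≤ Finset.univ.sup s := Finset.le_sup (Finset.mem_univ i)
        have h4 : (sZ i ⊓ ↑n + 1 - 1).toNat ≤ (sZ i).toNat := Int.toNat_le_toNat h1
        rw [h2] at h4
        exact le_trans h4 h3
      calc (B.filter (fun x => x i ≤ sZ i)).card ≤ C.card := Finset.card_le_card hsubC
        _ = (Finset.Icc (1:ℤ) (sZ i ⊓ n)).card * n ^ (d - 1) := hCcard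
        _ ≤ Finset.univ.sup s * n ^ (d - 1) := Nat.mul_le_mul_right _ hIcc
        _ = n ^ (d - 1) * Finset.univ.sup s := Nat.mul_comm _ _
    calc T.card ≤ (Finset.univ.biUnion (fun i => B.filter (fun x => x i ≤ sZ i))).card := hbi
      _ ≤ ∑ i : Fin d, (B.filter (fun x => x i ≤ sZ i)).card := hsum
      _ ≤ ∑ _i : Fin d, n ^ (d - 1) * Finset.univ.sup s := Finset.sum_le_sum (fun i _ => hper i)
      _ = d * (n ^ (d - 1) * Finset.univ.sup s) := by simp [Finset.sum_const, Finset.card_univ]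
      _ = d * n ^ (d - 1) * Finset.univ.sup s := by ring
  exact le_trans hn1 (le_trans hn2 hTcard)
end

section
/- (Lemma 2.) Let ε > 0 and d ≥ 2. Then for all sufficiently large m ∈ ℕ and for n ∈ {⌈m^{1+(1+ε)/d}⌉, ⌈m^{1+(1+ε)/d}⌉ + 1}, there exists a set S = {s_1, …, s_m} ⊆ ℤ^d of m vectors such that (i) the elements of S are pairwise linearly independent and span ℝ^d, and (ii) the total number of distinct lines that are parallel to some direction in S and intersect G_n^d = {1,…,n}^d (i.e., the sum over i ∈ {1,…,m} of the numbers of lines parallel to s_i intersecting G_n^d) is at most 2^{1+1/d} · d · n^{d−1} · m^{1+1/d}. -/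
lemma castVec_sub {d : ℕ} (x s : Fin d → ℤ) :
    castVec (x - s) = castVec x - castVec s := by
  funext j; simp [castVec]


lemma lines_count {d : ℕ} (n : ℕ) (s : Fin d → ℤ) (hs : s ≠ 0) :
    (linesMeeting s (grid d n)).ncard ≤ (∑ j, (s j).natAbs) * n ^ (d-1) := by
  classical
  set gridF : Finset (Fin d → ℤ) := Fintype.piFinset fun _ : Fin d => Finset.Icc (1:ℤ) (n:ℤ)
    with hgridF
  have hgrid : grid d n = ↑gridF := by
    ext x
    simp only [grid, Set.mem_setOf_eq, Finset.mem_coe, hgridF, Fintype.mem_piFinset,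
      Finset.mem_Icc, forall_and]
  obtain ⟨j0, hj0⟩ : ∃ j, s j ≠ 0 := Function.ne_iff.mp hs
  set B : Finset (Fin d → ℤ) := gridF.filter (fun x => (x - s) ∉ grid d n) with hB
  -- step 1: lines inject into B
  have hsub : linesMeeting s (grid d n) ⊆
      (fun x : Fin d → ℤ => lineThrough (castVec x) (castVec s)) '' ↑B := by
    rintro ℓ ⟨⟨p, rfl⟩, x0, hx0g, hx0l⟩
    set X : Set (Fin d → ℤ) := {x | x ∈ grid d n ∧ castVec x ∈ lineThrough p (castVec s)}
      with hX
    have hXfin : X.Finite := by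
      apply Set.Finite.subset gridF.finite_toSet
      intro x hx
      rw [← hgrid] at *
      exact hx.1
    have hXne : X.Nonempty := ⟨x0, hx0g, hx0l⟩
    obtain ⟨x, hxX, hxmin⟩ := Set.exists_min_image X (fun x => s j0 * x j0) hXfin hXne
    obtain ⟨t, ht⟩ := hxX.2
    have hxB : x ∈ B := by
      rw [hB, Finset.mem_filter]
      refine ⟨by have h1 := hxX.1; rwa [hgrid] at h1, ?_⟩
      intro hcon
      have hline : castVec (x - s) ∈ lineThrough p (castVec s) := by
        refine ⟨t - 1, ?_⟩
        rw [castVec_sub, ht]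
        funext j; simp; ring
      have hmem : (x - s) ∈ X := ⟨hcon, hline⟩
      have := hxmin _ hmem
      simp only [Pi.sub_apply] at this
      have h2 : 0 < s j0 * s j0 := mul_self_pos.mpr hj0
      nlinarith
    refine ⟨x, hxB, ?_⟩
    -- lineThrough (castVec x) (castVec s) = lineThrough p (castVec s)
    ext y
    constructor
    · rintro ⟨u, rfl⟩
      exact ⟨t + u, by rw [ht]; funext j; simp; ring⟩
    · rintro ⟨u, rfl⟩
      exact ⟨u - t, by rw [ht]; funext j; simp; ring⟩
  have hstep1 : (linesMeeting s (grid d n)).ncard ≤ B.card := by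
    calc (linesMeeting s (grid d n)).ncard
        ≤ ((fun x : Fin d → ℤ => lineThrough (castVec x) (castVec s)) '' ↑B).ncard :=
          Set.ncard_le_ncard hsub (B.finite_toSet.image _)
      _ ≤ (↑B : Set (Fin d → ℤ)).ncard := Set.ncard_image_le B.finite_toSet
      _ = B.card := Set.ncard_coe_finset _
  -- step 2: B.card ≤ ∑ j natAbs (s j) * n^(d-1)
  have hstep2 : B.card ≤ ∑ j, (s j).natAbs * n ^ (d-1) := by
    have hBsub : B ⊆ Finset.univ.biUnion
        (fun j => gridF.filter (fun x => x j - s j ∉ Finset.Icc (1:ℤ) (n:ℤ))) := by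
      intro x hx
      rw [hB, Finset.mem_filter] at hx
      obtain ⟨hx1, hx2⟩ := hx
      simp only [grid, Set.mem_setOf_eq, not_forall] at hx2
      obtain ⟨j, hj⟩ := hx2
      rw [Finset.mem_biUnion]
      refine ⟨j, Finset.mem_univ _, Finset.mem_filter.mpr ⟨hx1, ?_⟩⟩
      simp only [Pi.sub_apply] at hj
      simp only [Finset.mem_Icc]
      omega
    refine le_trans (le_trans (Finset.card_le_card hBsub) (Finset.card_biUnion_le)) ?_
    apply Finset.sum_le_sum
    intro j _
    -- card of the j-th bad set
    set badj : Finset ℤ := (Finset.Icc (1:ℤ) (n:ℤ)).filter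
      (fun y => y - s j ∉ Finset.Icc (1:ℤ) (n:ℤ)) with hbadj
    have hsubj : gridF.filter (fun x => x j - s j ∉ Finset.Icc (1:ℤ) (n:ℤ)) ⊆
        Fintype.piFinset (fun i => if i = j then badj else Finset.Icc (1:ℤ) (n:ℤ)) := by
      intro x hx
      rw [Finset.mem_filter] at hx
      rw [Fintype.mem_piFinset]
      intro i
      have hxi : x i ∈ Finset.Icc (1:ℤ) (n:ℤ) := Fintype.mem_piFinset.mp hx.1 i
      rcases eq_or_ne i j with rfl | hij
      · rw [if_pos rfl, hbadj, Finset.mem_filter]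
        exact ⟨hxi, hx.2⟩
      · rw [if_neg hij]
        exact hxi
    have hcardj : (Fintype.piFinset (fun i => if i = j then badj else Finset.Icc (1:ℤ) (n:ℤ))).card
        = badj.card * n ^ (d-1) := by
      rw [Fintype.card_piFinset]
      rw [← Finset.mul_prod_erase Finset.univ _ (Finset.mem_univ j)]
      simp only [if_pos rfl]
      congr 1
      have : ∀ i ∈ Finset.univ.erase j,
          (if i = j then badj else Finset.Icc (1:ℤ) (n:ℤ)).card = n := by
        intro i hi
        rw [if_neg (Finset.mem_erase.mp hi).1]
        rw [Int.card_Icc]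
        simp
      rw [Finset.prod_congr rfl this, Finset.prod_const, Finset.card_erase_of_mem (Finset.mem_univ _)]
      simp
    have hbadcard : badj.card ≤ (s j).natAbs := by
      rcases le_or_gt 0 (s j) with hsj | hsj
      · have : badj ⊆ Finset.Icc (1:ℤ) (s j) := by
          intro y hy
          simp only [hbadj, Finset.mem_filter, Finset.mem_Icc] at hy ⊢
          omega
        calc badj.card ≤ (Finset.Icc (1:ℤ) (s j)).card := Finset.card_le_card this
          _ = (s j).toNat := by rw [Int.card_Icc]; congr 1; omega
          _ ≤ (s j).natAbs := by omega
      · have : badj ⊆ Finset.Icc ((n:ℤ) + s j + 1) (n:ℤ) := by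
          intro y hy
          simp only [hbadj, Finset.mem_filter, Finset.mem_Icc] at hy ⊢
          omega
        calc badj.card ≤ (Finset.Icc ((n:ℤ) + s j + 1) (n:ℤ)).card := Finset.card_le_card this
          _ = (-(s j)).toNat := by rw [Int.card_Icc]; congr 1; ring
          _ ≤ (s j).natAbs := by omega
    calc (gridF.filter (fun x => x j - s j ∉ Finset.Icc (1:ℤ) (n:ℤ))).card
        ≤ badj.card * n ^ (d-1) := by rw [← hcardj]; exact Finset.card_le_card hsubj
      _ ≤ (s j).natAbs * n ^ (d-1) := Nat.mul_le_mul_right _ hbadcard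
  rw [Finset.sum_mul]
  exact le_trans hstep1 hstep2


lemma sumInvSq (H : ℕ) : ∑ g ∈ Finset.Icc 2 H, ((g:ℝ)^2)⁻¹ ≤ 3/4 := by
  have key : ∀ K : ℕ, 2 ≤ K → ∑ g ∈ Finset.Icc 2 K, ((g:ℝ)^2)⁻¹ ≤ 3/4 - (K:ℝ)⁻¹ := by
    intro K hK
    induction K with
    | zero => omega
    | succ K ih =>
      rcases Nat.lt_or_ge K 2 with hK2 | hK2
      · interval_cases K
        · omega
        · norm_num
      · rw [Finset.sum_Icc_succ_top (by omega)]
        have hK0 : (0:ℝ) < K := by positivity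
        have h1 : ((K:ℝ)+1)⁻¹ + (((K:ℝ)+1)^2)⁻¹ ≤ (K:ℝ)⁻¹ := by
          rw [inv_add_inv (by positivity) (by positivity), div_le_iff₀ (by positivity),
            inv_eq_one_div, div_mul_eq_mul_div, le_div_iff₀ hK0]
          ring_nf
          nlinarith [hK0]
        have h2 := ih hK2
        push_cast
        push_cast at h2
        linarith
  rcases Nat.lt_or_ge H 2 with h | h
  · have he : Finset.Icc 2 H = ∅ := by apply Finset.Icc_eq_empty; omega
    rw [he]
    norm_num
  · have hpos : (0:ℝ) < (H:ℝ)⁻¹ := by positivity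
    linarith [key H h]


lemma good_card_bound {d : ℕ} (H : ℕ) (i0 i1 : Fin d) (h01 : i0 ≠ i1) :
    (H:ℝ)^d ≤ 4 * ((Fintype.piFinset fun _ : Fin d => Finset.Icc 1 H).filter
      (fun v => Nat.Coprime (v i0) (v i1))).card := by
  classical
  have hd2 : 2 ≤ d := by
    have : Nontrivial (Fin d) := ⟨i0, i1, h01⟩
    have := Fintype.one_lt_card (α := Fin d)
    simp at this; omega
  set box : Finset (Fin d → ℕ) := Fintype.piFinset fun _ : Fin d => Finset.Icc 1 H with hbox
  have hboxcard : box.card = H ^ d := by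
    rw [hbox, Fintype.card_piFinset]
    simp [Nat.card_Icc]
  set good := box.filter (fun v => Nat.Coprime (v i0) (v i1)) with hgood
  set bad := box.filter (fun v => ¬ Nat.Coprime (v i0) (v i1)) with hbad
  have hsplit : good.card + bad.card = H ^ d := by
    rw [hgood, hbad, Finset.card_filter_add_card_filter_not, hboxcard]
  -- bad is covered by divisibility classes
  have hbadsub : bad ⊆ (Finset.Icc 2 H).biUnion
      (fun g => box.filter (fun v => g ∣ v i0 ∧ g ∣ v i1)) := by
    intro v hv
    rw [hbad, Finset.mem_filter] at hv
    obtain ⟨hv1, hv2⟩ := hv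
    have hv0 : v i0 ∈ Finset.Icc 1 H := Fintype.mem_piFinset.mp hv1 i0
    rw [Finset.mem_Icc] at hv0
    set g := Nat.gcd (v i0) (v i1) with hg
    have hgdvd : g ∣ v i0 := Nat.gcd_dvd_left _ _
    have hgle : g ≤ H := le_trans (Nat.le_of_dvd (by omega) hgdvd) hv0.2
    have hg2 : 2 ≤ g := by
      rcases Nat.lt_or_ge g 2 with h | h
      · interval_cases g
        · exact absurd (Nat.eq_zero_of_gcd_eq_zero_left hg.symm) (by omega)
        · exact absurd hg.symm hv2
      · exact h
    rw [Finset.mem_biUnion]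
    exact ⟨g, Finset.mem_Icc.mpr ⟨hg2, hgle⟩,
      Finset.mem_filter.mpr ⟨hv1, Nat.gcd_dvd_left _ _, Nat.gcd_dvd_right _ _⟩⟩
  -- count each class
  have hclass : ∀ g, (box.filter (fun v => g ∣ v i0 ∧ g ∣ v i1)).card
      ≤ (H / g) * (H / g) * H ^ (d - 2) := by
    intro g
    have hsubc : box.filter (fun v => g ∣ v i0 ∧ g ∣ v i1) ⊆
        Fintype.piFinset (fun i => if i = i0 ∨ i = i1
          then (Finset.Icc 1 H).filter (g ∣ ·) else Finset.Icc 1 H) := by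
      intro v hv
      rw [Finset.mem_filter] at hv
      rw [Fintype.mem_piFinset]
      intro i
      have hvi : v i ∈ Finset.Icc 1 H := Fintype.mem_piFinset.mp hv.1 i
      by_cases h : i = i0 ∨ i = i1
      · rw [if_pos h, Finset.mem_filter]
        refine ⟨hvi, ?_⟩
        rcases h with rfl | rfl
        · exact hv.2.1
        · exact hv.2.2
      · rw [if_neg h]; exact hvi
    have hdvdcard : ((Finset.Icc 1 H).filter (g ∣ ·)).card = H / g := by
      have he : Finset.Icc 1 H = Finset.Ioc 0 H := by
        ext a; simp [Finset.mem_Icc, Finset.mem_Ioc]; omega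
      rw [he]
      exact Nat.Ioc_filter_dvd_card_eq_div H g
    refine le_trans (Finset.card_le_card hsubc) ?_
    rw [Fintype.card_piFinset]
    rw [← Finset.mul_prod_erase Finset.univ _ (Finset.mem_univ i0),
        ← Finset.mul_prod_erase _ _ (Finset.mem_erase.mpr ⟨Ne.symm h01, Finset.mem_univ i1⟩)]
    rw [if_pos (Or.inl rfl), if_pos (Or.inr rfl), hdvdcard]
    rw [← mul_assoc]
    have hcard2 : ((Finset.univ.erase i0).erase i1).card = d - 2 := by
      rw [Finset.card_erase_of_mem (Finset.mem_erase.mpr ⟨Ne.symm h01, Finset.mem_univ i1⟩),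
        Finset.card_erase_of_mem (Finset.mem_univ _), Finset.card_univ, Fintype.card_fin]
      omega
    refine Nat.mul_le_mul le_rfl (le_trans (Finset.prod_le_pow_card _ _ H ?_) ?_)
    · intro i hi
      split
      · refine le_trans (Finset.card_le_card (Finset.filter_subset _ _)) ?_
        simp [Nat.card_Icc]
      · simp [Nat.card_Icc]
    · rw [hcard2]
  -- cast to ℝ and sum
  have hbadcard : (bad.card : ℝ) ≤ (3/4) * (H:ℝ)^d := by
    have h1 : bad.card ≤ ∑ g ∈ Finset.Icc 2 H, (H / g) * (H / g) * H ^ (d - 2) :=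
      le_trans (Finset.card_le_card hbadsub)
        (le_trans Finset.card_biUnion_le (Finset.sum_le_sum fun g _ => hclass g))
    have h2 : ((∑ g ∈ Finset.Icc 2 H, (H / g) * (H / g) * H ^ (d - 2) : ℕ) : ℝ)
        ≤ (3/4) * (H:ℝ)^d := by
      push_cast
      have h3 : ∀ g ∈ Finset.Icc 2 H,
          ((H / g : ℕ) : ℝ) * ((H / g : ℕ) : ℝ) * ((H:ℝ)) ^ (d - 2)
          ≤ ((g:ℝ)^2)⁻¹ * ((H:ℝ)^2 * (H:ℝ) ^ (d-2)) := by
        intro g hg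
        rw [Finset.mem_Icc] at hg
        have hgpos : (0:ℝ) < g := by
          have : 0 < g := by omega
          exact_mod_cast this
        have hdiv : ((H / g : ℕ) : ℝ) ≤ (H:ℝ) / g := Nat.cast_div_le
        have hHg : (0:ℝ) ≤ ((H / g : ℕ) : ℝ) := by positivity
        calc ((H / g : ℕ) : ℝ) * ((H / g : ℕ) : ℝ) * ((H:ℝ)) ^ (d - 2)
            ≤ ((H:ℝ)/g) * ((H:ℝ)/g) * ((H:ℝ)) ^ (d - 2) := by
              apply mul_le_mul_of_nonneg_right _ (by positivity)
              exact mul_le_mul hdiv hdiv hHg (by positivity)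
          _ = ((g:ℝ)^2)⁻¹ * ((H:ℝ)^2 * (H:ℝ) ^ (d-2)) := by
              field_simp
      refine le_trans (Finset.sum_le_sum h3) ?_
      rw [← Finset.sum_mul]
      have h4 : (H:ℝ)^2 * (H:ℝ)^(d-2) = (H:ℝ)^d := by
        rw [← pow_add]
        congr 1
        omega
      rw [h4]
      have := sumInvSq H
      have hHd : (0:ℝ) ≤ (H:ℝ)^d := by positivity
      nlinarith
    calc (bad.card : ℝ) ≤ _ := Nat.cast_le.mpr h1
      _ ≤ (3/4) * (H:ℝ)^d := h2
  have hsplitR : (good.card : ℝ) + bad.card = (H:ℝ)^d := by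
    exact_mod_cast congrArg (Nat.cast : ℕ → ℝ) hsplit
  linarith


lemma pli_aux {d : ℕ} (i0 i1 : Fin d) (v w : Fin d → ℕ)
    (hv0 : 1 ≤ v i0) (hw0 : 1 ≤ w i0)
    (hv : Nat.Coprime (v i0) (v i1)) (hw : Nat.Coprime (w i0) (w i1))
    (c : ℝ) (hc : castVec (fun j => (v j : ℤ)) = c • castVec (fun j => (w j : ℤ))) :
    v = w := by
  have hcoord : ∀ j, (v j : ℝ) = c * (w j : ℝ) := by
    intro j
    have := congrFun hc j
    simpa [castVec] using this
  have cross : ∀ i, v i0 * w i = v i * w i0 := by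
    intro i
    have : ((v i0 * w i : ℕ) : ℝ) = ((v i * w i0 : ℕ) : ℝ) := by
      push_cast
      rw [hcoord i0, hcoord i]
      ring
    exact_mod_cast this
  have hab : v i0 ∣ w i0 := by
    have h1 : v i0 ∣ v i1 * w i0 := ⟨w i1, (cross i1).symm⟩
    exact hv.dvd_of_dvd_mul_left h1
  have hba : w i0 ∣ v i0 := by
    have h1 : w i0 ∣ v i0 * w i1 := ⟨v i1, by rw [cross i1]; ring⟩
    exact hw.dvd_of_dvd_mul_right h1
  have heq : v i0 = w i0 := Nat.dvd_antisymm hab hba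
  funext i
  have h5 := cross i
  rw [heq, mul_comm (v i)] at h5
  have hpos : 0 < w i0 := hw0
  exact (Nat.eq_of_mul_eq_mul_left hpos h5).symm

/-- **Lemma 2:** for large `m` and `n ∈ {⌈m^{1+(1+ε)/d}⌉, ⌈m^{1+(1+ε)/d}⌉ + 1}`
there are `m` pairwise linearly independent directions in `ℤ^d` spanning `ℝ^d` such
that the total number of lines parallel to one of these directions meeting `G_n^d`
is at most `2^{1+1/d} · d · n^{d-1} · m^{1+1/d}`. -/
theorem exists_good_directions (ε : ℝ) (hε : 0 < ε) (d : ℕ) (hd : 2 ≤ d) :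
    ∃ m₀ : ℕ, ∀ m : ℕ, m₀ ≤ m → ∀ n : ℕ,
      (n = ⌈(m : ℝ) ^ (1 + (1 + ε) / d)⌉₊ ∨ n = ⌈(m : ℝ) ^ (1 + (1 + ε) / d)⌉₊ + 1) →
      ∃ s : Fin m → (Fin d → ℤ),
        (∀ i, s i ≠ 0) ∧ PairwiseLinIndepZ s ∧
        Submodule.span ℝ (Set.range fun i => castVec (s i)) = ⊤ ∧
        ((∑ i, (linesMeeting (s i) (grid d n)).ncard : ℕ) : ℝ) ≤
          2 ^ (1 + 1 / (d : ℝ)) * d * n ^ (d - 1) * (m : ℝ) ^ (1 + 1 / (d : ℝ)) := by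
  classical
  have hdR : (2:ℝ) ≤ (d:ℝ) := by exact_mod_cast hd
  have hdne : (d:ℝ) ≠ 0 := by positivity
  set c : ℝ := 2 ^ (1 + 1/(d:ℝ)) - 2 with hc
  have hc0 : 0 < c := by
    have h1 : (2:ℝ)^(1:ℝ) < 2 ^ (1 + 1/(d:ℝ)) := by
      apply Real.rpow_lt_rpow_of_exponent_lt one_lt_two
      have : 0 < 1/(d:ℝ) := by positivity
      linarith
    rw [Real.rpow_one] at h1
    rw [hc]; linarith
  refine ⟨max (d+1) (⌈(1/c)^d⌉₊ + 1), ?_⟩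
  intro m hm n hn
  have hmd : d + 1 ≤ m := le_trans (le_max_left _ _) hm
  have hm1 : 1 ≤ m := by omega
  have hmR : (1:ℝ) ≤ (m:ℝ) := by exact_mod_cast hm1
  have hmR0 : (0:ℝ) < (m:ℝ) := by linarith
  set x : ℝ := (m:ℝ) ^ (1/(d:ℝ)) with hx
  have hx0 : 0 ≤ x := by rw [hx]; positivity
  have hx1 : 1 ≤ x := by
    rw [hx]
    calc (1:ℝ) = 1 ^ (1/(d:ℝ)) := (Real.one_rpow _).symm
      _ ≤ _ := Real.rpow_le_rpow zero_le_one hmR (by positivity)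
  have hcx : 1 ≤ c * x := by
    have h0 : ((⌈(1/c)^d⌉₊ : ℕ) + 1 : ℕ) ≤ m := le_trans (le_max_right _ _) hm
    have h1 : ((1/c)^d : ℝ) ≤ (m:ℝ) := by
      calc ((1/c)^d : ℝ) ≤ (⌈(1/c)^d⌉₊ : ℝ) := Nat.le_ceil _
        _ ≤ (m:ℝ) := by exact_mod_cast le_trans (Nat.le_succ _) h0
    have h2 : ((1/c)^d : ℝ) ^ (1/(d:ℝ)) ≤ x := by
      rw [hx]
      exact Real.rpow_le_rpow (by positivity) h1 (by positivity)
    have h3 : ((1/c)^d : ℝ) ^ (1/(d:ℝ)) = 1/c := by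
      rw [← Real.rpow_natCast (1/c) d, ← Real.rpow_mul (by positivity),
        mul_one_div, div_self hdne, Real.rpow_one]
    rw [h3] at h2
    calc (1:ℝ) = c * (1/c) := by field_simp
      _ ≤ c * x := mul_le_mul_of_nonneg_left h2 hc0.le
  set H : ℕ := ⌈2 * x⌉₊ with hH
  have hxH : 2 * x ≤ (H:ℝ) := Nat.le_ceil _
  have hH2 : 2 ≤ H := by
    have h1 : (2:ℝ) ≤ (H:ℝ) := le_trans (by linarith) hxH
    exact_mod_cast h1
  have hHle : (H:ℝ) ≤ 2 * x + 1 := (Nat.ceil_lt_add_one (by positivity)).le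
  set i0 : Fin d := ⟨0, by omega⟩ with hi0
  set i1 : Fin d := ⟨1, by omega⟩ with hi1
  have h01 : i0 ≠ i1 := by
    rw [hi0, hi1]
    simp [Fin.ext_iff]
  set box := Fintype.piFinset fun _ : Fin d => Finset.Icc 1 H with hbox
  set good := box.filter (fun v => Nat.Coprime (v i0) (v i1)) with hgood
  -- enough good vectors
  have hcount : m ≤ good.card := by
    have h1 := good_card_bound H i0 i1 h01
    have h2 : ((2:ℝ)*x)^d ≤ (H:ℝ)^d := pow_le_pow_left₀ (by positivity) hxH d
    have h3 : ((2:ℝ)*x)^d = 2^d * (m:ℝ) := by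
      rw [mul_pow]
      congr 1
      rw [hx, ← Real.rpow_natCast ((m:ℝ)^(1/(d:ℝ))) d, ← Real.rpow_mul (by positivity),
        one_div, inv_mul_cancel₀ hdne, Real.rpow_one]
    have h4 : (4:ℝ) ≤ 2^d := by
      calc (4:ℝ) = 2^2 := by norm_num
        _ ≤ 2^d := pow_le_pow_right₀ one_le_two hd
    have h5 : (m:ℝ) ≤ (good.card : ℝ) := by nlinarith
    exact_mod_cast h5
  -- special vectors
  set u : Fin d → (Fin d → ℕ) := fun k j => if j = k then 2 else 1 with hu
  have huinj : Function.Injective u := by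
    intro k k' hkk
    by_contra hne
    have := congrFun hkk k
    rw [hu] at this
    simp [if_pos rfl, if_neg hne] at this
  have humem : ∀ k, u k ∈ good := by
    intro k
    rw [hgood, Finset.mem_filter]
    constructor
    · rw [hbox, Fintype.mem_piFinset]
      intro i
      rw [Finset.mem_Icc, hu]
      dsimp only
      split <;> omega
    · rw [hu]
      dsimp only
      rcases eq_or_ne i0 k with rfl | h0
      · rw [if_pos rfl, if_neg (by exact fun h => h01 (by rw [h]))]
        exact Nat.coprime_one_right _
      · rw [if_neg h0]
        exact Nat.coprime_one_left _
  have himg : Finset.image u Finset.univ ⊆ good := by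
    intro v hv
    obtain ⟨k, _, rfl⟩ := Finset.mem_image.mp hv
    exact humem k
  have hdcard : (Finset.image u Finset.univ).card = d := by
    rw [Finset.card_image_of_injective _ huinj, Finset.card_univ, Fintype.card_fin]
  obtain ⟨T, hsubT, hTgood, hTcard⟩ :=
    Finset.exists_subsuperset_card_eq himg (by rw [hdcard]; omega) hcount
  set e := Finset.equivFinOfCardEq hTcard with he
  set sfn : Fin m → (Fin d → ℤ) := fun i j => (((e.symm i : {v // v ∈ T}) : Fin d → ℕ) j : ℤ)
    with hsfn
  -- facts about sfn
  have hmemgood : ∀ i : Fin m, ((e.symm i : {v // v ∈ T}) : Fin d → ℕ) ∈ good := fun i =>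
    hTgood (e.symm i).2
  have hentry : ∀ (i : Fin m) (j : Fin d),
      1 ≤ ((e.symm i : {v // v ∈ T}) : Fin d → ℕ) j ∧
      ((e.symm i : {v // v ∈ T}) : Fin d → ℕ) j ≤ H := by
    intro i j
    have h1 := (Finset.mem_filter.mp (hmemgood i)).1
    rw [hbox, Fintype.mem_piFinset] at h1
    exact Finset.mem_Icc.mp (h1 j)
  have hcop : ∀ i : Fin m,
      Nat.Coprime (((e.symm i : {v // v ∈ T}) : Fin d → ℕ) i0)
        (((e.symm i : {v // v ∈ T}) : Fin d → ℕ) i1) := fun i =>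
    (Finset.mem_filter.mp (hmemgood i)).2
  have hnz : ∀ i, sfn i ≠ 0 := by
    intro i h
    have h1 := congrFun h i0
    rw [hsfn] at h1
    simp only [Pi.zero_apply] at h1
    have h2 := (hentry i i0).1
    omega
  refine ⟨sfn, hnz, ?_, ?_, ?_⟩
  · -- pairwise linear independence
    intro i j hij cc hcc
    have heq := pli_aux i0 i1 _ _ (hentry i i0).1 (hentry j i0).1 (hcop i) (hcop j) cc hcc
    have : e.symm i = e.symm j := Subtype.ext heq
    exact hij (e.symm.injective this)
  · -- spanning
    have hW : ∀ k : Fin d, (castVec fun j => ((u k j : ℕ) : ℤ)) ∈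
        Submodule.span ℝ (Set.range fun i => castVec (sfn i)) := by
      intro k
      apply Submodule.subset_span
      have hmemT : u k ∈ T := hsubT (Finset.mem_image_of_mem u (Finset.mem_univ k))
      refine ⟨e ⟨u k, hmemT⟩, ?_⟩
      have : sfn (e ⟨u k, hmemT⟩) = fun j => ((u k j : ℕ) : ℤ) := by
        rw [hsfn]
        simp [Equiv.symm_apply_apply]
      show castVec (sfn (e ⟨u k, hmemT⟩)) = _
      rw [this]
    have hones : (fun _ : Fin d => (1:ℝ)) ∈
        Submodule.span ℝ (Set.range fun i => castVec (sfn i)) := by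
      have hsum : (∑ k, castVec fun j => ((u k j : ℕ) : ℤ)) = fun _ : Fin d => ((d:ℝ) + 1) := by
        funext j
        rw [Finset.sum_apply]
        have hterm : ∀ k : Fin d, (castVec fun j' => ((u k j' : ℕ) : ℤ)) j
            = (if j = k then (1:ℝ) else 0) + 1 := by
          intro k
          rw [hu]
          simp only [castVec]
          split <;> norm_num
        rw [Finset.sum_congr rfl (fun k _ => hterm k), Finset.sum_add_distrib,
          Finset.sum_ite_eq, Finset.sum_const, Finset.card_univ, Fintype.card_fin]
        simp [add_comm]
      have heq1 : (fun _ : Fin d => (1:ℝ))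
          = ((d:ℝ)+1)⁻¹ • ∑ k, castVec fun j => ((u k j : ℕ) : ℤ) := by
        rw [hsum]
        funext j
        simp only [Pi.smul_apply, smul_eq_mul]
        field_simp
      rw [heq1]
      exact Submodule.smul_mem _ _ (Submodule.sum_mem _ fun k _ => hW k)
    rw [eq_top_iff]
    intro y _
    rw [pi_eq_sum_univ y]
    refine Submodule.sum_mem _ (fun k _ => Submodule.smul_mem _ _ ?_)
    have hEk : (fun j => if k = j then (1:ℝ) else 0)
        = (castVec fun j => ((u k j : ℕ) : ℤ)) - (fun _ => 1) := by
      funext j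
      rw [hu]
      simp only [castVec, Pi.sub_apply]
      rcases eq_or_ne k j with rfl | hkj
      · norm_num
      · rw [if_neg hkj, if_neg (Ne.symm hkj)]
        norm_num
    rw [hEk]
    exact Submodule.sub_mem _ (hW k) hones
  · -- the counting bound
    have hline : ∀ i : Fin m,
        (linesMeeting (sfn i) (grid d n)).ncard ≤ (d * H) * n ^ (d-1) := by
      intro i
      refine le_trans (lines_count n (sfn i) (hnz i)) ?_
      apply Nat.mul_le_mul_right
      calc ∑ j, ((sfn i) j).natAbs ≤ ∑ _j : Fin d, H := by
            apply Finset.sum_le_sum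
            intro j _
            rw [hsfn]
            simp only [Int.natAbs_natCast]
            exact (hentry i j).2
        _ = d * H := by
            rw [Finset.sum_const, Finset.card_univ, Fintype.card_fin]
            simp [Nat.smul_one_eq_cast]
    have htot : (∑ i, (linesMeeting (sfn i) (grid d n)).ncard) ≤ m * ((d * H) * n ^ (d-1)) := by
      calc (∑ i, (linesMeeting (sfn i) (grid d n)).ncard)
          ≤ ∑ _i : Fin m, (d * H) * n ^ (d-1) := Finset.sum_le_sum fun i _ => hline i
        _ = m * ((d * H) * n ^ (d-1)) := by
            rw [Finset.sum_const, Finset.card_univ, Fintype.card_fin]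
            simp [Nat.smul_one_eq_cast]
    have hkey : (m:ℝ) * H ≤ 2 ^ (1 + 1/(d:ℝ)) * (m:ℝ) ^ (1 + 1/(d:ℝ)) := by
      have hrle : (H:ℝ) ≤ 2 ^ (1 + 1/(d:ℝ)) * x := by
        have h2c : (2:ℝ)^(1+1/(d:ℝ)) = c + 2 := by rw [hc]; ring
        rw [h2c]
        nlinarith
      have hm' : (m:ℝ)^(1 + 1/(d:ℝ)) = (m:ℝ) * x := by
        rw [Real.rpow_add hmR0, Real.rpow_one, hx]
      rw [hm']
      calc (m:ℝ) * H ≤ (m:ℝ) * (2^(1+1/(d:ℝ)) * x) :=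
            mul_le_mul_of_nonneg_left hrle (by positivity)
        _ = 2^(1+1/(d:ℝ)) * ((m:ℝ) * x) := by ring
    calc ((∑ i, (linesMeeting (sfn i) (grid d n)).ncard : ℕ) : ℝ)
        ≤ ((m * ((d * H) * n ^ (d-1)) : ℕ) : ℝ) := Nat.cast_le.mpr htot
      _ = ((d:ℝ) * (n:ℝ)^(d-1)) * ((m:ℝ) * (H:ℝ)) := by push_cast; ring
      _ ≤ ((d:ℝ) * (n:ℝ)^(d-1)) * (2 ^ (1 + 1/(d:ℝ)) * (m:ℝ) ^ (1 + 1/(d:ℝ))) := by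
          apply mul_le_mul_of_nonneg_left hkey
          positivity
      _ = 2 ^ (1 + 1 / (d : ℝ)) * d * n ^ (d - 1) * (m : ℝ) ^ (1 + 1 / (d : ℝ)) := by ring
end

section
/- (Theorem 3, main theorem: ψ_{ℤ^d}(m) = O(m^{d+1+ε}).) For every ε > 0 and every d ≥ 2 there exist a constant C > 0 and an m_0 ∈ ℕ such that for every m ≥ m_0 there are m pairwise linearly independent vectors s_1, …, s_m ∈ ℤ^d spanning ℝ^d and two distinct finite sets F, F' ⊆ ℤ^d with |F| = |F'| ≤ C · m^{d+1+ε} that have equal X-rays in each of the directions s_1, …, s_m. -/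
open Finset

namespace PsiZd

/-- digit `t` of `x` in base `b` -/
def dig (b x t : ℕ) : ℕ := x / b ^ t % b

lemma dig_lt {b : ℕ} (hb : 2 ≤ b) (x t : ℕ) : dig b x t < b :=
  Nat.mod_lt _ (by omega)

lemma dig_zero (b t : ℕ) : dig b 0 t = 0 := by simp [dig]

lemma dig_pow {b : ℕ} (hb : 2 ≤ b) (u t : ℕ) :
    dig b (b ^ u) t = if t = u then 1 else 0 := by
  rcases lt_trichotomy t u with h | h | h
  · have : b ^ u / b ^ t = b ^ (u - t) := Nat.pow_div (by omega) (by omega)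
    have h2 : b ^ (u - t) % b = 0 := by
      have : b ∣ b ^ (u - t) := dvd_pow_self b (by omega)
      omega
    simp [dig, this, h2, Nat.ne_of_lt h]
  · subst h
    have h1 : b ^ t / b ^ t = 1 := Nat.div_self (Nat.pow_pos (by omega))
    have h2 : 1 % b = 1 := Nat.mod_eq_of_lt (by omega)
    simp [dig, h1, h2]
  · have : b ^ u / b ^ t = 0 := Nat.div_eq_of_lt (Nat.pow_lt_pow_right (by omega) h)
    simp [dig, this, Nat.ne_of_gt h]

lemma dig_inj {b : ℕ} (hb : 2 ≤ b) :
    ∀ T x y, x < b ^ T → y < b ^ T → (∀ t, t < T → dig b x t = dig b y t) → x = y := by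
  intro T
  induction T with
  | zero => intro x y hx hy _; simp at hx hy; omega
  | succ T ih =>
    intro x y hx hy h
    have hb0 : 0 < b := by omega
    have h0 : x % b = y % b := by
      have := h 0 (by omega); simpa [dig] using this
    have hdiv : x / b = y / b := by
      apply ih
      · exact Nat.div_lt_of_lt_mul (by rw [← pow_succ'] ; exact hx)
      · exact Nat.div_lt_of_lt_mul (by rw [← pow_succ'] ; exact hy)
      · intro t ht
        have := h (t + 1) (by omega)
        simpa [dig, Nat.div_div_eq_div_mul, pow_succ'] using this
    have e1 := Nat.div_add_mod x b
    have e2 := Nat.div_add_mod y b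
    rw [hdiv] at e1
    omega

/-- the direction vector attached to an index `x`: first coordinate 1,
other coordinates the digits of `x` in base `b`. -/
def dirv (d b x : ℕ) : Fin d → ℤ := fun j => if j.val = 0 then 1 else (dig b x (j.val - 1) : ℤ)

lemma dirv_inj {d b : ℕ} (hb : 2 ≤ b) {x y : ℕ} (hx : x < b ^ (d - 1)) (hy : y < b ^ (d - 1))
    (h : dirv d b x = dirv d b y) : x = y := by
  apply dig_inj hb (d - 1) x y hx hy
  intro t ht
  have hd : t + 1 < d := by omega
  have := congrFun h ⟨t + 1, hd⟩
  simpa [dirv] using this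


variable {d m : ℕ}

noncomputable def box (ν : Fin d → ℕ) : Finset (Fin d → ℤ) :=
  Fintype.piFinset fun j => Finset.Ico (0:ℤ) (ν j)

lemma mem_box {ν : Fin d → ℕ} {x : Fin d → ℤ} :
    x ∈ box ν ↔ ∀ j, 0 ≤ x j ∧ x j < ν j := by
  simp [box, Fintype.mem_piFinset]

lemma card_box (ν : Fin d → ℕ) : (box ν).card = ∏ j, ν j := by
  simp [box, Fintype.card_piFinset]

lemma card_box_filter_lt (ν : Fin d → ℕ) (j : Fin d) (c : ℕ) (hc : c ≤ ν j) :
    ((box ν).filter fun x => x j < (c:ℤ)).card = c * ∏ j' ∈ univ.erase j, ν j' := by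
  have hset : ((box ν).filter fun x => x j < (c:ℤ)) =
      Fintype.piFinset fun j' => Finset.Ico (0:ℤ) (if j' = j then (c:ℤ) else ν j') := by
    ext x
    simp only [mem_filter, mem_box, Fintype.mem_piFinset, Finset.mem_Ico]
    constructor
    · rintro ⟨h1, h2⟩ j'
      by_cases hj' : j' = j
      · subst hj'; exact ⟨(h1 j').1, by simpa using h2⟩
      · simpa [hj'] using h1 j'
    · intro h
      have hj := h j
      simp only [if_pos rfl] at hj
      refine ⟨fun j' => ?_, hj.2⟩
      by_cases hj' : j' = j
      · subst hj'
        exact ⟨hj.1, lt_of_lt_of_le hj.2 (by exact_mod_cast hc)⟩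
      · simpa [hj'] using h j'
  rw [hset, Fintype.card_piFinset]
  rw [← Finset.mul_prod_erase univ _ (mem_univ j)]
  congr 1
  · simp
  · apply Finset.prod_congr rfl
    intro j' hj'
    have : j' ≠ j := (Finset.mem_erase.1 hj').1
    simp [this]

lemma card_E_le (ν : Fin d → ℕ) (s : Fin d → ℤ) (hs : ∀ j, 0 ≤ s j)
    (hsν : ∀ j, (s j).toNat ≤ ν j) :
    ((box ν).filter fun x => x - s ∉ box ν).card ≤
      ∑ j, (s j).toNat * ∏ j' ∈ univ.erase j, ν j' := by
  classical
  have hsub : ((box ν).filter fun x => x - s ∉ box ν) ⊆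
      univ.biUnion fun j => (box ν).filter fun x => x j < (((s j).toNat : ℕ) : ℤ) := by
    intro x hx
    rw [mem_filter] at hx
    obtain ⟨hxB, hxs⟩ := hx
    rw [mem_box] at hxs
    push_neg at hxs
    obtain ⟨j, hj⟩ := hxs
    have hxj := (mem_box.1 hxB) j
    have hxlt : x j < s j := by
      simp only [Pi.sub_apply] at hj
      have := hs j
      omega
    refine Finset.mem_biUnion.2 ⟨j, mem_univ j, ?_⟩
    rw [mem_filter]
    exact ⟨hxB, by rw [Int.toNat_of_nonneg (hs j)]; exact hxlt⟩
  calc ((box ν).filter fun x => x - s ∉ box ν).card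
      ≤ _ := Finset.card_le_card hsub
    _ ≤ ∑ j, ((box ν).filter fun x => x j < (((s j).toNat : ℕ) : ℤ)).card :=
        Finset.card_biUnion_le
    _ = ∑ j, (s j).toNat * ∏ j' ∈ univ.erase j, ν j' := by
        apply Finset.sum_congr rfl
        intro j _
        exact card_box_filter_lt ν j _ (hsν j)

lemma prod_ite_coord (hd : 0 < d) (n₁ n₂ : ℕ) :
    (∏ j : Fin d, (if (j : Fin d).val = 0 then n₁ else n₂)) = n₁ * n₂ ^ (d - 1) := by
  have h0 : (⟨0, hd⟩ : Fin d) ∈ univ := mem_univ _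
  rw [← Finset.mul_prod_erase univ _ h0]
  congr 1
  rw [Finset.prod_congr rfl (g := fun _ => n₂), Finset.prod_const]
  · congr 1
    rw [Finset.card_erase_of_mem h0, card_univ]
    simp
  · intro j hj
    have hne : j ≠ ⟨0,hd⟩ := (Finset.mem_erase.1 hj).1
    have : j.val ≠ 0 := fun h => hne (Fin.ext h)
    simp [this]

lemma prod_erase_ite (hd : 2 ≤ d) (n₁ n₂ : ℕ) (j : Fin d) (hj : j.val ≠ 0) :
    (∏ j' ∈ univ.erase j, (if (j' : Fin d).val = 0 then n₁ else n₂)) = n₁ * n₂ ^ (d - 2) := by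
  have hd0 : 0 < d := by omega
  have h0mem : (⟨0, hd0⟩ : Fin d) ∈ univ.erase j := by
    rw [Finset.mem_erase]
    exact ⟨fun h => hj (by rw [← h]), mem_univ _⟩
  rw [← Finset.mul_prod_erase _ _ h0mem]
  congr 1
  rw [Finset.prod_congr rfl (g := fun _ => n₂), Finset.prod_const]
  · congr 1
    rw [Finset.card_erase_of_mem h0mem, Finset.card_erase_of_mem (mem_univ j), card_univ]
    simp only [Fintype.card_fin]
    omega
  · intro j' hj'
    have h1 : j' ≠ ⟨0,hd0⟩ := (Finset.mem_erase.1 hj').1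
    have : j'.val ≠ 0 := fun h => h1 (Fin.ext h)
    simp [this]


noncomputable def cnt (s x : Fin d → ℤ) (H : Finset (Fin d → ℤ)) : ℕ := by
  classical exact (H.filter fun y => ∃ k : ℤ, y = x + k • s).card

lemma cnt_le (s x : Fin d → ℤ) (H : Finset (Fin d → ℤ)) : cnt s x H ≤ H.card := by
  classical
  simpa [cnt] using Finset.card_filter_le H _

lemma cnt_congr (s u x : Fin d → ℤ) (H : Finset (Fin d → ℤ))
    (hu : ∃ k : ℤ, u = x + k • s) : cnt s u H = cnt s x H := by
  classical
  obtain ⟨k₀, hk₀⟩ := hu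
  simp only [cnt]
  congr 1
  apply Finset.filter_congr
  intro y _
  constructor
  · rintro ⟨k, rfl⟩
    exact ⟨k₀ + k, by rw [hk₀, add_smul]; abel⟩
  · rintro ⟨k, rfl⟩
    exact ⟨k - k₀, by rw [hk₀, sub_smul]; abel⟩

lemma pigeon (s : Fin m → Fin d → ℤ) (B : Finset (Fin d → ℤ))
    (I : Finset (Fin m × (Fin d → ℤ)))
    (hcard : (B.card + 1) ^ (I.card + 1) < 2 ^ B.card) :
    ∃ H₁ H₂ : Finset (Fin d → ℤ), H₁ ⊆ B ∧ H₂ ⊆ B ∧ H₁ ≠ H₂ ∧ H₁.card = H₂.card ∧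
      ∀ a ∈ I, cnt (s a.1) a.2 H₁ = cnt (s a.1) a.2 H₂ := by
  classical
  set t := (I.pi fun _ => Finset.range (B.card + 1)) ×ˢ Finset.range (B.card + 1) with ht
  have htcard : t.card = (B.card + 1) ^ (I.card + 1) := by
    rw [ht, Finset.card_product, Finset.card_pi]
    simp [Finset.prod_const, pow_succ]
  set f : Finset (Fin d → ℤ) → (∀ a ∈ I, ℕ) × ℕ :=
    fun H => (fun a _ => cnt (s a.1) a.2 H, H.card) with hf
  have hmaps : ∀ H ∈ B.powerset, f H ∈ t := by
    intro H hH
    rw [Finset.mem_powerset] at hH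
    rw [ht, Finset.mem_product]
    simp only [hf]
    constructor
    · rw [Finset.mem_pi]
      intro a _
      rw [Finset.mem_range]
      have := le_trans (cnt_le (s a.1) a.2 H) (Finset.card_le_card hH)
      omega
    · rw [Finset.mem_range]
      have := Finset.card_le_card hH
      omega
  have hlt : t.card < (B.powerset).card := by
    rw [Finset.card_powerset, htcard]
    exact hcard
  obtain ⟨H₁, h₁, H₂, h₂, hne, heq⟩ :=
    Finset.exists_ne_map_eq_of_card_lt_of_maps_to hlt hmaps
  rw [Finset.mem_powerset] at h₁ h₂
  refine ⟨H₁, H₂, h₁, h₂, hne, ?_, ?_⟩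
  · have := congrArg Prod.snd heq
    simpa [hf] using this
  · intro a ha
    have h1 := congrArg Prod.fst heq
    simp only [hf] at h1
    exact congrFun (congrFun h1 a) ha

lemma cnt_class_eq (hd0 : 0 < d) (s : Fin m → Fin d → ℤ)
    (hs1 : ∀ i, s i ⟨0, hd0⟩ = 1) (ν : Fin d → ℕ)
    (I : Finset (Fin m × (Fin d → ℤ)))
    (hI : ∀ (i : Fin m) (x : Fin d → ℤ), x ∈ box ν → x - s i ∉ box ν → (i, x) ∈ I)
    (H₁ H₂ : Finset (Fin d → ℤ))
    (hrec : ∀ a ∈ I, cnt (s a.1) a.2 H₁ = cnt (s a.1) a.2 H₂)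
    (i : Fin m) (x₀ : Fin d → ℤ) (hx₀ : x₀ ∈ box ν) :
    cnt (s i) x₀ H₁ = cnt (s i) x₀ H₂ := by
  classical
  set N := (box ν).filter (fun y => ∃ k : ℤ, y = x₀ + k • s i) with hN
  have hx₀N : x₀ ∈ N := by
    rw [hN, Finset.mem_filter]
    exact ⟨hx₀, 0, by simp⟩
  obtain ⟨u, huN, hmin⟩ := Finset.exists_min_image N (fun y => y ⟨0, hd0⟩) ⟨x₀, hx₀N⟩
  rw [hN, Finset.mem_filter] at huN
  obtain ⟨huB, k₀, hk₀⟩ := huN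
  have husub : u - s i ∉ box ν := by
    intro hmem
    have hmemN : u - s i ∈ N := by
      rw [hN, Finset.mem_filter]
      refine ⟨hmem, k₀ - 1, ?_⟩
      rw [hk₀, sub_smul, one_smul]
      abel
    have := hmin _ hmemN
    have : u ⟨0, hd0⟩ ≤ u ⟨0, hd0⟩ - s i ⟨0, hd0⟩ := by simpa using this
    rw [hs1 i] at this
    omega
  have hiu : (i, u) ∈ I := hI i u huB husub
  have hcnt := hrec (i, u) hiu
  have h1 : cnt (s i) u H₁ = cnt (s i) x₀ H₁ := cnt_congr _ _ _ _ ⟨k₀, hk₀⟩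
  have h2 : cnt (s i) u H₂ = cnt (s i) x₀ H₂ := cnt_congr _ _ _ _ ⟨k₀, hk₀⟩
  rw [h1, h2] at hcnt
  exact hcnt



lemma castVec_add (x y : Fin d → ℤ) : castVec (x + y) = castVec x + castVec y := by
  funext j; simp [castVec]

lemma castVec_zsmul (k : ℤ) (s : Fin d → ℤ) : castVec (k • s) = (k : ℝ) • castVec s := by
  funext j; simp [castVec]

lemma castVec_inj {x y : Fin d → ℤ} (h : castVec x = castVec y) : x = y := by
  funext j
  have := congrFun h j
  simp only [castVec] at this
  exact_mod_cast this

lemma line_iff (hd0 : 0 < d) (s : Fin d → ℤ) (hs1 : s ⟨0, hd0⟩ = 1)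
    (p : Fin d → ℝ) (x y : Fin d → ℤ)
    (hx : castVec x ∈ lineThrough p (castVec s)) :
    (castVec y ∈ lineThrough p (castVec s)) ↔ ∃ k : ℤ, y = x + k • s := by
  obtain ⟨t₁, ht₁⟩ := hx
  constructor
  · rintro ⟨t₂, ht₂⟩
    set j₀ : Fin d := ⟨0, hd0⟩ with hj₀
    set k : ℤ := y j₀ - x j₀ with hk
    have hdiff : ∀ j, (y j : ℝ) - (x j : ℝ) = (t₂ - t₁) * (s j : ℝ) := by
      intro j
      have e1 := congrFun ht₁ j
      have e2 := congrFun ht₂ j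
      simp only [castVec, Pi.add_apply, Pi.smul_apply, smul_eq_mul] at e1 e2
      rw [e1, e2]; ring
    have hj0 : (t₂ - t₁) = (k : ℝ) := by
      have := hdiff j₀
      rw [hs1] at this
      push_cast at this ⊢
      rw [hk]; push_cast; linarith [this]
    refine ⟨k, funext fun j => ?_⟩
    have := hdiff j
    rw [hj0] at this
    have : (y j : ℝ) = ((x j + k * s j : ℤ) : ℝ) := by push_cast; linarith [this]
    have := Int.cast_injective this
    simpa [Pi.add_apply] using this
  · rintro ⟨k, rfl⟩
    exact ⟨t₁ + k, by rw [castVec_add, castVec_zsmul, ht₁, add_smul]; abel⟩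

lemma cnt_sdiff (s x : Fin d → ℤ) (H₁ H₂ : Finset (Fin d → ℤ)) :
    cnt s x (H₁ \ H₂) = cnt s x H₁ - cnt s x (H₁ ∩ H₂) := by
  classical
  simp only [cnt]
  rw [← Finset.card_sdiff_of_subset (Finset.filter_subset_filter _ (Finset.inter_subset_left))]
  congr 1
  ext y
  simp only [Finset.mem_filter, Finset.mem_sdiff, Finset.mem_inter]
  tauto

lemma equalXrays (hd0 : 0 < d) (s : Fin m → Fin d → ℤ) (hs1 : ∀ i, s i ⟨0,hd0⟩ = 1)
    (ν : Fin d → ℕ) (H₁ H₂ : Finset (Fin d → ℤ)) (hH₁ : H₁ ⊆ box ν) (hH₂ : H₂ ⊆ box ν)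
    (hcnt : ∀ (i : Fin m) (x₀ : Fin d → ℤ), x₀ ∈ box ν → cnt (s i) x₀ H₁ = cnt (s i) x₀ H₂)
    (i : Fin m) : EqualXraysZ (↑(H₁ \ H₂)) (↑(H₂ \ H₁)) (s i) := by
  classical
  intro p
  have conv : ∀ (F : Finset (Fin d → ℤ)),
      {x ∈ (F : Set (Fin d → ℤ)) | castVec x ∈ lineThrough p (castVec (s i))}.ncard
        = (F.filter fun x => castVec x ∈ lineThrough p (castVec (s i))).card := by
    intro F
    rw [← Set.ncard_coe_finset, Finset.coe_filter]
    rfl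
  rw [conv, conv]
  by_cases hempty : ∀ x : Fin d → ℤ, (x ∈ H₁ ∨ x ∈ H₂) → castVec x ∉ lineThrough p (castVec (s i))
  · rw [Finset.filter_false_of_mem, Finset.filter_false_of_mem]
    · intro x hx
      exact hempty x (Or.inr (Finset.mem_sdiff.1 hx).1)
    · intro x hx
      exact hempty x (Or.inl (Finset.mem_sdiff.1 hx).1)
  · push_neg at hempty
    obtain ⟨x₀, hx₀mem, hx₀line⟩ := hempty
    have hx₀B : x₀ ∈ box ν := by
      rcases hx₀mem with h | h
      · exact hH₁ h
      · exact hH₂ h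
    have key : ∀ y : Fin d → ℤ,
        (castVec y ∈ lineThrough p (castVec (s i))) ↔ ∃ k : ℤ, y = x₀ + k • s i :=
      fun y => line_iff hd0 (s i) (hs1 i) p x₀ y hx₀line
    have hfil : ∀ (F : Finset (Fin d → ℤ)),
        (F.filter fun x => castVec x ∈ lineThrough p (castVec (s i))).card
          = cnt (s i) x₀ F := by
      intro F
      simp only [cnt]
      apply Finset.card_nbij id (fun a ha => ?_) (fun a ha b hb h => h) (fun a ha => ⟨a, ?_, rfl⟩)
      · simp only [Finset.mem_coe, Finset.mem_filter] at ha ⊢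
        exact ⟨ha.1, (key a).1 ha.2⟩
      · simp only [Finset.mem_coe, Finset.mem_filter] at ha ⊢
        exact ⟨ha.1, (key a).2 ha.2⟩
    rw [hfil, hfil]
    have e1 : cnt (s i) x₀ (H₁ \ H₂) = cnt (s i) x₀ H₁ - cnt (s i) x₀ (H₁ ∩ H₂) :=
      cnt_sdiff _ _ _ _
    have e2 : cnt (s i) x₀ (H₂ \ H₁) = cnt (s i) x₀ H₂ - cnt (s i) x₀ (H₂ ∩ H₁) :=
      cnt_sdiff _ _ _ _
    rw [e1, e2, Finset.inter_comm H₂ H₁, hcnt i x₀ hx₀B]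



lemma key_ineq (d m b : ℕ) (hd : 2 ≤ d) (hm : 1 ≤ m) (hb : 1 ≤ b)
    (γ β n₁ n₂ Bc : ℕ)
    (hγ : γ = Nat.log 2 (4*d*m*b) + 3) (hβ : β = d * γ^2)
    (hn₁ : n₁ = 4*m*β) (hn₂ : n₂ = 4*d*m*b*β) (hBc : Bc = n₁ * n₂^(d-1))
    (K : ℕ) (hK : K ≤ m * (n₂^(d-1) + (d-1)*b*(n₁ * n₂^(d-2)))) :
    (Bc + 1) ^ (K + 1) < 2 ^ Bc := by
  have h2 : (1:ℕ) < 2 := by norm_num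
  have hγ3 : 3 ≤ γ := by omega
  have hd0 : 0 < d := by omega
  have hγpos : 0 < γ := by omega
  have hβpos : 0 < β := by rw [hβ]; positivity
  have hn₁pos : 0 < n₁ := by rw [hn₁]; positivity
  have hn₂pos : 0 < n₂ := by rw [hn₂]; positivity
  have hBcpos : 0 < Bc := by rw [hBc]; positivity
  have hx0 : 0 < 4*d*m*b := by positivity
  have b1 : 4*d*m*b < 2^(γ-2) := by
    have := Nat.lt_pow_succ_log_self h2 (4*d*m*b)
    have hge : γ - 2 = Nat.log 2 (4*d*m*b) + 1 := by omega
    rw [hge]; exact this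
  have b2 : γ^2 < 2^(2*γ) := by
    have h : γ < 2^γ := Nat.lt_two_pow_self
    calc γ^2 < (2^γ)^2 := by
          apply Nat.pow_lt_pow_left h (by norm_num)
      _ = 2^(2*γ) := by rw [← pow_mul, Nat.mul_comm]
  have b3 : n₂ < 2^(4*γ-4) := by
    have hd' : d ≤ 4*d*m*b := by
      calc d ≤ 4*d := by omega
        _ ≤ 4*d*m := Nat.le_mul_of_pos_right _ (by omega)
        _ ≤ 4*d*m*b := Nat.le_mul_of_pos_right _ (by omega)
    have hdlt : d < 2^(γ-2) := lt_of_le_of_lt hd' b1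
    have hrw : n₂ = (4*d*m*b) * (d * γ^2) := by rw [hn₂, hβ]
    rw [hrw]
    calc (4*d*m*b) * (d * γ^2) < 2^(γ-2) * (2^(γ-2) * 2^(2*γ)) := by
          apply Nat.mul_lt_mul_of_lt_of_le b1
          · exact Nat.mul_le_mul (le_of_lt hdlt) (le_of_lt b2)
          · positivity
      _ = 2^((γ-2) + ((γ-2) + 2*γ)) := by rw [pow_add, pow_add]
      _ = 2^(4*γ-4) := by congr 1; omega
  have hn₁len₂ : n₁ ≤ n₂ := by
    rw [hn₁, hn₂]
    calc 4*m*β ≤ 4*(d*m*b)*β := by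
          gcongr
          calc m = 1*m*1 := by ring
            _ ≤ d*m*b := by gcongr <;> omega
      _ = 4*d*m*b*β := by ring
  have b4 : Bc < 2^(d*(4*γ-4)) := by
    have h1 : Bc ≤ n₂^d := by
      rw [hBc]
      calc n₁ * n₂^(d-1) ≤ n₂ * n₂^(d-1) := by gcongr
        _ = n₂^(d-1+1) := by rw [pow_succ']
        _ = n₂^d := by congr 1; omega
    calc Bc ≤ n₂^d := h1
      _ < (2^(4*γ-4))^d := Nat.pow_lt_pow_left b3 (by omega)
      _ = 2^(d*(4*γ-4)) := by rw [← pow_mul, Nat.mul_comm]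
  have hle2 : 4*γ ≤ γ^2 + 4 := by
    zify
    nlinarith [sq_nonneg ((γ:ℤ) - 2)]
  have b5 : Nat.log 2 Bc + 1 ≤ β := by
    have hlog : Nat.log 2 Bc < d*(4*γ-4) := Nat.log_lt_of_lt_pow (by omega) b4
    have h4 : 4*γ-4 ≤ γ^2 := by omega
    have h5 : d*(4*γ-4) ≤ d*γ^2 := by gcongr
    rw [hβ]
    linarith
  have c1 : 4*(m*β*(n₂^(d-1))) = Bc := by rw [hBc, hn₁]; ring
  have c2 : 4*(m*((d-1)*b*(n₁ * n₂^(d-2)))*β) ≤ Bc := by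
    have h1 : 4*m*(d-1)*b*β ≤ n₂ := by
      rw [hn₂]
      calc 4*m*(d-1)*b*β ≤ 4*m*d*b*β := by gcongr; omega
        _ = 4*d*m*b*β := by ring
    calc 4*(m*((d-1)*b*(n₁ * n₂^(d-2)))*β)
        = (4*m*(d-1)*b*β) * (n₁ * n₂^(d-2)) := by ring
      _ ≤ n₂ * (n₁ * n₂^(d-2)) := by gcongr
      _ = n₁ * (n₂^(d-2) * n₂) := by ring
      _ = n₁ * n₂^(d-2+1) := by rw [pow_succ]
      _ = n₁ * n₂^(d-1) := by congr 2; omega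
      _ = Bc := hBc.symm
  have c3 : 4*β ≤ Bc := by
    rw [hBc, hn₁]
    calc 4*β ≤ 4*m*β := by gcongr; omega
      _ ≤ 4*m*β * n₂^(d-1) := Nat.le_mul_of_pos_right _ (by positivity)
  have c4 : 4*((K+1)*β) ≤ 3*Bc := by
    have hKβ : 4*(K*β) ≤ 2*Bc := by
      calc 4*(K*β) ≤ 4*((m * (n₂^(d-1) + (d-1)*b*(n₁ * n₂^(d-2))))*β) := by gcongr
        _ = 4*(m*β*(n₂^(d-1))) + 4*(m*((d-1)*b*(n₁ * n₂^(d-2)))*β) := by ring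
        _ ≤ Bc + Bc := Nat.add_le_add (le_of_eq c1) c2
        _ = 2*Bc := by ring
    calc 4*((K+1)*β) = 4*(K*β) + 4*β := by ring
      _ ≤ 2*Bc + Bc := Nat.add_le_add hKβ c3
      _ = 3*Bc := by ring
  have c5 : (K+1) * (Nat.log 2 Bc + 1) < Bc := by
    have h1 : (K+1) * (Nat.log 2 Bc + 1) ≤ (K+1) * β := by gcongr
    have h6 : 4*((K+1) * (Nat.log 2 Bc + 1)) ≤ 3*Bc := le_trans (by gcongr) c4
    omega
  have hBc1 : Bc + 1 ≤ 2^(Nat.log 2 Bc + 1) := Nat.lt_pow_succ_log_self h2 Bc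
  calc (Bc + 1)^(K+1) ≤ (2^(Nat.log 2 Bc + 1))^(K+1) := Nat.pow_le_pow_left hBc1 _
    _ = 2^((Nat.log 2 Bc + 1)*(K+1)) := by rw [← pow_mul]
    _ < 2^Bc := by
        apply Nat.pow_lt_pow_right h2
        calc (Nat.log 2 Bc + 1)*(K+1) = (K+1)*(Nat.log 2 Bc + 1) := by ring
          _ < Bc := c5



lemma nat_log_mul_le {x y : ℕ} (hx : 1 ≤ x) (hy : 1 ≤ y) :
    Nat.log 2 (x*y) ≤ Nat.log 2 x + Nat.log 2 y + 1 := by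
  have h2 : (1:ℕ) < 2 := one_lt_two
  have hxy : x*y < 2 ^ (Nat.log 2 x + Nat.log 2 y + 2) := by
    calc x*y < 2^(Nat.log 2 x + 1) * 2^(Nat.log 2 y + 1) :=
          Nat.mul_lt_mul_of_lt_of_le (Nat.lt_pow_succ_log_self h2 x)
            (le_of_lt (Nat.lt_pow_succ_log_self h2 y)) (by positivity)
      _ = 2 ^ (Nat.log 2 x + Nat.log 2 y + 2) := by rw [← pow_add]; congr 1; omega
  have := Nat.log_lt_of_lt_pow (by positivity) hxy
  omega

lemma natlog_le_logb (m : ℕ) (hm : 1 ≤ m) : (Nat.log 2 m : ℝ) ≤ Real.logb 2 m := by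
  have h1 : (2:ℝ) ^ (Nat.log 2 m : ℝ) ≤ (m:ℝ) := by
    rw [Real.rpow_natCast]
    exact_mod_cast Nat.pow_log_le_self 2 (by omega)
  rw [← Real.rpow_logb (by norm_num : (0:ℝ) < 2) (by norm_num) (by positivity : (0:ℝ) < m)] at h1
  exact (Real.rpow_le_rpow_left_iff (by norm_num : (1:ℝ) < 2)).1 h1

lemma logb_le_two_log (x : ℝ) (hx : 1 ≤ x) : Real.logb 2 x ≤ 2 * Real.log x := by
  have hlog2 : (0.6931471803 : ℝ) < Real.log 2 := Real.log_two_gt_d9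
  have hlx : 0 ≤ Real.log x := Real.log_nonneg hx
  rw [Real.logb, div_le_iff₀ (by linarith)]
  nlinarith

lemma poly_log_le (k : ℕ) (ε : ℝ) (hε : 0 < ε) :
    ∃ m₀ : ℕ, ∀ m : ℕ, m₀ ≤ m → Real.log m ^ k ≤ (m:ℝ) ^ ε := by
  have h := isLittleO_log_rpow_rpow_atTop (k : ℝ) hε
  have hb := h.bound (show (0:ℝ) < 1 by norm_num)
  rw [Filter.eventually_atTop] at hb
  obtain ⟨x₀, hx₀⟩ := hb
  refine ⟨⌈x₀⌉₊ + 1, fun m hm => ?_⟩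
  have hm1 : (1:ℝ) ≤ (m:ℝ) := by
    have : 1 ≤ m := by omega
    exact_mod_cast this
  have hxm : x₀ ≤ (m:ℝ) := by
    calc x₀ ≤ (⌈x₀⌉₊ : ℝ) := Nat.le_ceil x₀
      _ ≤ (m:ℝ) := by exact_mod_cast le_trans (Nat.le_succ _) hm
  have hbound := hx₀ (m:ℝ) hxm
  have hlogm : 0 ≤ Real.log m := Real.log_nonneg hm1
  rw [Real.norm_eq_abs, Real.norm_eq_abs] at hbound
  have h1 : Real.log m ^ ((k:ℕ):ℝ) = Real.log m ^ k := Real.rpow_natCast _ k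
  rw [h1] at hbound
  have h2 : |Real.log ↑m ^ k| = Real.log ↑m ^ k := abs_of_nonneg (by positivity)
  have h3 : |(m:ℝ) ^ ε| = (m:ℝ) ^ ε := abs_of_nonneg (Real.rpow_nonneg (by positivity) ε)
  rw [h2, h3] at hbound
  linarith



lemma pairwise_indep (hd0 : 0 < d) (s : Fin m → Fin d → ℤ)
    (hs1 : ∀ i, s i ⟨0, hd0⟩ = 1) (hinj : Function.Injective s) :
    PairwiseLinIndepZ s := by
  intro i j hij c h
  have h0 := congrFun h ⟨0, hd0⟩
  simp only [castVec, Pi.smul_apply, smul_eq_mul, hs1 i, hs1 j] at h0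
  norm_num at h0
  rw [← h0, one_smul] at h
  apply hij
  apply hinj
  funext j'
  have := congrFun h j'
  simp only [castVec] at this
  exact_mod_cast this

lemma dirv_nonzero (hd0 : 0 < d) (b x : ℕ) : dirv d b x ≠ 0 := by
  intro h
  have := congrFun h ⟨0, hd0⟩
  simp [dirv] at this

lemma span_dirv (hd : 2 ≤ d) {b : ℕ} (hb : 2 ≤ b) (s : Fin m → Fin d → ℤ)
    (h0 : ∃ i, s i = dirv d b 0)
    (ht : ∀ t, t < d - 1 → ∃ i, s i = dirv d b (b^t)) :
    Submodule.span ℝ (Set.range fun i => castVec (s i)) = ⊤ := by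
  have hd0 : 0 < d := by omega
  set Sp := Submodule.span ℝ (Set.range fun i => castVec (s i)) with hSp
  set j₀ : Fin d := ⟨0, hd0⟩ with hj₀
  have hmem : ∀ i, castVec (s i) ∈ Sp := fun i => Submodule.subset_span ⟨i, rfl⟩
  have he0 : (fun j' => if j₀ = j' then (1:ℝ) else 0) ∈ Sp := by
    obtain ⟨i, hi⟩ := h0
    have : castVec (s i) = (fun j' => if j₀ = j' then (1:ℝ) else 0) := by
      funext j'
      rw [hi]
      simp only [castVec, dirv, dig_zero]
      by_cases hz : (j' : ℕ) = 0
      · have : j₀ = j' := by rw [hj₀]; exact Fin.ext (by simp [hz])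
        simp [hz, this]
      · have : ¬ (j₀ = j') := by
          intro hcon; apply hz; rw [← hcon]
        simp [hz, this]
    rw [← this]; exact hmem i
  have hej : ∀ j : Fin d, (fun j' => if j = j' then (1:ℝ) else 0) ∈ Sp := by
    intro j
    by_cases hz : (j : ℕ) = 0
    · have : j = j₀ := Fin.ext (by simp [hz, hj₀])
      subst this
      exact he0
    · set t := (j : ℕ) - 1 with htdef
      have htlt : t < d - 1 := by
        have := j.isLt
        omega
      obtain ⟨i, hi⟩ := ht t htlt
      have hkey : castVec (s i) =
          (fun j' => if j = j' then (1:ℝ) else 0) + (fun j' => if j₀ = j' then (1:ℝ) else 0) := by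
        funext j'
        rw [hi]
        simp only [castVec, dirv, Pi.add_apply]
        by_cases hz' : (j' : ℕ) = 0
        · have h1 : j₀ = j' := Fin.ext (by simp [hz', hj₀])
          have h2 : ¬ (j = j') := by
            intro hcon; apply hz; rw [hcon]; exact hz'
          simp [hz', h1, h2]
        · have h1 : ¬ (j₀ = j') := by
            intro hcon; apply hz'; rw [← hcon]
          rw [dig_pow hb]
          by_cases he : j = j'
          · have : (j' : ℕ) - 1 = t := by rw [← he]
            simp [hz', he, this, h1]
          · have : ¬ ((j' : ℕ) - 1 = t) := by
              intro hcon
              apply he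
              apply Fin.ext
              have hj' := j'.isLt
              omega
            simp [hz', he, this, h1]
      have : (fun j' => if j = j' then (1:ℝ) else 0)
          = castVec (s i) - (fun j' => if j₀ = j' then (1:ℝ) else 0) := by
        rw [hkey]; abel
      rw [this]
      exact Submodule.sub_mem _ (hmem i) he0
  rw [eq_top_iff]
  intro x _
  rw [pi_eq_sum_univ x]
  apply Submodule.sum_mem
  intro j _
  exact Submodule.smul_mem _ _ (hej j)



lemma size_bound (e m b β : ℕ) (x : ℝ)
    (hx0 : 0 ≤ x) (hxb : (b:ℝ) ≤ 2*x) (hxd : x^(e+1) = (m:ℝ)) :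
    (4*(m:ℝ)*β) * (4*((e:ℝ)+2)*(m:ℝ)*(b:ℝ)*(β:ℝ))^(e+1)
      ≤ (8*((e:ℝ)+2))^(e+2) * (β:ℝ)^(e+2) * (m:ℝ)^(e+3) := by
  have hm0 : (0:ℝ) ≤ m := Nat.cast_nonneg m
  have hβ0 : (0:ℝ) ≤ β := Nat.cast_nonneg β
  have he0 : (0:ℝ) ≤ (e:ℝ) := Nat.cast_nonneg e
  have hb1 : ((b:ℝ))^(e+1) ≤ 2^(e+1) * (m:ℝ) := by
    calc ((b:ℝ))^(e+1) ≤ (2*x)^(e+1) := pow_le_pow_left₀ (Nat.cast_nonneg b) hxb _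
      _ = 2^(e+1) * x^(e+1) := mul_pow 2 x (e+1)
      _ = 2^(e+1) * m := by rw [hxd]
  have hEq : (4*(m:ℝ)*β) * (4*((e:ℝ)+2)*(m:ℝ)*(b:ℝ)*(β:ℝ))^(e+1)
      = (4*(m:ℝ)*β) * ((4*((e:ℝ)+2)*m*β)^(e+1) * ((b:ℝ))^(e+1)) := by
    rw [show (4*((e:ℝ)+2)*(m:ℝ)*(b:ℝ)*(β:ℝ)) = (4*((e:ℝ)+2)*m*β)*b by ring, mul_pow]
  rw [hEq]
  calc (4*(m:ℝ)*β) * ((4*((e:ℝ)+2)*m*β)^(e+1) * ((b:ℝ))^(e+1))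
      ≤ (4*(m:ℝ)*β) * ((4*((e:ℝ)+2)*m*β)^(e+1) * (2^(e+1) * m)) := by
        gcongr
    _ = (4*(m:ℝ)*β) * (((4*((e:ℝ)+2)*m*β) * 2)^(e+1) * m) := by
        rw [mul_pow _ (2:ℝ)]
        ring
    _ = (4*(m:ℝ)*β) * (((8*((e:ℝ)+2)) * ((m:ℝ)*β))^(e+1) * m) := by
        congr 3
        ring
    _ = 4 * (8*((e:ℝ)+2))^(e+1) * ((β:ℝ)^(e+2)) * ((m:ℝ)^(e+3)) := by
        rw [mul_pow (8*((e:ℝ)+2)) ((m:ℝ)*(β:ℝ)), mul_pow (m:ℝ) (β:ℝ)]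
        ring
    _ ≤ (8*((e:ℝ)+2)) * (8*((e:ℝ)+2))^(e+1) * ((β:ℝ)^(e+2)) * ((m:ℝ)^(e+3)) := by
        gcongr
        linarith
    _ = (8*((e:ℝ)+2))^(e+2) * (β:ℝ)^(e+2) * (m:ℝ)^(e+3) := by
        rw [← pow_succ']


end PsiZd

open Finset PsiZd in
/-- **Theorem 3 (main theorem):** `ψ_{ℤ^d}(m) = O(m^{d+1+ε})`, i.e. for large `m`
there are `m` pairwise linearly independent directions in `ℤ^d` spanning `ℝ^d`
and two distinct sets of common cardinality at most `C·m^{d+1+ε}` with equal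
X-rays in these directions. -/
theorem psi_Zd_polynomial (ε : ℝ) (hε : 0 < ε) (d : ℕ) (hd : 2 ≤ d) :
    ∃ C : ℝ, 0 < C ∧ ∃ m₀ : ℕ, ∀ m : ℕ, m₀ ≤ m →
      ∃ s : Fin m → (Fin d → ℤ),
        (∀ i, s i ≠ 0) ∧ PairwiseLinIndepZ s ∧
        Submodule.span ℝ (Set.range fun i => castVec (s i)) = ⊤ ∧
        ∃ F F' : Set (Fin d → ℤ), F.Finite ∧ F'.Finite ∧ F ≠ F' ∧
          F.ncard = F'.ncard ∧ (F.ncard : ℝ) ≤ C * (m : ℝ) ^ ((d : ℝ) + 1 + ε) ∧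
          ∀ i, EqualXraysZ F F' (s i) := by
  classical
  obtain ⟨e, rfl⟩ : ∃ e, d = e + 2 := ⟨d-2, by omega⟩
  set d := e + 2 with hddef
  have hd0 : 0 < d := by omega
  set A : ℕ := Nat.log 2 (8*d) + 5 with hA
  obtain ⟨M₁, hM₁⟩ := PsiZd.poly_log_le (2*d) ε hε
  refine ⟨(8*(d:ℝ))^d * (25*(d:ℝ))^d, by positivity,
    M₁ + ⌈Real.exp A⌉₊ + 2^(e*(e+1)) + d + 2, ?_⟩
  intro m hm
  have hp2 : 1 ≤ 2^(e*(e+1)) := Nat.one_le_two_pow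
  have hm2 : 2 ≤ m := by omega
  have hm1 : 1 ≤ m := by omega
  have hm1R : (1:ℝ) ≤ (m:ℝ) := by exact_mod_cast hm1
  have hm0R : (0:ℝ) < (m:ℝ) := by linarith
  have hmM₁ : M₁ ≤ m := by omega
  have hmexp : Real.exp A ≤ (m:ℝ) := by
    have h0 : ⌈Real.exp A⌉₊ ≤ m := by omega
    have h1 : (⌈Real.exp A⌉₊ : ℝ) ≤ (m:ℝ) := by exact_mod_cast h0
    exact le_trans (Nat.le_ceil _) h1
  have hmpow : 2^(e*(e+1)) < m := by omega
  -- the base b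
  have hdR : (1:ℝ) ≤ (d:ℝ) - 1 := by
    have h2 : (2:ℝ) ≤ (d:ℝ) := by exact_mod_cast hd
    linarith
  set x : ℝ := (m:ℝ) ^ (((d:ℝ) - 1)⁻¹) with hxdef
  have hx0 : (0:ℝ) ≤ x := Real.rpow_nonneg (le_of_lt hm0R) _
  have hcinv : (0:ℝ) < ((d:ℝ)-1)⁻¹ := by
    rw [inv_pos]; linarith
  have hx1 : (1:ℝ) ≤ x := by
    have := Real.rpow_le_rpow_of_exponent_le hm1R (le_of_lt hcinv)
    rw [Real.rpow_zero] at this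
    exact this
  have hcast : ((d-1:ℕ):ℝ) = (d:ℝ) - 1 := by
    have h1d : (1:ℕ) ≤ d := by omega
    push_cast [h1d]
    ring
  have hxd : x ^ (d-1) = (m:ℝ) := by
    rw [hxdef, ← Real.rpow_natCast ((m:ℝ) ^ (((d:ℝ) - 1)⁻¹)) (d-1),
      ← Real.rpow_mul (le_of_lt hm0R), hcast,
      inv_mul_cancel₀ (by linarith : (d:ℝ)-1 ≠ 0), Real.rpow_one]
  set b : ℕ := ⌈x⌉₊ with hbdef
  have hbx : x ≤ (b:ℝ) := Nat.le_ceil x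
  have hxb : (b:ℝ) ≤ 2*x := by
    have h1 : (b:ℝ) < x + 1 := Nat.ceil_lt_add_one hx0
    linarith
  have hb2 : 2 ≤ b := by
    have hm2R : (1:ℝ) < (m:ℝ) := by exact_mod_cast hm2
    have h1 : (1:ℝ) < x := by
      rw [hxdef]
      exact (Real.one_lt_rpow_iff_of_pos hm0R).2 (Or.inl ⟨hm2R, hcinv⟩)
    have : 1 < ⌈x⌉₊ := Nat.lt_ceil.2 (by exact_mod_cast h1)
    omega
  have hb1 : 1 ≤ b := by omega
  have hmb : m ≤ b^(d-1) := by
    have h1 : (m:ℝ) ≤ ((b:ℝ))^(d-1) := by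
      rw [← hxd]
      exact pow_le_pow_left₀ hx0 hbx _
    exact_mod_cast h1
  have hbm : b ≤ m := by
    have hxm : x ≤ (m:ℝ) := by
      calc x ≤ (m:ℝ)^(1:ℝ) := by
            rw [hxdef]
            apply Real.rpow_le_rpow_of_exponent_le hm1R
            rw [inv_le_one_iff₀]
            right; linarith
        _ = (m:ℝ) := Real.rpow_one _
    calc b = ⌈x⌉₊ := rfl
      _ ≤ ⌈(m:ℝ)⌉₊ := Nat.ceil_le_ceil hxm
      _ = m := Nat.ceil_natCast m
  have hbd2 : ∀ t, t < d - 1 → b^t < m := by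
    intro t ht
    have hx2 : (2:ℝ)^e < x := by
      by_contra hcon
      push_neg at hcon
      have h1 : (m:ℝ) ≤ ((2:ℝ)^e)^(e+1) := by
        have := pow_le_pow_left₀ hx0 hcon (e+1)
        rw [show d - 1 = e + 1 by omega] at hxd
        rw [← hxd]; exact this
      rw [← pow_mul] at h1
      have h2 : ((2:ℕ)^(e*(e+1)) : ℝ) < (m:ℝ) := by exact_mod_cast hmpow
      push_cast at h2
      linarith
    have hbe : (b:ℝ)^t ≤ (b:ℝ)^e := pow_le_pow_right₀ (by exact_mod_cast hb1) (by omega)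
    have h3 : ((b:ℝ))^e ≤ (2*x)^e := pow_le_pow_left₀ (by positivity) hxb e
    have h4 : (2*x)^e = 2^e * x^e := mul_pow 2 x e
    have h5 : 2^e * x^e < x * x^e := by
      have hxe : (0:ℝ) < x^e := by positivity
      exact mul_lt_mul_of_pos_right hx2 hxe
    have h6 : x * x^e = x^(e+1) := (pow_succ' x e).symm
    have h7 : x^(e+1) = (m:ℝ) := by rw [show d - 1 = e + 1 by omega] at hxd; exact hxd
    have : (b:ℝ)^t < (m:ℝ) := by
      calc (b:ℝ)^t ≤ (b:ℝ)^e := hbe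
        _ ≤ 2^e * x^e := by rw [← h4]; exact h3
        _ < x * x^e := h5
        _ = (m:ℝ) := by rw [h6, h7]
    exact_mod_cast this
  -- parameters
  set γ : ℕ := Nat.log 2 (4*d*m*b) + 3 with hγ
  set β : ℕ := d * γ^2 with hβ
  set n₁ : ℕ := 4*m*β with hn₁
  set n₂ : ℕ := 4*d*m*b*β with hn₂
  have hγpos : 0 < γ := by omega
  have hβpos : 0 < β := by rw [hβ]; positivity
  have hn₁pos : 0 < n₁ := by rw [hn₁]; positivity
  have hn₂pos : 0 < n₂ := by rw [hn₂]; positivity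
  set ν : Fin d → ℕ := fun j => if (j:ℕ) = 0 then n₁ else n₂ with hν
  -- the directions
  set s : Fin m → (Fin d → ℤ) := fun i => dirv d b i.val with hs
  have hs1 : ∀ i, s i ⟨0, hd0⟩ = 1 := by
    intro i
    simp [hs, dirv]
  have hsinj : Function.Injective s := by
    intro i i' hii
    have h1 : i.val < b^(d-1) := lt_of_lt_of_le i.isLt hmb
    have h2 : i'.val < b^(d-1) := lt_of_lt_of_le i'.isLt hmb
    exact Fin.ext (dirv_inj hb2 h1 h2 hii)
  have hnonzero : ∀ i, s i ≠ 0 := fun i => dirv_nonzero hd0 b i.val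
  have hpairwise : PairwiseLinIndepZ s := pairwise_indep hd0 s hs1 hsinj
  have hspan : Submodule.span ℝ (Set.range fun i => castVec (s i)) = ⊤ := by
    apply span_dirv hd hb2 s
    · exact ⟨⟨0, by omega⟩, rfl⟩
    · intro t ht
      exact ⟨⟨b^t, hbd2 t ht⟩, rfl⟩
  -- the box
  set B : Finset (Fin d → ℤ) := box ν with hB
  have hBcval : B.card = n₁ * n₂^(d-1) := by
    rw [hB, card_box]
    exact prod_ite_coord hd0 n₁ n₂
  have hBcpos : 0 < B.card := by
    rw [hBcval]; positivity
  -- coordinate facts about directions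
  have hs_nonneg : ∀ i j, 0 ≤ s i j := by
    intro i j
    simp only [hs, dirv]
    split <;> positivity
  have hbn₂ : b ≤ n₂ := by
    rw [hn₂]
    calc b ≤ 4*d*m*b := Nat.le_mul_of_pos_left b (by positivity)
      _ ≤ 4*d*m*b*β := Nat.le_mul_of_pos_right _ hβpos
  have hs_toNat : ∀ i j, (s i j).toNat ≤ ν j := by
    intro i j
    simp only [hs, dirv, hν]
    by_cases hz : (j:ℕ) = 0
    · simp only [hz, if_pos rfl, if_true]
      simp only [Int.toNat_one]
      omega
    · simp only [hz, if_neg hz, if_false]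
      rw [Int.toNat_natCast]
      have := dig_lt hb2 i.val ((j:ℕ) - 1)
      omega
  -- product over erase at zero index
  have h00 : (∏ j' ∈ univ.erase (⟨0,hd0⟩ : Fin d), ν j') = n₂^(d-1) := by
    have h1 : (∏ j, ν j) = ν ⟨0,hd0⟩ * ∏ j' ∈ univ.erase (⟨0,hd0⟩ : Fin d), ν j' :=
      (Finset.mul_prod_erase univ ν (mem_univ _)).symm
    have h2 : ν ⟨0,hd0⟩ = n₁ := by simp [hν]
    have h3 : (∏ j, ν j) = n₁ * n₂^(d-1) := prod_ite_coord hd0 n₁ n₂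
    rw [h2] at h1
    rw [h3] at h1
    exact (Nat.eq_of_mul_eq_mul_left hn₁pos h1.symm)
  -- cardinality of the boundary sets
  have hEb : ∀ i : Fin m, ((box ν).filter (fun x => x - s i ∉ box ν)).card
      ≤ n₂^(d-1) + (d-1)*b*(n₁ * n₂^(d-2)) := by
    intro i
    have h1 := card_E_le ν (s i) (hs_nonneg i) (hs_toNat i)
    apply le_trans h1
    rw [← Finset.add_sum_erase univ _ (mem_univ (⟨0,hd0⟩ : Fin d))]
    apply Nat.add_le_add
    · rw [h00]
      have hval : (s i ⟨0,hd0⟩).toNat = 1 := by rw [hs1 i]; rfl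
      rw [hval, one_mul]
    · calc ∑ j ∈ univ.erase (⟨0,hd0⟩ : Fin d), (s i j).toNat * ∏ j' ∈ univ.erase j, ν j'
          ≤ ∑ _j ∈ univ.erase (⟨0,hd0⟩ : Fin d), b*(n₁ * n₂^(d-2)) := by
            apply Finset.sum_le_sum
            intro j hj
            have hjne : (j:ℕ) ≠ 0 := by
              intro hcon
              exact (Finset.mem_erase.1 hj).1 (Fin.ext hcon)
            have hprod : (∏ j' ∈ univ.erase j, ν j') = n₁ * n₂^(d-2) := by
              have := prod_erase_ite hd n₁ n₂ j hjne
              simpa [hν] using this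
            rw [hprod]
            apply Nat.mul_le_mul_right
            simp only [hs, dirv, if_neg hjne]
            rw [Int.toNat_natCast]
            exact le_of_lt (dig_lt hb2 i.val ((j:ℕ) - 1))
        _ = (d-1) * (b*(n₁ * n₂^(d-2))) := by
            rw [Finset.sum_const, Finset.card_erase_of_mem (mem_univ _), card_univ,
              Fintype.card_fin, smul_eq_mul]
        _ = (d-1)*b*(n₁ * n₂^(d-2)) := by ring
  -- the index set and pigeonhole
  set I : Finset (Fin m × (Fin d → ℤ)) :=
    univ.biUnion (fun i => ((box ν).filter (fun x => x - s i ∉ box ν)).image (Prod.mk i)) with hI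
  have hIcard : I.card ≤ m * (n₂^(d-1) + (d-1)*b*(n₁ * n₂^(d-2))) := by
    calc I.card ≤ ∑ i, (((box ν).filter (fun x => x - s i ∉ box ν)).image (Prod.mk i)).card :=
          Finset.card_biUnion_le
      _ ≤ ∑ _i : Fin m, (n₂^(d-1) + (d-1)*b*(n₁ * n₂^(d-2))) := by
          apply Finset.sum_le_sum
          intro i _
          exact le_trans Finset.card_image_le (hEb i)
      _ = m * (n₂^(d-1) + (d-1)*b*(n₁ * n₂^(d-2))) := by
          rw [Finset.sum_const, card_univ, Fintype.card_fin, smul_eq_mul]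
  have hkey : (B.card + 1) ^ (I.card + 1) < 2 ^ B.card := by
    rw [hBcval]
    exact key_ineq d m b hd hm1 hb1 γ β n₁ n₂ _ hγ hβ hn₁ hn₂ rfl I.card hIcard
  obtain ⟨H₁, H₂, hH₁, hH₂, hne, hcardeq, hrec⟩ := pigeon s B I hkey
  have hIcond : ∀ (i : Fin m) (x : Fin d → ℤ), x ∈ box ν → x - s i ∉ box ν → (i, x) ∈ I := by
    intro i xx hx hxs
    rw [hI]
    exact Finset.mem_biUnion.2 ⟨i, mem_univ i,
      Finset.mem_image_of_mem _ (Finset.mem_filter.2 ⟨hx, hxs⟩)⟩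
  have hcnt : ∀ (i : Fin m) (x₀ : Fin d → ℤ), x₀ ∈ box ν →
      cnt (s i) x₀ H₁ = cnt (s i) x₀ H₂ :=
    fun i x₀ hx₀ => cnt_class_eq hd0 s hs1 ν I hIcond H₁ H₂ hrec i x₀ hx₀
  have hxray : ∀ i, EqualXraysZ (↑(H₁ \ H₂)) (↑(H₂ \ H₁)) (s i) :=
    equalXrays hd0 s hs1 ν H₁ H₂ hH₁ hH₂ hcnt
  -- the two sets
  refine ⟨s, hnonzero, hpairwise, hspan,
    (↑(H₁ \ H₂) : Set (Fin d → ℤ)), (↑(H₂ \ H₁) : Set (Fin d → ℤ)),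
    Finset.finite_toSet _, Finset.finite_toSet _, ?_, ?_, ?_, hxray⟩
  · -- F ≠ F'
    intro hFF
    apply hne
    have hFin : H₁ \ H₂ = H₂ \ H₁ := Finset.coe_injective hFF
    ext y
    constructor
    · intro hy
      by_contra hy2
      have : y ∈ H₁ \ H₂ := Finset.mem_sdiff.2 ⟨hy, hy2⟩
      rw [hFin] at this
      exact hy2 (Finset.mem_sdiff.1 this).1
    · intro hy
      by_contra hy2
      have : y ∈ H₂ \ H₁ := Finset.mem_sdiff.2 ⟨hy, hy2⟩
      rw [← hFin] at this
      exact hy2 (Finset.mem_sdiff.1 this).1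
  · -- equal cardinalities
    rw [Set.ncard_coe_finset, Set.ncard_coe_finset]
    have e1 := Finset.card_sdiff_add_card_inter H₁ H₂
    have e2 := Finset.card_sdiff_add_card_inter H₂ H₁
    rw [Finset.inter_comm H₂ H₁] at e2
    omega
  · -- the size bound
    rw [Set.ncard_coe_finset]
    have hcard1 : (H₁ \ H₂).card ≤ B.card :=
      le_trans (Finset.card_le_card (Finset.sdiff_subset)) (Finset.card_le_card hH₁)
    have hstep0 : ((H₁ \ H₂).card : ℝ) ≤ (B.card : ℝ) := by exact_mod_cast hcard1
    -- B.card bound via size_bound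
    have hxd' : x^(e+1) = (m:ℝ) := by
      rw [show e + 1 = d - 1 by omega]
      exact hxd
    have hsb := size_bound e m b β x hx0 hxb hxd'
    have hBcast : ((B.card : ℕ) : ℝ)
        = (4*(m:ℝ)*β) * (4*((e:ℝ)+2)*(m:ℝ)*(b:ℝ)*(β:ℝ))^(e+1) := by
      rw [hBcval, hn₁, hn₂]
      rw [show d - 1 = e + 1 by omega]
      push_cast [hddef]
      ring
    have hstep1 : ((B.card : ℕ) : ℝ)
        ≤ (8*((e:ℝ)+2))^(e+2) * (β:ℝ)^(e+2) * (m:ℝ)^(e+3) := by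
      rw [hBcast]; exact hsb
    -- bound β in terms of log m
    have hL2 : Nat.log 2 (4*d*m*b) ≤ Nat.log 2 (4*d) + 2 * Nat.log 2 m + 2 := by
      have hmono : Nat.log 2 (4*d*m*b) ≤ Nat.log 2 (4*d*m*m) := by
        apply Nat.log_mono_right
        have : 4*d*m*b ≤ 4*d*m*m := by
          apply Nat.mul_le_mul_left
          exact hbm
        exact this
      have h1 : Nat.log 2 (4*d*m*m) ≤ Nat.log 2 (4*d*m) + Nat.log 2 m + 1 := by
        have hpos : 0 < 4*d*m := by positivity
        have := nat_log_mul_le (x := 4*d*m) (y := m) hpos hm1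
        exact this
      have h2 : Nat.log 2 (4*d*m) ≤ Nat.log 2 (4*d) + Nat.log 2 m + 1 := by
        have hpos : 0 < 4*d := by positivity
        have := nat_log_mul_le (x := 4*d) (y := m) hpos hm1
        exact this
      omega
    have hγA : γ ≤ A + 2 * Nat.log 2 m := by
      have hmono2 : Nat.log 2 (4*d) ≤ Nat.log 2 (8*d) := by
        apply Nat.log_mono_right
        omega
      rw [hγ, hA]
      omega
    have hlogm0 : (0:ℝ) ≤ Real.log m := Real.log_nonneg hm1R
    have hAlog : (A:ℝ) ≤ Real.log m := by
      calc (A:ℝ) = Real.log (Real.exp A) := (Real.log_exp _).symm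
        _ ≤ Real.log m := Real.log_le_log (Real.exp_pos _) hmexp
    have hnatlog : (Nat.log 2 m : ℝ) ≤ 2 * Real.log m := by
      calc (Nat.log 2 m : ℝ) ≤ Real.logb 2 m := natlog_le_logb m hm1
        _ ≤ 2 * Real.log m := logb_le_two_log m hm1R
    have hγR : (γ:ℝ) ≤ 5 * Real.log m := by
      have h1 : (γ:ℝ) ≤ (A:ℝ) + 2*(Nat.log 2 m : ℝ) := by exact_mod_cast hγA
      linarith
    have hγ0R : (0:ℝ) ≤ (γ:ℝ) := Nat.cast_nonneg γ
    have hβR : (β:ℝ) ≤ (25*((e:ℝ)+2)) * (Real.log m)^2 := by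
      have h1 : (β:ℝ) = ((e:ℝ)+2) * (γ:ℝ)^2 := by
        rw [hβ]; push_cast [hddef]; ring
      have h2 : (γ:ℝ)^2 ≤ (5*Real.log m)^2 := by
        apply pow_le_pow_left₀ hγ0R hγR
      rw [h1]
      have he2 : (0:ℝ) ≤ (e:ℝ)+2 := by positivity
      calc ((e:ℝ)+2) * (γ:ℝ)^2 ≤ ((e:ℝ)+2) * (5*Real.log m)^2 :=
            mul_le_mul_of_nonneg_left h2 he2
        _ = (25*((e:ℝ)+2)) * (Real.log m)^2 := by ring
    have hβpow : (β:ℝ)^(e+2) ≤ (25*((e:ℝ)+2))^(e+2) * (Real.log m)^(2*(e+2)) := by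
      calc (β:ℝ)^(e+2) ≤ ((25*((e:ℝ)+2)) * (Real.log m)^2)^(e+2) := by
            apply pow_le_pow_left₀ (Nat.cast_nonneg β) hβR
        _ = (25*((e:ℝ)+2))^(e+2) * ((Real.log m)^2)^(e+2) := mul_pow _ _ _
        _ = (25*((e:ℝ)+2))^(e+2) * (Real.log m)^(2*(e+2)) := by rw [← pow_mul]
    have hlogle : (Real.log m)^(2*(e+2)) ≤ (m:ℝ)^ε := by
      have := hM₁ m hmM₁
      simpa [hddef] using this
    -- final chain
    have hfinal : ((B.card : ℕ) : ℝ)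
        ≤ ((8*((e:ℝ)+2))^(e+2) * (25*((e:ℝ)+2))^(e+2)) * ((m:ℝ)^(e+3) * (m:ℝ)^ε) := by
      calc ((B.card : ℕ) : ℝ)
          ≤ (8*((e:ℝ)+2))^(e+2) * (β:ℝ)^(e+2) * (m:ℝ)^(e+3) := hstep1
        _ ≤ (8*((e:ℝ)+2))^(e+2) * ((25*((e:ℝ)+2))^(e+2) * (Real.log m)^(2*(e+2)))
              * (m:ℝ)^(e+3) := by
            gcongr
        _ ≤ (8*((e:ℝ)+2))^(e+2) * ((25*((e:ℝ)+2))^(e+2) * (m:ℝ)^ε) * (m:ℝ)^(e+3) := by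
            gcongr
        _ = ((8*((e:ℝ)+2))^(e+2) * (25*((e:ℝ)+2))^(e+2)) * ((m:ℝ)^(e+3) * (m:ℝ)^ε) := by
            ring
    have hCast : ((8*((d:ℕ):ℝ))^d * (25*((d:ℕ):ℝ))^d)
        = (8*((e:ℝ)+2))^(e+2) * (25*((e:ℝ)+2))^(e+2) := by
      push_cast [hddef]
      norm_num
    have hrpow : (m:ℝ) ^ ((d:ℝ) + 1 + ε) = (m:ℝ)^(e+3) * (m:ℝ)^ε := by
      rw [Real.rpow_add hm0R]
      congr 1
      rw [show ((d:ℝ) + 1) = (((e+3 : ℕ)):ℝ) by push_cast [hddef]; ring]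
      rw [Real.rpow_natCast]
    calc (((H₁ \ H₂).card : ℕ) : ℝ) ≤ ((B.card : ℕ) : ℝ) := hstep0
      _ ≤ ((8*((e:ℝ)+2))^(e+2) * (25*((e:ℝ)+2))^(e+2)) * ((m:ℝ)^(e+3) * (m:ℝ)^ε) := hfinal
      _ = (8*((d:ℕ):ℝ))^d * (25*((d:ℕ):ℝ))^d * (m:ℝ) ^ ((d:ℝ) + 1 + ε) := by
          rw [hCast, hrpow]
end

section
/- (Regular 2m-gon construction: ψ_{ℝ²}(m) ≤ m.) Let m ≥ 2, and for k = 0, 1, …, 2m−1 let v_k = (cos(kπ/m), sin(kπ/m)) be the vertices of a regular 2m-gon. Set F = {v_k : k even} and F' = {v_k : k odd}. Then F and F' are disjoint m-point sets in ℝ², the m edge directions u_j = v_{j+1} − v_j for j = 0, 1, …, m−1 are pairwise linearly independent, and F and F' have equal X-rays in each of the directions u_0, …, u_{m−1}. -/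
open Real

private lemma crossTrig (A B C D : ℝ) :
    (Real.cos A - Real.cos B) * (Real.sin C - Real.sin D)
      - (Real.sin A - Real.sin B) * (Real.cos C - Real.cos D)
      = 4 * Real.sin ((A - B) / 2) * Real.sin ((C - D) / 2)
          * Real.sin ((C + D) / 2 - (A + B) / 2) := by
  rw [Real.cos_sub_cos, Real.sin_sub_sin, Real.cos_sub_cos, Real.sin_sub_sin,
    Real.sin_sub]
  ring

private lemma parallelOf (w s : Fin 2 → ℝ) (hs : s ≠ 0)
    (h : w 0 * s 1 - w 1 * s 0 = 0) : ∃ t : ℝ, w = t • s := by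
  have hs' : s 0 ≠ 0 ∨ s 1 ≠ 0 := by
    by_contra hc
    push_neg at hc
    apply hs
    ext i
    fin_cases i
    · exact hc.1
    · exact hc.2
  rcases hs' with h0 | h1
  · refine ⟨w 0 / s 0, ?_⟩
    ext i
    fin_cases i <;> simp only [Pi.smul_apply, smul_eq_mul]
    · field_simp
      rfl
    · field_simp
      simp only [Fin.zero_eta, Fin.mk_one] at *
      linarith
  · refine ⟨w 1 / s 1, ?_⟩
    ext i
    fin_cases i <;> simp only [Pi.smul_apply, smul_eq_mul]
    · field_simp
      simp only [Fin.zero_eta, Fin.mk_one] at *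
      linarith
    · field_simp
      rfl

private lemma lineShift {p s x : Fin 2 → ℝ} (t : ℝ) (hx : x ∈ lineThrough p s) :
    x + t • s ∈ lineThrough p s := by
  obtain ⟨t', ht'⟩ := hx
  exact ⟨t' + t, by rw [ht', add_smul]; abel⟩

set_option maxHeartbeats 1000000 in
/-- **Regular `2m`-gon construction (`ψ_{ℝ²}(m) ≤ m`):** the alternate vertices of a
regular `2m`-gon form two disjoint `m`-point sets with equal X-rays in the `m`
pairwise linearly independent edge directions. -/
theorem regular_polygon_switching (m : ℕ) (hm : 2 ≤ m)
    (v : ℕ → (Fin 2 → ℝ))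
    (hv : ∀ k : ℕ, v k = ![Real.cos (k * Real.pi / m), Real.sin (k * Real.pi / m)])
    (F F' : Set (Fin 2 → ℝ))
    (hF : F = v '' {k | k < 2 * m ∧ Even k})
    (hF' : F' = v '' {k | k < 2 * m ∧ Odd k})
    (u : ℕ → (Fin 2 → ℝ)) (hu : ∀ j : ℕ, u j = v (j + 1) - v j) :
    Disjoint F F' ∧ F.ncard = m ∧ F'.ncard = m ∧
    (∀ i j, i < m → j < m → i ≠ j → ∀ c : ℝ, u i ≠ c • u j) ∧
    (∀ j, j < m → EqualXraysR F F' (u j)) := by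
  have hm0 : (m : ℝ) ≠ 0 := Nat.cast_ne_zero.2 (by omega)
  have hmR : (2:ℝ) ≤ m := by exact_mod_cast hm
  have hπ : (0:ℝ) < π := Real.pi_pos
  have hcomp : ∀ k : ℕ, v k 0 = Real.cos (k * π / m) ∧ v k 1 = Real.sin (k * π / m) := by
    intro k
    rw [hv]
    constructor <;> simp
  -- injectivity of `v` on `[0, 2m)`
  have vinj : ∀ a b : ℕ, a < 2 * m → b < 2 * m → v a = v b → a = b := by
    intro a b ha hb hab
    have h0 : Real.cos (a * π / m) = Real.cos (b * π / m) := by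
      rw [← (hcomp a).1, ← (hcomp b).1, hab]
    have h1 : Real.sin (a * π / m) = Real.sin (b * π / m) := by
      rw [← (hcomp a).2, ← (hcomp b).2, hab]
    have hc1 : Real.cos (a * π / m - b * π / m) = 1 := by
      rw [Real.cos_sub, h0, h1]
      have := Real.sin_sq_add_cos_sq ((b:ℝ) * π / m)
      nlinarith [this]
    obtain ⟨z, hz⟩ := (Real.cos_eq_one_iff _).1 hc1
    have h2 : ((a:ℝ) - b) * π = ((2*m*z : ℤ) : ℝ) * π := by
      push_cast
      field_simp at hz
      nlinarith [hz]
    have h3 : ((a:ℝ) - b) = ((2*m*z : ℤ) : ℝ) := mul_right_cancel₀ hπ.ne' h2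
    have h4 : (a:ℤ) - b = 2*m*z := by exact_mod_cast h3
    have ha' : (a:ℤ) < 2*m := by exact_mod_cast ha
    have hb' : (b:ℤ) < 2*m := by exact_mod_cast hb
    have hm' : (2:ℤ) ≤ m := by exact_mod_cast hm
    have hz0 : z = 0 := by
      rcases lt_trichotomy z 0 with h | h | h
      · have h5 : z ≤ -1 := by omega
        have h6 : 2*(m:ℤ)*z ≤ 2*(m:ℤ)*(-1) := mul_le_mul_of_nonneg_left h5 (by omega)
        rw [← h4] at h6
        have hna : (0:ℤ) ≤ a := Int.ofNat_nonneg a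
        have hnb : (0:ℤ) ≤ b := Int.ofNat_nonneg b
        omega
      · exact h
      · have h5 : (1:ℤ) ≤ z := by omega
        have h6 : 2*(m:ℤ)*1 ≤ 2*(m:ℤ)*z := mul_le_mul_of_nonneg_left h5 (by omega)
        rw [← h4] at h6
        have hna : (0:ℤ) ≤ a := Int.ofNat_nonneg a
        have hnb : (0:ℤ) ≤ b := Int.ofNat_nonneg b
        omega
    rw [hz0] at h4
    omega
  -- cardinalities
  have hcardE : ({k | k < 2*m ∧ Even k} : Set ℕ).ncard = m := by
    have he : ({k | k < 2*m ∧ Even k} : Set ℕ) = (fun i => 2*i) '' Set.Iio m := by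
      ext k
      simp only [Set.mem_setOf_eq, Set.mem_image, Set.mem_Iio, Nat.even_iff]
      constructor
      · rintro ⟨h1, h2⟩
        exact ⟨k/2, by omega, by omega⟩
      · rintro ⟨i, hi, rfl⟩
        omega
    rw [he, Set.ncard_image_of_injective _ (fun a b h => by omega),
      ← Finset.coe_Iio, Set.ncard_coe_finset, Nat.card_Iio]
  have hcardO : ({k | k < 2*m ∧ Odd k} : Set ℕ).ncard = m := by
    have he : ({k | k < 2*m ∧ Odd k} : Set ℕ) = (fun i => 2*i+1) '' Set.Iio m := by
      ext k
      simp only [Set.mem_setOf_eq, Set.mem_image, Set.mem_Iio, Nat.odd_iff]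
      constructor
      · rintro ⟨h1, h2⟩
        exact ⟨k/2, by omega, by omega⟩
      · rintro ⟨i, hi, rfl⟩
        omega
    rw [he, Set.ncard_image_of_injective _ (fun a b h => by omega),
      ← Finset.coe_Iio, Set.ncard_coe_finset, Nat.card_Iio]
  refine ⟨?_, ?_, ?_, ?_, ?_⟩
  · -- disjointness
    rw [hF, hF', Set.disjoint_left]
    rintro x ⟨k, ⟨hk1, hk2⟩, rfl⟩ ⟨l, ⟨hl1, hl2⟩, hlk⟩
    have := vinj l k hl1 hk1 hlk
    rw [Nat.even_iff] at hk2
    rw [Nat.odd_iff] at hl2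
    omega
  · rw [hF, Set.ncard_image_of_injOn (fun a ha b hb hab => vinj a b ha.1 hb.1 hab), hcardE]
  · rw [hF', Set.ncard_image_of_injOn (fun a ha b hb hab => vinj a b ha.1 hb.1 hab), hcardO]
  · -- pairwise linear independence
    intro i j hi hj hij c hc
    have hcross0 : u i 0 * u j 1 - u i 1 * u j 0 = 0 := by
      rw [hc]
      simp only [Pi.smul_apply, smul_eq_mul]
      ring
    have e1 : u i 0 * u j 1 - u i 1 * u j 0
        = 4 * Real.sin ((↑(i+1) * π / ↑m - ↑i * π / ↑m) / 2)
            * Real.sin ((↑(j+1) * π / ↑m - ↑j * π / ↑m) / 2)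
            * Real.sin ((↑(j+1) * π / ↑m + ↑j * π / ↑m) / 2
                - (↑(i+1) * π / ↑m + ↑i * π / ↑m) / 2) := by
      rw [hu i, hu j]
      simp only [Pi.sub_apply]
      rw [(hcomp (i+1)).1, (hcomp i).1, (hcomp (i+1)).2, (hcomp i).2,
        (hcomp (j+1)).1, (hcomp j).1, (hcomp (j+1)).2, (hcomp j).2]
      exact crossTrig _ _ _ _
    have hA : ((↑(i+1) * π / ↑m - (↑i:ℝ) * π / ↑m) / 2) = π / (2*m) := by
      push_cast
      field_simp
      ring
    have hB : ((↑(j+1) * π / ↑m - (↑j:ℝ) * π / ↑m) / 2) = π / (2*m) := by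
      push_cast
      field_simp
      ring
    have hD : ((↑(j+1) * π / ↑m + (↑j:ℝ) * π / ↑m) / 2
        - (↑(i+1) * π / ↑m + ↑i * π / ↑m) / 2) = ((j:ℝ) - i) * π / m := by
      push_cast
      field_simp
      ring
    rw [hA, hB, hD] at e1
    have hs1 : 0 < Real.sin (π / (2*m)) := by
      apply Real.sin_pos_of_pos_of_lt_pi
      · positivity
      · rw [div_lt_iff₀ (by positivity)]
        nlinarith
    have hs2 : Real.sin (((j:ℝ) - i) * π / m) ≠ 0 := by
      intro h0
      obtain ⟨z, hz⟩ := Real.sin_eq_zero_iff.1 h0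
      have h2 : ((z*m : ℤ) : ℝ) * π = ((j:ℝ) - i) * π := by
        push_cast
        field_simp at hz
        nlinarith [hz]
      have h3 : ((z*m : ℤ) : ℝ) = ((j:ℝ) - i) := mul_right_cancel₀ hπ.ne' h2
      have h4 : z*(m:ℤ) = (j:ℤ) - i := by exact_mod_cast h3
      have hi' : (i:ℤ) < m := by exact_mod_cast hi
      have hj' : (j:ℤ) < m := by exact_mod_cast hj
      have hm' : (2:ℤ) ≤ m := by exact_mod_cast hm
      have hz0 : z = 0 := by
        rcases lt_trichotomy z 0 with h | h | h
        · have h5 : z ≤ -1 := by omega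
          have h6 : z*(m:ℤ) ≤ -1*(m:ℤ) := mul_le_mul_of_nonneg_right h5 (by omega)
          rw [h4] at h6
          have hni : (0:ℤ) ≤ i := Int.ofNat_nonneg i
          have hnj : (0:ℤ) ≤ j := Int.ofNat_nonneg j
          omega
        · exact h
        · have h5 : (1:ℤ) ≤ z := by omega
          have h6 : 1*(m:ℤ) ≤ z*(m:ℤ) := mul_le_mul_of_nonneg_right h5 (by omega)
          rw [h4] at h6
          have hni : (0:ℤ) ≤ i := Int.ofNat_nonneg i
          have hnj : (0:ℤ) ≤ j := Int.ofNat_nonneg j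
          omega
      rw [hz0] at h4
      simp at h4
      exact hij (by omega)
    rw [hcross0] at e1
    have : 4 * Real.sin (π / (2*m)) * Real.sin (π / (2*m))
        * Real.sin (((j:ℝ) - i) * π / m) ≠ 0 := by
      apply mul_ne_zero
      apply mul_ne_zero
      apply mul_ne_zero
      · norm_num
      · exact hs1.ne'
      · exact hs1.ne'
      · exact hs2
    exact this e1.symm
  · -- equal X-rays
    intro j hj p
    haveI : NeZero (2*m) := ⟨by omega⟩
    have hujne : u j ≠ 0 := by
      intro h
      rw [hu] at h
      have : v (j+1) = v j := by rwa [sub_eq_zero] at h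
      have := vinj (j+1) j (by omega) (by omega) this
      omega
    -- key: parallel pairs
    have hpar : ∀ a b : ℕ, (a + b) ≡ 2*j+1 [MOD 2*m] → ∃ t : ℝ, v a - v b = t • u j := by
      intro a b hab
      obtain ⟨z, hz⟩ := hab.dvd
      apply parallelOf _ _ hujne
      rw [hu]
      simp only [Pi.sub_apply]
      rw [(hcomp a).1, (hcomp b).1, (hcomp a).2, (hcomp b).2,
        (hcomp (j+1)).1, (hcomp j).1, (hcomp (j+1)).2, (hcomp j).2]
      rw [crossTrig]
      have hang : ((↑(j+1) * π / ↑m + (↑j:ℝ) * π / ↑m) / 2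
          - ((↑a:ℝ) * π / ↑m + (↑b:ℝ) * π / ↑m) / 2) = (z:ℝ) * π := by
        have hz' : (2*(j:ℝ)+1) - ((a:ℝ)+(b:ℝ)) = 2*m*z := by exact_mod_cast hz
        push_cast
        field_simp
        nlinarith [hz']
      rw [hang, Real.sin_int_mul_pi]
      ring
    have hline : ∀ a b : ℕ, (a + b) ≡ 2*j+1 [MOD 2*m] →
        (v a ∈ lineThrough p (u j) ↔ v b ∈ lineThrough p (u j)) := by
      intro a b hab
      obtain ⟨t, ht⟩ := hpar a b hab
      constructor
      · intro h
        have hb : v b = v a + (-t) • u j := by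
          rw [neg_smul, ← ht]
          abel
        rw [hb]
        exact lineShift _ h
      · intro h
        have ha' : v a = v b + t • u j := by
          rw [← ht]
          abel
        rw [ha']
        exact lineShift _ h
    set L := lineThrough p (u j) with hL
    set σ : ℕ → ℕ := fun k => (((2*j+1 : ℕ) : ZMod (2*m)) - (k : ZMod (2*m))).val with hσ
    have hσlt : ∀ k, σ k < 2*m := fun k => ZMod.val_lt _
    have hσval : ∀ k : ℕ, ((σ k : ℕ) : ZMod (2*m)) = ((2*j+1 : ℕ) : ZMod (2*m)) - k := by
      intro k
      simp [hσ, ZMod.natCast_val, ZMod.cast_id]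
    have hσc : ∀ k : ℕ, (k + σ k) ≡ 2*j+1 [MOD 2*m] := by
      intro k
      rw [← ZMod.natCast_eq_natCast_iff]
      push_cast [hσval]
      ring
    have hσσ : ∀ k, k < 2*m → σ (σ k) = k := by
      intro k hk
      have : σ (σ k) = ((((2*j+1 : ℕ) : ZMod (2*m)) - ((σ k : ℕ) : ZMod (2*m))).val) := rfl
      rw [this, hσval, sub_sub_cancel, ZMod.val_cast_of_lt hk]
    have hσpar : ∀ k, (k + σ k) % 2 = 1 := by
      intro k
      have h2 := Nat.ModEq.of_dvd (dvd_mul_right 2 m) (hσc k)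
      simp only [Nat.ModEq] at h2
      omega
    set S : Set ℕ := {k | k < 2*m ∧ Even k} ∩ v ⁻¹' L with hSd
    set T : Set ℕ := {k | k < 2*m ∧ Odd k} ∩ v ⁻¹' L with hTd
    have injS : Set.InjOn v S := fun a ha b hb hab => vinj a b ha.1.1 hb.1.1 hab
    have injT : Set.InjOn v T := fun a ha b hb hab => vinj a b ha.1.1 hb.1.1 hab
    have injσ : Set.InjOn σ S := by
      intro a ha b hb hab
      have := congrArg σ hab
      rwa [hσσ a ha.1.1, hσσ b hb.1.1] at this
    have hmemS : ∀ k, k ∈ S ↔ (k < 2*m ∧ Even k) ∧ v k ∈ L := by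
      intro k
      simp [hSd, Set.mem_inter_iff, Set.mem_preimage]
    have hmemT : ∀ k, k ∈ T ↔ (k < 2*m ∧ Odd k) ∧ v k ∈ L := by
      intro k
      simp [hTd, Set.mem_inter_iff, Set.mem_preimage]
    have him : σ '' S = T := by
      ext l
      constructor
      · rintro ⟨k, hk, rfl⟩
        obtain ⟨⟨hk1, hk2⟩, hk3⟩ := (hmemS k).1 hk
        refine (hmemT (σ k)).2 ⟨⟨hσlt k, ?_⟩, ?_⟩
        · rw [Nat.odd_iff]
          rw [Nat.even_iff] at hk2
          have := hσpar k
          omega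
        · exact (hline k (σ k) (hσc k)).1 hk3
      · intro hl
        obtain ⟨⟨hl1, hl2⟩, hl3⟩ := (hmemT l).1 hl
        refine ⟨σ l, (hmemS (σ l)).2 ⟨⟨hσlt l, ?_⟩, ?_⟩, hσσ l hl1⟩
        · rw [Nat.even_iff]
          rw [Nat.odd_iff] at hl2
          have := hσpar l
          omega
        · exact (hline l (σ l) (hσc l)).1 hl3
    have hFL : (F ∩ L).ncard = S.ncard := by
      rw [hF, ← Set.image_inter_preimage, ← hSd, Set.ncard_image_of_injOn injS]
    have hFL' : (F' ∩ L).ncard = T.ncard := by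
      rw [hF', ← Set.image_inter_preimage, ← hTd, Set.ncard_image_of_injOn injT]
    rw [hFL, hFL', ← him, Set.ncard_image_of_injOn injσ]
end

section
/- (Corollary: ψ_{ℝ²}(m) = m.) For every m ≥ 2: (a) there exist m pairwise linearly independent nonzero directions in ℝ² and two distinct m-point sets F, F' ⊆ ℝ² with equal X-rays in each of these directions; and (b) whenever F, F' ⊆ ℝ² are distinct finite sets with |F| = |F'| = n having equal X-rays in m pairwise linearly independent nonzero directions, then n ≥ m. Hence the minimum cardinality n for which two distinct n-point sets in ℝ² with equal X-rays in some m pairwise linearly independent directions exist equals m. -/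
/-- A family of vectors is pairwise linearly independent if no one of them is a
scalar multiple of another. -/
def PairwiseLinIndepR {d m : ℕ} (s : Fin m → (Fin d → ℝ)) : Prop :=
  ∀ i j, i ≠ j → ∀ c : ℝ, s i ≠ c • s j

open Complex Set

noncomputable def cE : ℂ ≃ₗ[ℝ] (Fin 2 → ℝ) := Complex.basisOneI.equivFun

/-- Lines in ℂ. -/
def cLine (p s : ℂ) : Set ℂ := {x | ∃ t : ℝ, x = p + t • s}

lemma cE_line (p s : ℂ) : lineThrough (cE p) (cE s) = cE '' cLine p s := by
  ext x
  constructor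
  · rintro ⟨t, rfl⟩
    exact ⟨p + t • s, ⟨t, rfl⟩, by rw [map_add, map_smul]⟩
  · rintro ⟨y, ⟨t, rfl⟩, rfl⟩
    exact ⟨t, by rw [map_add, map_smul]⟩

lemma cLine_congr {p q s : ℂ} (h : q ∈ cLine p s) : cLine q s = cLine p s := by
  obtain ⟨r, rfl⟩ := h
  ext x
  constructor
  · rintro ⟨t, rfl⟩; exact ⟨r + t, by module⟩
  · rintro ⟨t, rfl⟩; exact ⟨t - r, by module⟩

lemma refl_invol {u : ℂ} (hu : u * (starRingEnd ℂ) u = 1) (z : ℂ) :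
    u * u * (starRingEnd ℂ) (u * u * (starRingEnd ℂ) z) = z := by
  simp only [map_mul, Complex.conj_conj]
  calc u * u * ((starRingEnd ℂ) u * (starRingEnd ℂ) u * z)
      = (u * (starRingEnd ℂ) u) * (u * (starRingEnd ℂ) u) * z := by ring
    _ = z := by rw [hu]; ring

lemma refl_neg_s {u : ℂ} (hu : u * (starRingEnd ℂ) u = 1) :
    u * u * (starRingEnd ℂ) (I * u) = -(I * u) := by
  simp only [map_mul, Complex.conj_I]
  calc u * u * (-I * (starRingEnd ℂ) u) = -(I * u) * (u * (starRingEnd ℂ) u) := by ring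
    _ = -(I * u) := by rw [hu]; ring

lemma refl_mem_line {u : ℂ} (hu : u * (starRingEnd ℂ) u = 1) (p : ℂ) :
    u * u * (starRingEnd ℂ) p ∈ cLine p (I * u) := by
  set w : ℂ := (starRingEnd ℂ) u * p with hw
  refine ⟨-(2 * w.im), ?_⟩
  have h1 : (starRingEnd ℂ) w - w = -(((2 * w.im : ℝ) : ℂ) * I) := by
    linear_combination - Complex.sub_conj w
  have h2 : u * u * (starRingEnd ℂ) p - p = u * ((starRingEnd ℂ) w - w) := by
    rw [hw]
    simp only [map_mul, Complex.conj_conj]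
    calc u * u * (starRingEnd ℂ) p - p
        = u * (u * (starRingEnd ℂ) p) - (u * (starRingEnd ℂ) u) * p := by rw [hu]; ring
      _ = u * (u * (starRingEnd ℂ) p - (starRingEnd ℂ) u * p) := by ring
  rw [Complex.real_smul]
  push_cast at h1 ⊢
  linear_combination h2 + u * h1

lemma refl_add_smul {u : ℂ} (hu : u * (starRingEnd ℂ) u = 1) (q : ℂ) (t : ℝ) :
    u * u * (starRingEnd ℂ) (q + t • (I * u)) = u * u * (starRingEnd ℂ) q + (-t) • (I * u) := by
  rw [Complex.real_smul, Complex.real_smul]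
  simp only [map_add, map_mul, Complex.conj_ofReal, Complex.conj_I]
  push_cast
  linear_combination (-(t : ℂ) * I * u) * hu

lemma refl_image_line {u : ℂ} (hu : u * (starRingEnd ℂ) u = 1) (q : ℂ) :
    (fun z => u * u * (starRingEnd ℂ) z) '' cLine q (I * u)
      = cLine (u * u * (starRingEnd ℂ) q) (I * u) := by
  ext x
  constructor
  · rintro ⟨y, ⟨t, rfl⟩, rfl⟩
    exact ⟨-t, refl_add_smul hu q t⟩
  · rintro ⟨t, rfl⟩
    refine ⟨u * u * (starRingEnd ℂ) (u * u * (starRingEnd ℂ) q + t • (I * u)), ⟨-t, ?_⟩,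
      refl_invol hu _⟩
    rw [refl_add_smul hu, refl_invol hu]

lemma xray_refl {u : ℂ} (hu : u * (starRingEnd ℂ) u = 1) {F F' : Set ℂ}
    (hAF : (fun z => u * u * (starRingEnd ℂ) z) '' F = F') (p : ℂ) :
    (F ∩ cLine p (I * u)).ncard = (F' ∩ cLine p (I * u)).ncard := by
  set A : ℂ → ℂ := fun z => u * u * (starRingEnd ℂ) z with hA
  have hinv : Function.LeftInverse A A := fun z => refl_invol hu z
  have hinj : Function.Injective A := hinv.injective
  have himg : A '' (F ∩ cLine (A p) (I * u)) = F' ∩ cLine p (I * u) := by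
    rw [Set.image_inter hinj, hAF, refl_image_line hu, refl_invol hu p]
  have hline : cLine (A p) (I * u) = cLine p (I * u) := cLine_congr (refl_mem_line hu p)
  rw [← himg, Set.ncard_image_of_injective _ hinj, hline]

lemma xray_transfer {F F' : Set ℂ} {s : ℂ}
    (h : ∀ p : ℂ, (F ∩ cLine p s).ncard = (F' ∩ cLine p s).ncard) :
    EqualXraysR (cE '' F) (cE '' F') (cE s) := by
  intro q
  have hq : q = cE (cE.symm q) := (cE.apply_symm_apply q).symm
  rw [hq, cE_line, ← Set.image_inter cE.injective, ← Set.image_inter cE.injective,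
    Set.ncard_image_of_injective _ cE.injective, Set.ncard_image_of_injective _ cE.injective]
  exact h _

lemma keyB {m : ℕ} (s : Fin m → (Fin 2 → ℝ)) (hind : PairwiseLinIndepR s)
    (F F' : Set (Fin 2 → ℝ)) (hF : F.Finite) (hF' : F'.Finite)
    (hxr : ∀ i, EqualXraysR F F' (s i)) {u : Fin 2 → ℝ} (hu : u ∈ F) (hu' : u ∉ F') :
    m ≤ F'.ncard := by
  have hex : ∀ i, (F' ∩ lineThrough u (s i)).Nonempty := by
    intro i
    apply Set.nonempty_of_ncard_ne_zero
    rw [← hxr i u]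
    have hne : (F ∩ lineThrough u (s i)).Nonempty := ⟨u, hu, ⟨0, by simp⟩⟩
    exact ((Set.ncard_pos (hF.inter_of_left _)).mpr hne).ne'
  choose v hv using hex
  have hvinj : Function.Injective v := by
    intro i j hij
    by_contra hne
    obtain ⟨t, ht⟩ := (hv i).2
    obtain ⟨t', ht'⟩ := (hv j).2
    have ht0 : t ≠ 0 := by
      rintro rfl
      apply hu'
      have : v i = u := by simpa using ht
      exact this ▸ (hv i).1
    have hst : t • s i = t' • s j := by
      have := ht.symm.trans (hij ▸ ht')
      exact add_left_cancel this
    refine hind i j hne (t⁻¹ * t') ?_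
    rw [mul_smul, ← hst, smul_smul, inv_mul_cancel₀ ht0, one_smul]
  have hsub : Set.range v ⊆ F' := by
    rintro x ⟨i, rfl⟩; exact (hv i).1
  calc m = (Set.range v).ncard := by
        rw [← Set.image_univ, Set.ncard_image_of_injective _ hvinj, Set.ncard_univ,
          Nat.card_eq_fintype_card, Fintype.card_fin]
    _ ≤ F'.ncard := Set.ncard_le_ncard hsub hF'

noncomputable def cth (m c : ℕ) : ℝ := Real.pi * (2 * c + 1) / (2 * m)

noncomputable def cu (m c : ℕ) : ℂ := Complex.exp ((cth m c : ℝ) * I)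

lemma cu_unit (m c : ℕ) : cu m c * (starRingEnd ℂ) (cu m c) = 1 := by
  rw [cu, ← Complex.exp_conj, ← Complex.exp_add]
  have : ((cth m c : ℝ) : ℂ) * I + (starRingEnd ℂ) (((cth m c : ℝ) : ℂ) * I) = 0 := by
    rw [map_mul, Complex.conj_ofReal, Complex.conj_I]; ring
  rw [this, Complex.exp_zero]

lemma cu_pow (m : ℕ) (hm : m ≠ 0) (c : ℕ) : (cu m c * cu m c) ^ m = -1 := by
  have hm' : (m : ℂ) ≠ 0 := Nat.cast_ne_zero.mpr hm
  rw [cu, ← Complex.exp_add, ← Complex.exp_nat_mul]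
  have h1 : (m : ℂ) * ((cth m c : ℝ) * I + (cth m c : ℝ) * I)
      = ((2 * c + 1 : ℕ) : ℂ) * ((Real.pi : ℂ) * I) := by
    rw [cth]
    push_cast
    field_simp
    ring
  rw [h1, Complex.exp_nat_mul, Complex.exp_pi_mul_I]
  exact Odd.neg_one_pow ⟨c, by ring⟩

/-- The `m`-th roots of unity. -/
def rootsF (m : ℕ) : Set ℂ := {z : ℂ | z ^ m = 1}

/-- The `m`-th roots of `-1`. -/
def rootsF' (m : ℕ) : Set ℂ := {z : ℂ | z ^ m = -1}

lemma refl_image_rootsF (m : ℕ) (hm : m ≠ 0) (c : ℕ) :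
    (fun z => cu m c * cu m c * (starRingEnd ℂ) z) '' rootsF m = rootsF' m := by
  ext w
  simp only [Set.mem_image, rootsF, rootsF', Set.mem_setOf_eq]
  constructor
  · rintro ⟨z, hz, rfl⟩
    rw [mul_pow, cu_pow m hm c, ← map_pow, hz, map_one, mul_one]
  · intro hw
    refine ⟨cu m c * cu m c * (starRingEnd ℂ) w, ?_, refl_invol (cu_unit m c) w⟩
    rw [mul_pow, cu_pow m hm c, ← map_pow, hw, map_neg, map_one]
    ring

lemma rootsF_eq_finset (m : ℕ) (hm : m ≠ 0) :
    rootsF m = ↑(Polynomial.nthRootsFinset m (1 : ℂ)) := by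
  ext z
  rw [rootsF, Set.mem_setOf_eq, Finset.mem_coe,
    Polynomial.mem_nthRootsFinset (Nat.pos_of_ne_zero hm)]

lemma rootsF_finite (m : ℕ) (hm : m ≠ 0) : (rootsF m).Finite := by
  rw [rootsF_eq_finset m hm]; exact (Polynomial.nthRootsFinset m (1 : ℂ)).finite_toSet

lemma rootsF_ncard (m : ℕ) (hm : m ≠ 0) : (rootsF m).ncard = m := by
  rw [rootsF_eq_finset m hm, Set.ncard_coe_finset]
  exact (Complex.isPrimitiveRoot_exp m hm).card_nthRootsFinset

/-- **Corollary (`ψ_{ℝ²}(m) = m`):** (a) there exist `m` pairwise linearly independent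
directions and two distinct `m`-point sets in `ℝ²` with equal X-rays in these
directions, and (b) any two distinct `n`-point sets with equal X-rays in `m` pairwise
linearly independent directions satisfy `n ≥ m`. -/
theorem psi_R2_eq (m : ℕ) (hm : 2 ≤ m) :
    (∃ s : Fin m → (Fin 2 → ℝ), (∀ i, s i ≠ 0) ∧ PairwiseLinIndepR s ∧
      ∃ F F' : Set (Fin 2 → ℝ), F.Finite ∧ F'.Finite ∧ F ≠ F' ∧
        F.ncard = m ∧ F'.ncard = m ∧ ∀ i, EqualXraysR F F' (s i)) ∧
    (∀ n : ℕ, ∀ s : Fin m → (Fin 2 → ℝ), (∀ i, s i ≠ 0) → PairwiseLinIndepR s →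
      ∀ F F' : Set (Fin 2 → ℝ), F.Finite → F'.Finite → F ≠ F' →
        F.ncard = n → F'.ncard = n → (∀ i, EqualXraysR F F' (s i)) → m ≤ n) := by
  have hm0 : m ≠ 0 := by omega
  constructor
  · -- part (a)
    set A0 : ℂ → ℂ := fun z => cu m 0 * cu m 0 * (starRingEnd ℂ) z with hA0
    have hA0li : Function.LeftInverse A0 A0 := fun z => refl_invol (cu_unit m 0) z
    have hA0inj : Function.Injective A0 := hA0li.injective
    have hF'img : rootsF' m = A0 '' rootsF m := (refl_image_rootsF m hm0 0).symm
    have hFfin : (rootsF m).Finite := rootsF_finite m hm0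
    have hF'fin : (rootsF' m).Finite := hF'img ▸ hFfin.image A0
    have hF'card : (rootsF' m).ncard = m := by
      rw [hF'img, Set.ncard_image_of_injective _ hA0inj, rootsF_ncard m hm0]
    refine ⟨fun c => cE (I * cu m c), ?_, ?_, cE '' rootsF m, cE '' rootsF' m,
      hFfin.image _, hF'fin.image _, ?_, ?_, ?_, ?_⟩
    · intro i
      rw [Ne, LinearEquiv.map_eq_zero_iff]
      exact mul_ne_zero Complex.I_ne_zero (Complex.exp_ne_zero _)
    · -- pairwise linear independence
      intro i j hij c hc
      rw [← map_smul] at hc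
      have h1 := cE.injective hc
      rw [Complex.real_smul] at h1
      have h2 : cu m i = (c : ℂ) * cu m j :=
        mul_left_cancel₀ Complex.I_ne_zero (by linear_combination h1)
      have h3 : Complex.exp (((cth m i - cth m j : ℝ)) * I) = (c : ℂ) := by
        apply mul_right_cancel₀ (Complex.exp_ne_zero (((cth m j : ℝ)) * I))
        rw [← Complex.exp_add]
        have he : ((cth m i - cth m j : ℝ) : ℂ) * I + ((cth m j : ℝ) : ℂ) * I
            = ((cth m i : ℝ) : ℂ) * I := by push_cast; ring
        rw [he]
        exact h2
      have h4 : Real.sin (cth m i - cth m j) = 0 := by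
        have := congrArg Complex.im h3
        rwa [Complex.exp_ofReal_mul_I_im, Complex.ofReal_im] at this
      obtain ⟨k, hk⟩ := Real.sin_eq_zero_iff.mp h4
      have hmR : (m : ℝ) ≠ 0 := Nat.cast_ne_zero.mpr hm0
      have hπ : Real.pi ≠ 0 := Real.pi_ne_zero
      have hk' : (k : ℝ) * m = (i : ℕ) - (j : ℕ) := by
        rw [cth, cth] at hk
        field_simp at hk
        nlinarith [hk, Real.pi_pos]
      have hiabs : |((i : ℕ) : ℝ) - ((j : ℕ) : ℝ)| < m := by
        rw [abs_lt]
        constructor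
        · have : ((j : ℕ) : ℝ) < m := by exact_mod_cast j.isLt
          have h0 : (0 : ℝ) ≤ ((i : ℕ) : ℝ) := Nat.cast_nonneg _
          linarith
        · have : ((i : ℕ) : ℝ) < m := by exact_mod_cast i.isLt
          have h0 : (0 : ℝ) ≤ ((j : ℕ) : ℝ) := Nat.cast_nonneg _
          linarith
      have hk0 : k = 0 := by
        by_contra hk0
        have habs : (1 : ℤ) ≤ |k| := by
          rcases lt_or_gt_of_ne hk0 with h | h
          · rw [abs_of_neg h]; omega
          · rw [abs_of_pos h]; omega
        have h1le : (1 : ℝ) ≤ |(k : ℝ)| := by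
          calc (1 : ℝ) ≤ ((|k| : ℤ) : ℝ) := by exact_mod_cast habs
            _ = |(k : ℝ)| := Int.cast_abs
        have hmpos : (0 : ℝ) < m := by positivity
        have : (m : ℝ) ≤ |(k : ℝ) * m| := by
          rw [abs_mul, abs_of_pos hmpos]
          nlinarith
        rw [hk'] at this
        linarith
      rw [hk0] at hk'
      push_cast at hk'
      have hreal : ((i : ℕ) : ℝ) = ((j : ℕ) : ℝ) := by linarith
      have : (i : ℕ) = (j : ℕ) := by exact_mod_cast hreal
      exact hij (Fin.ext this)
    · -- F ≠ F'
      intro h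
      have h2 := (Set.image_eq_image cE.injective).mp h
      have h1 : (1 : ℂ) ∈ rootsF m := by simp [rootsF]
      rw [h2] at h1
      simp only [rootsF', Set.mem_setOf_eq, one_pow] at h1
      norm_num at h1
    · rw [Set.ncard_image_of_injective _ cE.injective, rootsF_ncard m hm0]
    · rw [Set.ncard_image_of_injective _ cE.injective, hF'card]
    · intro c
      exact xray_transfer (fun p => xray_refl (cu_unit m c) (refl_image_rootsF m hm0 c) p)
  · -- part (b)
    intro n s hs0 hind F F' hF hF' hne hcF hcF' hxr
    by_cases hd : (F \ F').Nonempty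
    · obtain ⟨u, huF, huF'⟩ := hd
      have := keyB s hind F F' hF hF' hxr huF huF'
      omega
    · have hsub : F ⊆ F' := by
        rwa [Set.not_nonempty_iff_eq_empty, Set.diff_eq_empty] at hd
      exact absurd (Set.eq_of_subset_of_ncard_le hsub (by omega) hF') hne
end

section
/- (Corollary 2: solutions of the two-dimensional Prouhet–Tarry–Escott problem of polynomial size.) For every ε > 0 there exists a constant C > 0 such that for every k ∈ ℕ there is a solution of (PTE₂) of degree k and size n ≤ C · k^{3+ε}; that is, there exist n ≤ C·k^{3+ε} and two different multisets {x_1,…,x_n}, {y_1,…,y_n} of points of ℤ², with x_i = (ξ_{i1}, ξ_{i2}) and y_i = (η_{i1}, η_{i2}), such that ∑_{i=1}^n ξ_{i1}^{j_1} ξ_{i2}^{j_2} = ∑_{i=1}^n η_{i1}^{j_1} η_{i2}^{j_2} for all nonnegative integers j_1, j_2 with j_1 + j_2 ≤ k. -/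
lemma pte2_aux1 (b k : ℕ) (hb : 1 ≤ b) (hk : 1 ≤ k) :
    (k + 1) ^ 2 * (8 * b * k + 4 * b + 7) + 1 ≤ 77 * b * k ^ 3 := by
  have e1 : (k + 1) ^ 2 ≤ 4 * k ^ 2 := by
    calc (k + 1) ^ 2 ≤ (2 * k) ^ 2 := Nat.pow_le_pow_left (by omega) 2
      _ = 4 * k ^ 2 := by ring
  have e2 : 8 * b * k + 4 * b + 7 ≤ 19 * (b * k) := by nlinarith
  have e3 : 1 ≤ b * k ^ 3 := Nat.one_le_iff_ne_zero.mpr (by positivity)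
  calc (k + 1) ^ 2 * (8 * b * k + 4 * b + 7) + 1
      ≤ 4 * k ^ 2 * (19 * (b * k)) + 1 := Nat.add_le_add_right (Nat.mul_le_mul e1 e2) 1
    _ = 76 * (b * k ^ 3) + 1 := by ring
    _ ≤ 76 * (b * k ^ 3) + b * k ^ 3 := by omega
    _ = 77 * b * k ^ 3 := by ring

/-- Key combinatorial lemma: pigeonhole on subsets of a grid gives a PTE₂
solution of size at most `77 * (log₂ k + 1) * k^3`. -/
lemma pte2_key (k : ℕ) (hk : 1 ≤ k) :
    ∃ n : ℕ, n ≤ 77 * (Nat.log 2 k + 1) * k ^ 3 ∧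
      ∃ x y : Fin n → ℤ × ℤ,
        Multiset.map x Finset.univ.val ≠ Multiset.map y Finset.univ.val ∧
        ∀ j₁ j₂ : ℕ, j₁ + j₂ ≤ k →
          ∑ i, (x i).1 ^ j₁ * (x i).2 ^ j₂ = ∑ i, (y i).1 ^ j₁ * (y i).2 ^ j₂ := by
  classical
  set b : ℕ := Nat.log 2 k + 1 with hbdef
  set L : ℕ := 2 ^ (8 * b) with hLdef
  set M : ℕ := (k + 1) ^ 2 * (8 * b * k + 4 * b + 7) + 1 with hMdef
  set R : ℕ := M * L ^ k + 1 with hRdef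
  have hb1 : 1 ≤ b := Nat.le_add_left 1 _
  have hk2b : k + 1 ≤ 2 ^ b := Nat.lt_pow_succ_log_self (by norm_num) k
  have hbk : b ≤ k := by
    have := Nat.log_lt_self 2 (x := k) (by omega)
    omega
  -- M ≤ 2 ^ (4b + 6)
  have hMle : M ≤ 2 ^ (4 * b + 6) := by
    have h1 : (k + 1) ^ 2 ≤ 2 ^ (2 * b) := by
      rw [two_mul, pow_add]
      calc (k+1)^2 = (k+1) * (k+1) := sq (k+1) ▸ rfl
        _ ≤ 2 ^ b * 2 ^ b := Nat.mul_le_mul hk2b hk2b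
    have h2 : 8 * b * k + 4 * b + 7 ≤ 2 ^ (2 * b + 5) := by
      have hkk : k ≤ 2 ^ b := by omega
      have : 8 * b * k + 4 * b + 7 ≤ 19 * (k * k) := by nlinarith [hbk, hk, hb1]
      calc 8 * b * k + 4 * b + 7 ≤ 19 * (k * k) := this
        _ ≤ 32 * (2 ^ b * 2 ^ b) := by
            have := Nat.mul_le_mul hkk hkk
            nlinarith
        _ = 2 ^ (2 * b + 5) := by rw [pow_add, two_mul, pow_add]; ring
    calc M ≤ 2 ^ (2*b) * 2 ^ (2*b+5) + 1 := by
          exact Nat.add_le_add_right (Nat.mul_le_mul h1 h2) 1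
      _ = 2 ^ (4*b+5) + 1 := by rw [← pow_add]; ring_nf
      _ ≤ 2 ^ (4*b+6) := by
          have h1 : 1 ≤ (2:ℕ) ^ (4*b+5) := Nat.one_le_two_pow
          have h2 : (2:ℕ) ^ (4*b+6) = 2 ^ (4*b+5) * 2 := by
            rw [show 4*b+6 = (4*b+5)+1 by ring, pow_succ]
          omega
  -- choose the point set P
  have hgrid : M ≤ (Finset.range L ×ˢ Finset.range L).card := by
    rw [Finset.card_product, Finset.card_range]
    calc M ≤ 2 ^ (4*b+6) := hMle
      _ ≤ 2 ^ (8*b) * 2 ^ (8*b) := by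
          rw [← pow_add]
          exact Nat.pow_le_pow_right (by norm_num) (by omega)
      _ = L * L := rfl
  obtain ⟨P, hPsub, hPcard⟩ := Finset.exists_subset_card_eq hgrid
  -- index set of exponents
  set J : Finset (ℕ × ℕ) :=
    (Finset.range (k+1) ×ˢ Finset.range (k+1)).filter (fun j => j.1 + j.2 ≤ k) with hJdef
  have hJcard : J.card ≤ (k+1)^2 := by
    calc J.card ≤ ((Finset.range (k+1) ×ˢ Finset.range (k+1))).card :=
          Finset.card_filter_le _ _
      _ = (k+1)^2 := by rw [Finset.card_product, Finset.card_range]; ring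
  -- moment bound
  have hmombound : ∀ S : Finset (ℕ × ℕ), S ⊆ P → ∀ j₁ j₂ : ℕ, j₁ + j₂ ≤ k →
      (∑ p ∈ S, p.1 ^ j₁ * p.2 ^ j₂) < R := by
    intro S hS j₁ j₂ hj
    have hterm : ∀ p ∈ S, p.1 ^ j₁ * p.2 ^ j₂ ≤ L ^ k := by
      intro p hp
      have hpP := hPsub (hS hp)
      rw [Finset.mem_product, Finset.mem_range, Finset.mem_range] at hpP
      calc p.1 ^ j₁ * p.2 ^ j₂ ≤ L ^ j₁ * L ^ j₂ :=
            Nat.mul_le_mul (Nat.pow_le_pow_left hpP.1.le _) (Nat.pow_le_pow_left hpP.2.le _)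
        _ = L ^ (j₁ + j₂) := (pow_add L j₁ j₂).symm
        _ ≤ L ^ k := Nat.pow_le_pow_right (Nat.one_le_two_pow) hj
    calc (∑ p ∈ S, p.1 ^ j₁ * p.2 ^ j₂) ≤ ∑ _p ∈ S, L ^ k := Finset.sum_le_sum hterm
      _ = S.card * L ^ k := by rw [Finset.sum_const, smul_eq_mul]
      _ ≤ M * L ^ k := Nat.mul_le_mul_right _ (hPcard ▸ Finset.card_le_card hS)
      _ < R := Nat.lt_succ_self _
  -- pigeonhole
  have hcards : Fintype.card (J → Fin R) < Fintype.card {S // S ∈ P.powerset} := by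
    rw [Fintype.card_fun, Fintype.card_coe, Fintype.card_coe, Finset.card_powerset, hPcard,
      Fin.fintype, Fintype.card_fin]
    have hR2 : R ≤ 2 ^ (8*b*k + 4*b + 7) := by
      calc R = M * L ^ k + 1 := rfl
        _ ≤ 2 ^ (4*b+6) * (2 ^ (8*b)) ^ k + 1 := by
            exact Nat.add_le_add_right (Nat.mul_le_mul_right _ hMle) 1
        _ = 2 ^ (8*b*k + 4*b + 6) + 1 := by rw [← pow_mul, ← pow_add]; ring_nf
        _ ≤ 2 ^ (8*b*k + 4*b + 7) := by
            have h1 : 1 ≤ (2:ℕ) ^ (8*b*k+4*b+6) := Nat.one_le_two_pow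
            have h2 : (2:ℕ) ^ (8*b*k+4*b+7) = 2 ^ (8*b*k+4*b+6) * 2 := by
              rw [show 8*b*k+4*b+7 = (8*b*k+4*b+6)+1 by ring, pow_succ]
            omega
    calc R ^ J.card ≤ (2 ^ (8*b*k+4*b+7)) ^ J.card := Nat.pow_le_pow_left hR2 _
      _ = 2 ^ ((8*b*k+4*b+7) * J.card) := by rw [← pow_mul]
      _ < 2 ^ M := by
          apply Nat.pow_lt_pow_right (by norm_num)
          calc (8*b*k+4*b+7) * J.card ≤ (8*b*k+4*b+7) * (k+1)^2 :=
                Nat.mul_le_mul_left _ hJcard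
            _ < M := by rw [hMdef]; nlinarith
  obtain ⟨S, T, hST, hfST⟩ := Fintype.exists_ne_map_eq_of_card_lt
    (fun (S : {S // S ∈ P.powerset}) (j : ↥J) =>
      (⟨∑ p ∈ S.1, p.1 ^ (j : ℕ × ℕ).1 * p.2 ^ (j : ℕ × ℕ).2,
        hmombound S.1 (Finset.mem_powerset.mp S.2) _ _ (Finset.mem_filter.mp j.2).2⟩ : Fin R))
    hcards
  have hmom : ∀ j₁ j₂ : ℕ, j₁ + j₂ ≤ k →
      (∑ p ∈ S.1, p.1 ^ j₁ * p.2 ^ j₂) = ∑ p ∈ T.1, p.1 ^ j₁ * p.2 ^ j₂ := by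
    intro j₁ j₂ hj
    have hjJ : (j₁, j₂) ∈ J := by
      rw [hJdef, Finset.mem_filter, Finset.mem_product, Finset.mem_range, Finset.mem_range]
      exact ⟨⟨by omega, by omega⟩, hj⟩
    have h := congrFun hfST ⟨(j₁, j₂), hjJ⟩
    simpa using h
  have hcardeq : T.1.card = S.1.card := by
    have h0 := hmom 0 0 (by omega)
    simpa using h0.symm
  refine ⟨S.1.card, ?_, ?_⟩
  · -- size bound
    have h1 : S.1.card ≤ M := hPcard ▸ Finset.card_le_card (Finset.mem_powerset.mp S.2)
    have h2 : M ≤ 77 * b * k ^ 3 := by rw [hMdef]; exact pte2_aux1 b k hb1 hk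
    omega
  -- construction of x and y
  set g : ℕ × ℕ → ℤ × ℤ := fun p => ((p.1 : ℤ), (p.2 : ℤ)) with hgdef
  have hginj : Function.Injective g := by
    intro p q h
    rw [hgdef] at h
    simp only [Prod.mk.injEq] at h
    exact Prod.ext (by exact_mod_cast h.1) (by exact_mod_cast h.2)
  set eS : (S.1 : Finset (ℕ × ℕ)) ≃ Fin S.1.card := S.1.equivFin with heS
  set eT : (T.1 : Finset (ℕ × ℕ)) ≃ Fin S.1.card := T.1.equivFin.trans (finCongr hcardeq)
    with heT
  have hmapval : ∀ (A : Finset (ℕ × ℕ)) (e : (A : Finset (ℕ × ℕ)) ≃ Fin S.1.card),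
      Multiset.map (fun i => g ((e.symm i : A) : ℕ × ℕ)) Finset.univ.val = A.val.map g := by
    intro A e
    have h1 : (Finset.univ : Finset (Fin S.1.card)).val.map
        (fun i => g ((e.symm i : A) : ℕ × ℕ))
        = ((Finset.univ : Finset (Fin S.1.card)).val.map e.symm).map
            (fun s : A => g (s : ℕ × ℕ)) := by
      rw [Multiset.map_map]
      rfl
    rw [h1]
    have h2 : (Finset.univ : Finset (Fin S.1.card)).val.map e.symm
        = (Finset.univ : Finset A).val := by
      have := Finset.map_univ_equiv e.symm
      rw [← this, Finset.map_val, Equiv.coe_toEmbedding]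
    rw [h2, Finset.univ_eq_attach, Finset.attach_val]
    exact Multiset.attach_map_val' A.val g
  refine ⟨fun i => g ((eS.symm i : S.1) : ℕ × ℕ), fun i => g ((eT.symm i : T.1) : ℕ × ℕ),
    ?_, ?_⟩
  · intro hcontra
    rw [hmapval S.1 eS, hmapval T.1 eT] at hcontra
    exact hST (Subtype.ext (Finset.val_inj.mp (Multiset.map_injective hginj hcontra)))
  · intro j₁ j₂ hj
    have key : ∀ (A : Finset (ℕ × ℕ)) (e : (A : Finset (ℕ × ℕ)) ≃ Fin S.1.card),
        ∑ i, (g ((e.symm i : A) : ℕ × ℕ)).1 ^ j₁ * (g ((e.symm i : A) : ℕ × ℕ)).2 ^ j₂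
          = ((∑ p ∈ A, p.1 ^ j₁ * p.2 ^ j₂ : ℕ) : ℤ) := by
      intro A e
      rw [Equiv.sum_comp e.symm
        (fun s : A => (g (s : ℕ × ℕ)).1 ^ j₁ * (g (s : ℕ × ℕ)).2 ^ j₂)]
      rw [Finset.sum_coe_sort A (fun p => (g p).1 ^ j₁ * (g p).2 ^ j₂)]
      push_cast
      simp [hgdef]
    rw [key S.1 eS, key T.1 eT, hmom j₁ j₂ hj]


/-- **Corollary 2:** for every `ε > 0` there is a constant `C > 0` such that the
two-dimensional Prouhet–Tarry–Escott problem (PTE₂) has, for every degree `k ≥ 1`,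
a solution of size at most `C·k^{3+ε}`: two different multisets
`{x_1,…,x_n}, {y_1,…,y_n} ⊆ ℤ²` whose mixed power sums of total degree at most `k`
all agree. -/
theorem pte2_polynomial_size (ε : ℝ) (hε : 0 < ε) :
    ∃ C : ℝ, 0 < C ∧ ∀ k : ℕ, 1 ≤ k →
      ∃ n : ℕ, (n : ℝ) ≤ C * (k : ℝ) ^ ((3 : ℝ) + ε) ∧
        ∃ x y : Fin n → ℤ × ℤ,
          Multiset.map x Finset.univ.val ≠ Multiset.map y Finset.univ.val ∧
          ∀ j₁ j₂ : ℕ, j₁ + j₂ ≤ k →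
            ∑ i, (x i).1 ^ j₁ * (x i).2 ^ j₂ = ∑ i, (y i).1 ^ j₁ * (y i).2 ^ j₂ := by
  have hlog2 : 0 < Real.log 2 := Real.log_pos (by norm_num)
  refine ⟨77 * (1 / (ε * Real.log 2) + 1), by positivity, ?_⟩
  intro k hk
  obtain ⟨n, hn, x, y, hxy, hsum⟩ := pte2_key k hk
  refine ⟨n, ?_, x, y, hxy, hsum⟩
  have hk0 : (0:ℝ) < (k:ℝ) := by exact_mod_cast hk
  have hk1 : (1:ℝ) ≤ (k:ℝ) := by exact_mod_cast hk
  have h5 : (1:ℝ) ≤ (k:ℝ) ^ ε := Real.one_le_rpow hk1 hε.le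
  have hb : ((Nat.log 2 k : ℝ) + 1) ≤ (k:ℝ) ^ ε * (1 / (ε * Real.log 2) + 1) := by
    have h1 : ((2:ℝ)) ^ (Nat.log 2 k) ≤ (k:ℝ) := by
      exact_mod_cast Nat.pow_log_le_self 2 (by omega)
    have h2 : (Nat.log 2 k : ℝ) * Real.log 2 ≤ Real.log k := by
      calc (Nat.log 2 k : ℝ) * Real.log 2 = Real.log ((2:ℝ) ^ (Nat.log 2 k)) := by
            rw [Real.log_pow]
        _ ≤ Real.log k := Real.log_le_log (by positivity) h1
    have h3 : Real.log k ≤ (k:ℝ) ^ ε / ε := Real.log_le_rpow_div hk0.le hε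
    have h4 : (Nat.log 2 k : ℝ) ≤ (k:ℝ) ^ ε / (ε * Real.log 2) := by
      rw [le_div_iff₀ (by positivity)]
      calc (Nat.log 2 k : ℝ) * (ε * Real.log 2) = ((Nat.log 2 k : ℝ) * Real.log 2) * ε := by
            ring
        _ ≤ Real.log k * ε := by
            apply mul_le_mul_of_nonneg_right h2 hε.le
        _ ≤ ((k:ℝ) ^ ε / ε) * ε := mul_le_mul_of_nonneg_right h3 hε.le
        _ = (k:ℝ) ^ ε := by field_simp
    calc ((Nat.log 2 k : ℝ) + 1) ≤ (k:ℝ) ^ ε / (ε * Real.log 2) + (k:ℝ) ^ ε := by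
          linarith
      _ = (k:ℝ) ^ ε * (1 / (ε * Real.log 2) + 1) := by ring
  have hcast : (n:ℝ) ≤ 77 * ((Nat.log 2 k : ℝ) + 1) * (k:ℝ) ^ (3:ℕ) := by
    exact_mod_cast hn
  calc (n:ℝ) ≤ 77 * ((Nat.log 2 k : ℝ) + 1) * (k:ℝ) ^ (3:ℕ) := hcast
    _ ≤ 77 * ((k:ℝ) ^ ε * (1 / (ε * Real.log 2) + 1)) * (k:ℝ) ^ (3:ℕ) := by
        apply mul_le_mul_of_nonneg_right (mul_le_mul_of_nonneg_left hb (by norm_num))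
        positivity
    _ = 77 * (1 / (ε * Real.log 2) + 1) * ((k:ℝ) ^ ((3:ℝ) + ε)) := by
        rw [Real.rpow_add hk0, show ((3:ℝ)) = ((3:ℕ):ℝ) by norm_num, Real.rpow_natCast]
        ring
end

section
/- (Product-of-binomials bound from the proof of Theorem 3.) Let d ≥ 2, let n ≥ 4 be an even integer, let m ≥ 1, and let l_1, …, l_m be natural numbers with l_i ≥ n^{d−1} for every i. Then ∏_{i=1}^m C(n^d/2 + l_i, l_i) ≤ n^{2(l_1 + ⋯ + l_m)}, where C(a, b) is the binomial coefficient. -/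
/-- `l^l ≤ l! * 3^l`, via `x^n/n! ≤ exp x` and `exp 1 < 3`. -/
lemma pow_self_le_factorial_mul_three_pow (l : ℕ) : l ^ l ≤ l.factorial * 3 ^ l := by
  have h := Real.pow_div_factorial_le_exp (x := (l : ℝ)) (Nat.cast_nonneg l) l
  have hexp : Real.exp l ≤ 3 ^ l := by
    calc Real.exp l = Real.exp 1 ^ l := by rw [← Real.exp_nat_mul, mul_one]
    _ ≤ 3 ^ l := by
        apply pow_le_pow_left₀ (Real.exp_pos 1).le
        have := Real.exp_one_lt_d9
        linarith
  have hfac : (0 : ℝ) < (l.factorial : ℝ) := by exact_mod_cast l.factorial_pos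
  have : (l : ℝ) ^ l ≤ (l.factorial : ℝ) * 3 ^ l := by
    rw [div_le_iff₀ hfac] at h
    calc (l : ℝ) ^ l ≤ Real.exp l * l.factorial := h.trans (by nlinarith)
    _ ≤ (l.factorial : ℝ) * 3 ^ l := by nlinarith
  exact_mod_cast this

/-- If `1 ≤ l` and `s ≤ c * l` then `C(s, l) ≤ (3c)^l`. -/
lemma choose_le_pow_of_le_mul {s l c : ℕ} (hl : 1 ≤ l) (hs : s ≤ c * l) :
    s.choose l ≤ (3 * c) ^ l := by
  have h1 : s.choose l * l.factorial ≤ s ^ l := by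
    rw [mul_comm, ← Nat.descFactorial_eq_factorial_mul_choose]
    exact Nat.descFactorial_le_pow s l
  have h2 : s.choose l * l ^ l ≤ (3 * c) ^ l * l ^ l := by
    calc s.choose l * l ^ l ≤ s.choose l * (l.factorial * 3 ^ l) :=
          Nat.mul_le_mul_left _ (pow_self_le_factorial_mul_three_pow l)
    _ = s.choose l * l.factorial * 3 ^ l := by ring
    _ ≤ s ^ l * 3 ^ l := Nat.mul_le_mul_right _ h1
    _ ≤ (c * l) ^ l * 3 ^ l := Nat.mul_le_mul_right _ (Nat.pow_le_pow_left hs l)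
    _ = (3 * c) ^ l * l ^ l := by ring
  exact Nat.le_of_mul_le_mul_right h2 (Nat.pow_pos (by omega : 0 < l))

/-- **Product-of-binomials bound (from the proof of Theorem 3):** if `n ≥ 4` is even,
`d ≥ 2`, and `l_i ≥ n^{d-1}` for all `i`, then
`∏ i, C(n^d/2 + l_i, l_i) ≤ n^{2(l_1 + ⋯ + l_m)}`. -/
theorem prod_choose_le (d n m : ℕ) (hd : 2 ≤ d) (hn : 4 ≤ n) (hne : Even n)
    (hm : 1 ≤ m) (l : Fin m → ℕ) (hl : ∀ i, n ^ (d - 1) ≤ l i) :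
    ∏ i, (n ^ d / 2 + l i).choose (l i) ≤ n ^ (2 * ∑ i, l i) := by
  obtain ⟨k, hk⟩ := hne
  have hk2 : n = 2 * k := by omega
  have hhalf : n ^ d / 2 = k * n ^ (d - 1) := by
    have : n ^ d = 2 * (k * n ^ (d - 1)) := by
      have h1 : n ^ d = n * n ^ (d - 1) := by
        conv_lhs => rw [show d = 1 + (d - 1) by omega, pow_add, pow_one]
      rw [h1, hk2]; ring
    omega
  have key : ∀ i, (n ^ d / 2 + l i).choose (l i) ≤ (n ^ 2) ^ (l i) := by
    intro i
    have hli : 1 ≤ l i := le_trans (Nat.one_le_pow _ _ (by omega)) (hl i)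
    have hs : n ^ d / 2 + l i ≤ (k + 1) * l i := by
      rw [hhalf]
      have := Nat.mul_le_mul_left k (hl i)
      nlinarith
    calc (n ^ d / 2 + l i).choose (l i) ≤ (3 * (k + 1)) ^ (l i) :=
          choose_le_pow_of_le_mul hli hs
    _ ≤ (n ^ 2) ^ (l i) := by
        apply Nat.pow_le_pow_left
        nlinarith
  calc ∏ i, (n ^ d / 2 + l i).choose (l i) ≤ ∏ i, (n ^ 2) ^ (l i) :=
        Finset.prod_le_prod' fun i _ => key i
  _ = (n ^ 2) ^ (∑ i, l i) := by rw [← Finset.prod_pow_eq_pow_sum]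
  _ = n ^ (2 * ∑ i, l i) := by rw [← pow_mul]
end

section
/- (Tightness of Theorem 1 for m = 3 in ℤ².) There exist three pairwise linearly independent nonzero directions in ℤ² in which the two distinct 3-point sets F = {(0,0),(1,2),(2,1)} and F' = {(1,0),(0,1),(2,2)} in ℤ² have equal X-rays. (For instance, the directions (1,0), (0,1), (1,1) work.) Hence ψ_{ℤ²}(3) ≤ 3. -/
set_option linter.unreachableTactic false
set_option linter.unusedTactic false
set_option linter.unnecessarySeqFocus false


lemma mem_lineThrough_iff (p s x : Fin 2 → ℝ) (hs : s 0 ≠ 0 ∨ s 1 ≠ 0) :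
    x ∈ lineThrough p s ↔ (x 0 - p 0) * s 1 = (x 1 - p 1) * s 0 := by
  constructor
  · rintro ⟨t, rfl⟩; simp [Pi.add_apply]; ring
  · intro h
    rcases hs with h0 | h1
    · refine ⟨(x 0 - p 0) / s 0, ?_⟩
      funext i; fin_cases i <;> simp [Pi.add_apply] <;> field_simp <;>
        first | linear_combination h | linear_combination -h | linear_combination 2*h | linear_combination -2*h | ring
    · refine ⟨(x 1 - p 1) / s 1, ?_⟩
      funext i; fin_cases i <;> simp [Pi.add_apply] <;> field_simp <;>
        first | linear_combination h | linear_combination -h | linear_combination 2*h | linear_combination -2*h | ring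

lemma ncard_sep_triple {α : Type*} (a b c : α) (P : α → Prop) [DecidablePred P]
    [DecidableEq α] (hab : a ≠ b) (hac : a ≠ c) (hbc : b ≠ c) :
    {x ∈ ({a, b, c} : Set α) | P x}.ncard =
      (if P a then 1 else 0) + ((if P b then 1 else 0) + (if P c then 1 else 0)) := by
  have h : {x ∈ ({a, b, c} : Set α) | P x} = ↑(({a, b, c} : Finset α).filter P) := by
    ext x; simp [and_comm]
  rw [h, Set.ncard_coe_finset, Finset.card_filter,
    Finset.sum_insert (by simp [hab, hac]), Finset.sum_insert (by simp [hbc]),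
    Finset.sum_singleton]

/-- **Tightness for `m = 3` in `ℤ²`:** there are three pairwise linearly independent
directions in which the distinct 3-point sets `F = {(0,0),(1,2),(2,1)}` and
`F' = {(1,0),(0,1),(2,2)}` have equal X-rays; hence `ψ_{ℤ²}(3) ≤ 3`. -/
theorem tightness_m3 :
    let F : Set (Fin 2 → ℤ) := {![0, 0], ![1, 2], ![2, 1]}
    let F' : Set (Fin 2 → ℤ) := {![1, 0], ![0, 1], ![2, 2]}
    F ≠ F' ∧ F.ncard = 3 ∧ F'.ncard = 3 ∧
      ∃ s : Fin 3 → (Fin 2 → ℤ), (∀ i, s i ≠ 0) ∧ PairwiseLinIndepZ s ∧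
        ∀ i, EqualXraysZ F F' (s i) := by

  classical
  intro F F'
  refine ⟨?_, ?_, ?_, ![![1, 0], ![0, 1], ![1, 1]], ?_, ?_, ?_⟩
  · intro h
    have h0 : ![0, 0] ∈ F := by left; rfl
    rw [h] at h0
    simp only [F', Set.mem_insert_iff, Set.mem_singleton_iff] at h0
    rcases h0 with h0 | h0 | h0 <;>
      first
        | exact absurd (congrFun h0 0) (by decide)
        | exact absurd (congrFun h0 1) (by decide)
  · rw [Set.ncard_insert_of_notMem (by decide), Set.ncard_insert_of_notMem (by decide),
      Set.ncard_singleton]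
  · rw [Set.ncard_insert_of_notMem (by decide), Set.ncard_insert_of_notMem (by decide),
      Set.ncard_singleton]
  · intro i; fin_cases i <;> simp [Ne, funext_iff, Fin.forall_fin_two]
  · intro i j hij c h
    fin_cases i <;> fin_cases j <;>
      simp_all [castVec, funext_iff, Fin.forall_fin_two, Pi.smul_apply] <;> linarith
  · intro i; fin_cases i
    · show EqualXraysZ F F' ![1, 0]
      intro p
      have key : ∀ x : Fin 2 → ℤ,
          (castVec x ∈ lineThrough p (castVec ![1, 0])) ↔ ((x 1 : ℝ) = p 1) := by
        intro x
        rw [mem_lineThrough_iff _ _ _ (Or.inl (by norm_num [castVec]))]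
        norm_num [castVec]
        constructor <;> intro h <;> linarith
      simp only [F, F']
      rw [ncard_sep_triple _ _ _ _ (by decide) (by decide) (by decide),
        ncard_sep_triple _ _ _ _ (by decide) (by decide) (by decide)]
      simp only [key]
      norm_num [castVec]
      split_ifs <;> omega
    · show EqualXraysZ F F' ![0, 1]
      intro p
      have key : ∀ x : Fin 2 → ℤ,
          (castVec x ∈ lineThrough p (castVec ![0, 1])) ↔ ((x 0 : ℝ) = p 0) := by
        intro x
        rw [mem_lineThrough_iff _ _ _ (Or.inr (by norm_num [castVec]))]
        norm_num [castVec]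
        constructor <;> intro h <;> linarith
      simp only [F, F']
      rw [ncard_sep_triple _ _ _ _ (by decide) (by decide) (by decide),
        ncard_sep_triple _ _ _ _ (by decide) (by decide) (by decide)]
      simp only [key]
      norm_num [castVec]
      split_ifs <;> omega
    · show EqualXraysZ F F' ![1, 1]
      intro p
      have key : ∀ x : Fin 2 → ℤ,
          (castVec x ∈ lineThrough p (castVec ![1, 1])) ↔
            ((x 0 : ℝ) - (x 1 : ℝ) = p 0 - p 1) := by
        intro x
        rw [mem_lineThrough_iff _ _ _ (Or.inl (by norm_num [castVec]))]
        norm_num [castVec]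
        constructor <;> intro h <;> linarith
      simp only [F, F']
      rw [ncard_sep_triple _ _ _ _ (by decide) (by decide) (by decide),
        ncard_sep_triple _ _ _ _ (by decide) (by decide) (by decide)]
      simp only [key]
      norm_num [castVec]
      split_ifs <;> omega
end
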